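/- arXiv:2105.10164 — 12 statements merged into one kernel-verified Lean document; each statement's English description precedes it below -/
import Mathlib

section
/- Let (X,d) be a pseudometric space with d bounded by 1. Let S be a set of nonexpansive functions from (X,d) to ([0,1],|·|) that is closed under the Zadeh operations (the constant function 1; pointwise minimum; negation f ↦ 1−f; and truncation f ↦ max(f−q,0) for every rational q ∈ [0,1]). Suppose that for every nonexpansive h : (X,d) → [0,1] and all x,y ∈ X one has |h(x)−h(y)| ≤ sup_{g∈S} |g(x)−g(y)|. Then for every nonexpansive h : (X,d) → [0,1], every δ > 0, and every pair x,y ∈ X, there exists g ∈ S with |h(x)−g(x)| ≤ δ and |h(y)−g(y)| ≤ δ. -/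
/-- Key lemma: given `g0 ∈ S` whose gap at `y,x` nearly matches `b - a` (with `a ≤ b`),
we can adjust it using the Zadeh operations to approximate the values `a` and `b`. -/
lemma stmt0_key {X : Type*} (S : Set (X → ℝ))
    (hS_mem : ∀ g ∈ S, ∀ x, g x ∈ Set.Icc (0:ℝ) 1)
    (hS_one : (fun _ => (1:ℝ)) ∈ S)
    (hS_min : ∀ f ∈ S, ∀ g ∈ S, (fun x => min (f x) (g x)) ∈ S)
    (hS_neg : ∀ f ∈ S, (fun x => 1 - f x) ∈ S)
    (hS_trunc : ∀ f ∈ S, ∀ q : ℚ, (q:ℝ) ∈ Set.Icc (0:ℝ) 1 →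
      (fun x => max (f x - (q:ℝ)) 0) ∈ S)
    (x y : X) (a b : ℝ) (ha0 : 0 ≤ a) (ha1 : a ≤ 1) (hb0 : 0 ≤ b) (hb1 : b ≤ 1)
    (hab : a ≤ b) (δ : ℝ) (hδ : 0 < δ)
    (g0 : X → ℝ) (hg0S : g0 ∈ S) (hg0 : (b - a) - δ/2 ≤ g0 y - g0 x) :
    ∃ g ∈ S, |a - g x| ≤ δ ∧ |b - g y| ≤ δ := by
  have ht0 : 0 ≤ g0 x := (hS_mem g0 hg0S x).1
  have ht1 : g0 x ≤ 1 := (hS_mem g0 hg0S x).2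
  have hs0 : 0 ≤ g0 y := (hS_mem g0 hg0S y).1
  have hs1 : g0 y ≤ 1 := (hS_mem g0 hg0S y).2
  have he : (0:ℝ) < δ/2 := by linarith
  -- Step A: find g1 ∈ S with |g1 x - a| ≤ δ/2 and g1 y ≥ b - δ
  obtain ⟨g1, hg1S, hg1xl, hg1xu, hg1y⟩ :
      ∃ g1 ∈ S, a - δ/2 ≤ g1 x ∧ g1 x ≤ a + δ/2 ∧ b - δ ≤ g1 y := by
    rcases le_or_gt a (g0 x) with hta | hta
    · -- truncate by q ≈ g0 x - a
      have hlt : max 0 (g0 x - a - δ/2) < min 1 (g0 x - a + δ/2) :=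
        max_lt (lt_min (by norm_num) (by linarith)) (lt_min (by linarith) (by linarith))
      obtain ⟨q, hq1, hq2⟩ := exists_rat_btwn hlt
      have hq0 : (0:ℝ) ≤ q := le_of_lt (lt_of_le_of_lt (le_max_left _ _) hq1)
      have hq1' : (q:ℝ) ≤ 1 := le_of_lt (lt_of_lt_of_le hq2 (min_le_left _ _))
      have hqlow : g0 x - a - δ/2 < q := lt_of_le_of_lt (le_max_right _ _) hq1
      have hqhigh : (q:ℝ) < g0 x - a + δ/2 := lt_of_lt_of_le hq2 (min_le_right _ _)
      refine ⟨fun z => max (g0 z - (q:ℝ)) 0, hS_trunc g0 hg0S q ⟨hq0, hq1'⟩, ?_, ?_, ?_⟩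
      · have : g0 x - (q:ℝ) ≤ max (g0 x - (q:ℝ)) 0 := le_max_left _ _
        simp only []
        linarith
      · exact max_le (by linarith) (by linarith)
      · have : g0 y - (q:ℝ) ≤ max (g0 y - (q:ℝ)) 0 := le_max_left _ _
        linarith
    · -- shift up by q ≈ a - g0 x, via double negation of a truncation
      have hlt : max 0 (a - g0 x - δ/2) < min 1 (a - g0 x + δ/2) :=
        max_lt (lt_min (by norm_num) (by linarith)) (lt_min (by linarith) (by linarith))
      obtain ⟨q, hq1, hq2⟩ := exists_rat_btwn hlt
      have hq0 : (0:ℝ) ≤ q := le_of_lt (lt_of_le_of_lt (le_max_left _ _) hq1)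
      have hq1' : (q:ℝ) ≤ 1 := le_of_lt (lt_of_lt_of_le hq2 (min_le_left _ _))
      have hqlow : a - g0 x - δ/2 < q := lt_of_le_of_lt (le_max_right _ _) hq1
      have hqhigh : (q:ℝ) < a - g0 x + δ/2 := lt_of_lt_of_le hq2 (min_le_right _ _)
      refine ⟨fun z => 1 - max ((1 - g0 z) - (q:ℝ)) 0,
        hS_neg _ (hS_trunc _ (hS_neg g0 hg0S) q ⟨hq0, hq1'⟩), ?_, ?_, ?_⟩
      · -- lower bound at x : max ((1 - g0 x) - q) 0 ≤ 1 - a + δ/2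
        have : max ((1 - g0 x) - (q:ℝ)) 0 ≤ 1 - a + δ/2 :=
          max_le (by linarith) (by linarith)
        simp only []
        linarith
      · have : (1 - g0 x) - (q:ℝ) ≤ max ((1 - g0 x) - (q:ℝ)) 0 := le_max_left _ _
        simp only []
        linarith
      · have : max ((1 - g0 y) - (q:ℝ)) 0 ≤ 1 - b + δ :=
          max_le (by linarith) (by linarith)
        simp only []
        linarith
  -- Step B: cap with a constant ≈ b
  have hlt : max 0 (1 - b - δ) < min 1 (1 - b + δ) :=
    max_lt (lt_min (by norm_num) (by linarith)) (lt_min (by linarith) (by linarith))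
  obtain ⟨q, hq1, hq2⟩ := exists_rat_btwn hlt
  have hq0 : (0:ℝ) ≤ q := le_of_lt (lt_of_le_of_lt (le_max_left _ _) hq1)
  have hq1' : (q:ℝ) ≤ 1 := le_of_lt (lt_of_lt_of_le hq2 (min_le_left _ _))
  have hqlow : 1 - b - δ < q := lt_of_le_of_lt (le_max_right _ _) hq1
  have hqhigh : (q:ℝ) < 1 - b + δ := lt_of_lt_of_le hq2 (min_le_right _ _)
  have hqlt1 : (q:ℝ) < 1 := lt_of_lt_of_le hq2 (min_le_left _ _)
  have hcS : (fun z : X => max ((fun _ : X => (1:ℝ)) z - (q:ℝ)) 0) ∈ S :=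
    hS_trunc _ hS_one q ⟨hq0, hq1'⟩
  have hc_eq : max ((1:ℝ) - (q:ℝ)) 0 = 1 - (q:ℝ) := max_eq_left (by linarith)
  refine ⟨fun z => min (g1 z) (max ((1:ℝ) - (q:ℝ)) 0), hS_min g1 hg1S _ hcS, ?_, ?_⟩
  · rw [abs_le]
    constructor
    · have : min (g1 x) (max ((1:ℝ) - (q:ℝ)) 0) ≤ g1 x := min_le_left _ _
      simp only []
      linarith
    · have : a - δ ≤ min (g1 x) (max ((1:ℝ) - (q:ℝ)) 0) := by
        apply le_min (by linarith)
        rw [hc_eq]; linarith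
      simp only []
      linarith
  · rw [abs_le]
    constructor
    · have : min (g1 y) (max ((1:ℝ) - (q:ℝ)) 0) ≤ max ((1:ℝ) - (q:ℝ)) 0 := min_le_right _ _
      simp only []
      linarith [hc_eq]
    · have : b - δ ≤ min (g1 y) (max ((1:ℝ) - (q:ℝ)) 0) := by
        apply le_min (by linarith)
        rw [hc_eq]; linarith
      simp only []
      linarith

/-- Two-point approximation by a Zadeh-closed separating family of
nonexpansive `[0,1]`-valued functions on a 1-bounded pseudometric space. -/
theorem stmt0 {X : Type*} (d : X → X → ℝ)
    (hd_refl : ∀ x, d x x = 0)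
    (hd_symm : ∀ x y, d x y = d y x)
    (hd_tri : ∀ x y z, d x z ≤ d x y + d y z)
    (hd_bdd : ∀ x y, d x y ≤ 1)
    (S : Set (X → ℝ))
    (hS_mem : ∀ g ∈ S, ∀ x, g x ∈ Set.Icc (0:ℝ) 1)
    (hS_nexp : ∀ g ∈ S, ∀ x y, |g x - g y| ≤ d x y)
    (hS_one : (fun _ => (1:ℝ)) ∈ S)
    (hS_min : ∀ f ∈ S, ∀ g ∈ S, (fun x => min (f x) (g x)) ∈ S)
    (hS_neg : ∀ f ∈ S, (fun x => 1 - f x) ∈ S)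
    (hS_trunc : ∀ f ∈ S, ∀ q : ℚ, (q:ℝ) ∈ Set.Icc (0:ℝ) 1 →
      (fun x => max (f x - (q:ℝ)) 0) ∈ S)
    (hsep : ∀ h : X → ℝ, (∀ x, h x ∈ Set.Icc (0:ℝ) 1) → (∀ x y, |h x - h y| ≤ d x y) →
      ∀ x y, |h x - h y| ≤ sSup {v : ℝ | ∃ g ∈ S, v = |g x - g y|}) :
    ∀ h : X → ℝ, (∀ x, h x ∈ Set.Icc (0:ℝ) 1) → (∀ x y, |h x - h y| ≤ d x y) →
      ∀ δ : ℝ, 0 < δ → ∀ x y : X,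
        ∃ g ∈ S, |h x - g x| ≤ δ ∧ |h y - g y| ≤ δ := by
  intro h hmem hnexp δ hδ x y
  -- the family of gaps is nonempty
  have hne : ∀ u v : X, ({w : ℝ | ∃ g ∈ S, w = |g u - g v|}).Nonempty := by
    intro u v
    exact ⟨|(fun _ : X => (1:ℝ)) u - (fun _ : X => (1:ℝ)) v|, ⟨_, hS_one, rfl⟩⟩
  -- from hsep, extract a near-optimal gap witness in the right direction
  have hsup : ∀ u v : X, h u ≤ h v → ∃ g0 ∈ S, (h v - h u) - δ/2 ≤ g0 v - g0 u := by
    intro u v huv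
    have h1 := hsep h hmem hnexp u v
    have habs : |h u - h v| = h v - h u := by
      rw [abs_sub_comm]; exact abs_of_nonneg (by linarith)
    rw [habs] at h1
    have h2 : (h v - h u) - δ/2 < sSup {w : ℝ | ∃ g ∈ S, w = |g u - g v|} := by linarith
    obtain ⟨w, hw, hw2⟩ := exists_lt_of_lt_csSup (hne u v) h2
    obtain ⟨g, hgS, rfl⟩ := hw
    rcases le_total (g u) (g v) with hc | hc
    · have : |g u - g v| = g v - g u := by
        rw [abs_sub_comm]; exact abs_of_nonneg (by linarith)
      rw [this] at hw2
      exact ⟨g, hgS, le_of_lt hw2⟩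
    · have : |g u - g v| = g u - g v := abs_of_nonneg (by linarith)
      rw [this] at hw2
      refine ⟨fun z => 1 - g z, hS_neg g hgS, ?_⟩
      simp only []
      linarith
  rcases le_total (h x) (h y) with hxy | hxy
  · obtain ⟨g0, hg0S, hg0⟩ := hsup x y hxy
    obtain ⟨g, hgS, h1, h2⟩ := stmt0_key S hS_mem hS_one hS_min hS_neg hS_trunc x y
      (h x) (h y) (hmem x).1 (hmem x).2 (hmem y).1 (hmem y).2 hxy δ hδ g0 hg0S hg0
    exact ⟨g, hgS, h1, h2⟩
  · obtain ⟨g0, hg0S, hg0⟩ := hsup y x hxy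
    obtain ⟨g, hgS, h1, h2⟩ := stmt0_key S hS_mem hS_one hS_min hS_neg hS_trunc y x
      (h y) (h x) (hmem y).1 (hmem y).2 (hmem x).1 (hmem x).2 hxy δ hδ g0 hg0S hg0
    exact ⟨g, hgS, h2, h1⟩
end

section
/- Let (X,d) be a totally bounded pseudometric space with d bounded by 1. Let S be a set of nonexpansive functions from (X,d) to ([0,1],|·|) such that: (1) S is closed under the Zadeh operations (constant 1, pointwise min, f ↦ 1−f, and f ↦ max(f−q,0) for every rational q ∈ [0,1]); and (2) for every nonexpansive h : (X,d) → [0,1] and all x,y ∈ X, |h(x)−h(y)| ≤ sup_{g∈S} |g(x)−g(y)|. Then S is dense in the set of all nonexpansive maps (X,d) → [0,1] in the topology of uniform convergence: for every nonexpansive h : (X,d) → [0,1] and every ε > 0 there exists g ∈ S with sup_{x∈X} |h(x)−g(x)| ≤ ε. -/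
lemma my_inf'_mem {X ι : Type*} (S : Set (X → ℝ))
    (hS_min : ∀ f ∈ S, ∀ g ∈ S, (fun x => min (f x) (g x)) ∈ S)
    (F : Finset ι) (hF : F.Nonempty) (f : ι → X → ℝ) (hf : ∀ i ∈ F, f i ∈ S) :
    (fun x => F.inf' hF (fun i => f i x)) ∈ S := by
  induction hF using Finset.Nonempty.cons_induction with
  | singleton a => simpa using hf a (by simp)
  | cons a s ha hs ih =>
    have h1 : f a ∈ S := hf a (Finset.mem_cons_self a s)
    have h2 := ih (fun i hi => hf i (Finset.mem_cons_of_mem hi))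
    have := hS_min _ h1 _ h2
    convert this using 1
    funext x
    rw [Finset.inf'_cons]

lemma my_sup'_mem {X ι : Type*} (S : Set (X → ℝ))
    (hS_max : ∀ f ∈ S, ∀ g ∈ S, (fun x => max (f x) (g x)) ∈ S)
    (F : Finset ι) (hF : F.Nonempty) (f : ι → X → ℝ) (hf : ∀ i ∈ F, f i ∈ S) :
    (fun x => F.sup' hF (fun i => f i x)) ∈ S := by
  induction hF using Finset.Nonempty.cons_induction with
  | singleton a => simpa using hf a (by simp)
  | cons a s ha hs ih =>
    have h1 : f a ∈ S := hf a (Finset.mem_cons_self a s)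
    have h2 := ih (fun i hi => hf i (Finset.mem_cons_of_mem hi))
    have := hS_max _ h1 _ h2
    convert this using 1
    funext x
    rw [Finset.sup'_cons]

/-- Stone–Weierstrass-like density: on a totally bounded 1-bounded
pseudometric space, a Zadeh-closed separating family of nonexpansive `[0,1]`-valued
functions is uniformly dense in all nonexpansive `[0,1]`-valued functions. -/
theorem stmt1 {X : Type*} (d : X → X → ℝ)
    (hd_refl : ∀ x, d x x = 0)
    (hd_symm : ∀ x y, d x y = d y x)
    (hd_tri : ∀ x y z, d x z ≤ d x y + d y z)
    (hd_bdd : ∀ x y, d x y ≤ 1)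
    (htb : ∀ ε : ℝ, 0 < ε → ∃ F : Finset X, ∀ x : X, ∃ y ∈ F, d x y < ε)
    (S : Set (X → ℝ))
    (hS_mem : ∀ g ∈ S, ∀ x, g x ∈ Set.Icc (0:ℝ) 1)
    (hS_nexp : ∀ g ∈ S, ∀ x y, |g x - g y| ≤ d x y)
    (hS_one : (fun _ => (1:ℝ)) ∈ S)
    (hS_min : ∀ f ∈ S, ∀ g ∈ S, (fun x => min (f x) (g x)) ∈ S)
    (hS_neg : ∀ f ∈ S, (fun x => 1 - f x) ∈ S)
    (hS_trunc : ∀ f ∈ S, ∀ q : ℚ, (q:ℝ) ∈ Set.Icc (0:ℝ) 1 →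
      (fun x => max (f x - (q:ℝ)) 0) ∈ S)
    (hsep : ∀ h : X → ℝ, (∀ x, h x ∈ Set.Icc (0:ℝ) 1) → (∀ x y, |h x - h y| ≤ d x y) →
      ∀ x y, |h x - h y| ≤ sSup {v : ℝ | ∃ g ∈ S, v = |g x - g y|}) :
    ∀ h : X → ℝ, (∀ x, h x ∈ Set.Icc (0:ℝ) 1) → (∀ x y, |h x - h y| ≤ d x y) →
      ∀ ε : ℝ, 0 < ε → ∃ g ∈ S, ∀ x : X, |h x - g x| ≤ ε := by
  -- derived closure: max
  have hS_max : ∀ f ∈ S, ∀ g ∈ S, (fun x => max (f x) (g x)) ∈ S := by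
    intro f hf g hg
    have := hS_neg _ (hS_min _ (hS_neg _ hf) _ (hS_neg _ hg))
    convert this using 1
    funext x
    show max (f x) (g x) = 1 - min (1 - f x) (1 - g x)
    rcases le_total (f x) (g x) with h' | h'
    · rw [max_eq_right h', min_eq_right (by linarith)]; ring
    · rw [max_eq_left h', min_eq_left (by linarith)]; ring
  -- derived closure: rational constants
  have hS_const : ∀ q : ℚ, 0 ≤ q → q ≤ 1 → (fun _ : X => (q:ℝ)) ∈ S := by
    intro q h0 h1
    have hq0 : (0:ℝ) ≤ (q:ℝ) := by exact_mod_cast h0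
    have hq1 : (q:ℝ) ≤ 1 := by exact_mod_cast h1
    have := hS_trunc _ hS_one (1 - q) ⟨by push_cast; linarith, by push_cast; linarith⟩
    convert this using 1
    funext x
    show (q:ℝ) = max (1 - ((1 - q : ℚ) : ℝ)) 0
    push_cast
    rw [show (1:ℝ) - (1 - (q:ℝ)) = (q:ℝ) by ring, max_eq_left hq0]
  -- derived closure: bounded addition of a rational constant
  have hS_add : ∀ f ∈ S, ∀ q : ℚ, 0 ≤ q → q ≤ 1 → (fun x => min (f x + (q:ℝ)) 1) ∈ S := by
    intro f hf q h0 h1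
    have hq0 : (0:ℝ) ≤ (q:ℝ) := by exact_mod_cast h0
    have hq1 : (q:ℝ) ≤ 1 := by exact_mod_cast h1
    have := hS_neg _ (hS_trunc _ (hS_neg _ hf) q ⟨hq0, hq1⟩)
    convert this using 1
    funext x
    show min (f x + (q:ℝ)) 1 = 1 - max ((1 - f x) - (q:ℝ)) 0
    rcases le_total (f x + (q:ℝ)) 1 with h' | h'
    · rw [min_eq_left h', max_eq_left (by linarith)]; ring
    · rw [min_eq_right h', max_eq_right (by linarith)]; ring
  intro h hmem hnexp
  -- key two-point approximation lemma (ordered version)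
  have key : ∀ x y : X, h y ≤ h x → ∀ δ : ℝ, 0 < δ →
      ∃ g ∈ S, |g x - h x| ≤ δ ∧ |g y - h y| ≤ δ := by
    intro x y hxy δ hδ
    have hδ₁ : 0 < δ / 2 := by linarith
    set δ₁ := δ / 2 with hδ₁def
    have ha := hmem x
    have hb := hmem y
    -- Step 1: a function with large increase from y to x
    obtain ⟨g0, hg0S, hg0d⟩ : ∃ g0 ∈ S, h x - h y - δ₁ ≤ g0 x - g0 y := by
      by_cases hc : h x - h y ≤ δ₁
      · refine ⟨_, hS_one, ?_⟩
        show h x - h y - δ₁ ≤ 1 - 1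
        linarith
      · have hne : Set.Nonempty {v : ℝ | ∃ g ∈ S, v = |g x - g y|} :=
          ⟨0, (fun _ => (1:ℝ)), hS_one, by simp⟩
        have hsup : h x - h y ≤ sSup {v : ℝ | ∃ g ∈ S, v = |g x - g y|} := by
          have := hsep h hmem hnexp x y
          rwa [abs_of_nonneg (by linarith)] at this
        obtain ⟨v, hv, hvlt⟩ := exists_lt_of_lt_csSup hne
          (show h x - h y - δ₁ < sSup _ by linarith)
        obtain ⟨g, hgS, rfl⟩ := hv
        rcases le_total (g y) (g x) with h' | h'
        · refine ⟨g, hgS, ?_⟩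
          rw [abs_of_nonneg (by linarith)] at hvlt
          linarith
        · refine ⟨_, hS_neg _ hgS, ?_⟩
          show h x - h y - δ₁ ≤ (1 - g x) - (1 - g y)
          rw [abs_of_nonpos (by linarith)] at hvlt
          linarith
    have hg0x := hS_mem _ hg0S x
    have hg0y := hS_mem _ hg0S y
    -- Step 2: subtract roughly g0 y
    obtain ⟨q, hq0, hq1, hqle, hqge⟩ :
        ∃ q : ℚ, 0 ≤ q ∧ q ≤ 1 ∧ (q:ℝ) ≤ g0 y ∧ g0 y - (q:ℝ) ≤ δ₁ := by
      by_cases hc : g0 y ≤ δ₁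
      · exact ⟨0, le_refl 0, zero_le_one, by simpa using hg0y.1, by simpa using hc⟩
      · obtain ⟨q, hq1, hq2⟩ := exists_rat_btwn (show g0 y - δ₁ < g0 y by linarith)
        refine ⟨q, ?_, ?_, hq2.le, by linarith⟩
        · exact_mod_cast le_of_lt (lt_of_le_of_lt (by linarith : (0:ℝ) ≤ g0 y - δ₁) hq1)
        · exact_mod_cast hq2.le.trans hg0y.2
    have hf1S := hS_trunc _ hg0S q ⟨by exact_mod_cast hq0, by exact_mod_cast hq1⟩
    -- Step 3: cap at roughly h x - h y
    obtain ⟨c, hc0, hc1, hcge, hcle⟩ :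
        ∃ c : ℚ, 0 ≤ c ∧ c ≤ 1 ∧ h x - h y ≤ (c:ℝ) ∧ (c:ℝ) ≤ h x - h y + δ₁ := by
      by_cases hc : 1 - δ₁ ≤ h x - h y
      · exact ⟨1, by norm_num, le_refl 1, by push_cast; linarith [ha.2, hb.1],
          by push_cast; linarith⟩
      · obtain ⟨c, h1, h2⟩ := exists_rat_btwn (show h x - h y < h x - h y + δ₁ by linarith)
        refine ⟨c, ?_, ?_, h1.le, h2.le⟩
        · exact_mod_cast le_of_lt (lt_of_le_of_lt (by linarith : (0:ℝ) ≤ h x - h y) h1)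
        · have : (c:ℝ) ≤ 1 := by linarith
          exact_mod_cast this
    have hf2S := hS_min _ hf1S _ (hS_const c hc0 hc1)
    -- Step 4: add roughly h y
    obtain ⟨s, hs0, hs1, hsge, hsle⟩ :
        ∃ s : ℚ, 0 ≤ s ∧ s ≤ 1 ∧ h y ≤ (s:ℝ) ∧ (s:ℝ) ≤ h y + δ₁ := by
      by_cases hc : 1 - δ₁ ≤ h y
      · exact ⟨1, by norm_num, le_refl 1, by push_cast; linarith [hb.2], by push_cast; linarith⟩
      · obtain ⟨s, h1, h2⟩ := exists_rat_btwn (show h y < h y + δ₁ by linarith)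
        refine ⟨s, ?_, ?_, h1.le, h2.le⟩
        · exact_mod_cast le_of_lt (lt_of_le_of_lt hb.1 h1)
        · have : (s:ℝ) ≤ 1 := by linarith
          exact_mod_cast this
    have hgS := hS_add _ hf2S s hs0 hs1
    refine ⟨_, hgS, ?_, ?_⟩
    · show |min (min (max (g0 x - (q:ℝ)) 0) (c:ℝ) + (s:ℝ)) 1 - h x| ≤ δ
      have h1 : h x - h y - δ₁ ≤ max (g0 x - (q:ℝ)) 0 :=
        le_trans (by linarith) (le_max_left _ _)
      have h2 : h x - h y - δ₁ ≤ min (max (g0 x - (q:ℝ)) 0) (c:ℝ) :=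
        le_min h1 (by linarith)
      have h3 : min (max (g0 x - (q:ℝ)) 0) (c:ℝ) ≤ (c:ℝ) := min_le_right _ _
      have h4 : h x - δ₁ ≤ min (min (max (g0 x - (q:ℝ)) 0) (c:ℝ) + (s:ℝ)) 1 :=
        le_min (by linarith) (by linarith [ha.2])
      have h5 : min (min (max (g0 x - (q:ℝ)) 0) (c:ℝ) + (s:ℝ)) 1 ≤ h x + 2 * δ₁ :=
        le_trans (min_le_left _ _) (by linarith)
      rw [abs_le]
      constructor <;> [linarith; linarith]
    · show |min (min (max (g0 y - (q:ℝ)) 0) (c:ℝ) + (s:ℝ)) 1 - h y| ≤ δ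
      have h1 : max (g0 y - (q:ℝ)) 0 ≤ δ₁ := max_le (by linarith) (by linarith)
      have h2 : min (max (g0 y - (q:ℝ)) 0) (c:ℝ) ≤ δ₁ := le_trans (min_le_left _ _) h1
      have h3 : (0:ℝ) ≤ min (max (g0 y - (q:ℝ)) 0) (c:ℝ) :=
        le_min (le_max_right _ _) (by exact_mod_cast hc0)
      have h4 : h y ≤ min (min (max (g0 y - (q:ℝ)) 0) (c:ℝ) + (s:ℝ)) 1 :=
        le_min (by linarith) (by linarith [hb.2])
      have h5 : min (min (max (g0 y - (q:ℝ)) 0) (c:ℝ) + (s:ℝ)) 1 ≤ h y + 2 * δ₁ :=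
        le_trans (min_le_left _ _) (by linarith)
      rw [abs_le]
      constructor <;> [linarith; linarith]
  intro ε hε
  by_cases hX : Nonempty X
  case neg => exact ⟨_, hS_one, fun x => (hX ⟨x⟩).elim⟩
  obtain ⟨F, hFnet⟩ := htb (ε / 4) (by linarith)
  have hFne : F.Nonempty := by
    obtain ⟨x0⟩ := hX
    obtain ⟨y, hy, _⟩ := hFnet x0
    exact ⟨y, hy⟩
  have pair : ∀ y z : X, ∃ g ∈ S, |g y - h y| ≤ ε / 2 ∧ |g z - h z| ≤ ε / 2 := by
    intro y z
    rcases le_total (h z) (h y) with h' | h'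
    · exact key y z h' (ε / 2) (by linarith)
    · obtain ⟨g, hg, h1, h2⟩ := key z y h' (ε / 2) (by linarith)
      exact ⟨g, hg, h2, h1⟩
  choose gp hgpS hgp1 hgp2 using pair
  have hGS : (fun x => F.sup' hFne (fun y => F.inf' hFne (fun z => gp y z x))) ∈ S := by
    exact my_sup'_mem S hS_max F hFne _
      (fun y _ => my_inf'_mem S hS_min F hFne (fun z => gp y z) (fun z _ => hgpS y z))
  set G : X → ℝ := fun x => F.sup' hFne (fun y => F.inf' hFne (fun z => gp y z x)) with hGdef
  have hGub : ∀ z ∈ F, G z ≤ h z + ε / 2 := by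
    intro z hz
    apply Finset.sup'_le
    intro y _
    have h1 : F.inf' hFne (fun z' => gp y z' z) ≤ gp y z z := Finset.inf'_le _ hz
    have h2 := (abs_le.1 (hgp2 y z)).2
    linarith
  have hGlb : ∀ z ∈ F, h z - ε / 2 ≤ G z := by
    intro z hz
    have h1 : h z - ε / 2 ≤ F.inf' hFne (fun z' => gp z z' z) := by
      apply Finset.le_inf'
      intro z' _
      have := (abs_le.1 (hgp1 z z')).1
      linarith
    exact h1.trans (Finset.le_sup' (fun y => F.inf' hFne (fun z' => gp y z' z)) hz)
  refine ⟨G, hGS, fun x => ?_⟩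
  obtain ⟨z, hzF, hzd⟩ := hFnet x
  have h1 := abs_le.1 (hnexp x z)
  have h2 := abs_le.1 (hS_nexp _ hGS x z)
  have h3 := hGub z hzF
  have h4 := hGlb z hzF
  rw [abs_le]
  constructor <;> [nlinarith; nlinarith]
end

section
/- Let X be a type, B a lawful functor on types, Λ a type, and for each λ ∈ Λ let τ_λ : B [0,1] → [0,1] be a map that preserves uniform convergence (whenever a sequence kₙ : X → [0,1] converges uniformly to l, the sequence τ_λ ∘ (B kₙ) : B X → [0,1] converges uniformly to τ_λ ∘ (B l)). Let S be a set of functions X → [0,1] closed under the Zadeh operations (constant 1, pointwise min, f ↦ 1−f, f ↦ max(f−q,0) for q ∈ ℚ ∩ [0,1]), and suppose the pseudometric space (X, d_S), where d_S(x,y) = sup_{k∈S} |k(x)−k(y)|, is totally bounded. Then for every function h : X → [0,1] that is nonexpansive from (X,d_S) to ([0,1],|·|), every λ ∈ Λ, and all z,w ∈ B X: sup_{k∈S, λ'∈Λ} |τ_{λ'}((B k)(z)) − τ_{λ'}((B k)(w))| ≥ |τ_λ((B h)(z)) − τ_λ((B h)(w))|. -/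
/-- A Zadeh-closed family `S` with `(X, d_S)` totally bounded is an
approximating family of observations for the Kantorovich setting. -/
theorem stmt2
    (B : Type → Type) [Functor B] [LawfulFunctor B]
    (X : Type) (Λ : Type) (τ : Λ → B ℝ → ℝ)
    (hτ_mem : ∀ l : Λ, ∀ t : B ℝ, τ l t ∈ Set.Icc (0:ℝ) 1)
    (hτ_conv : ∀ l : Λ, ∀ (k : ℕ → X → ℝ) (g : X → ℝ),
      (∀ n a, k n a ∈ Set.Icc (0:ℝ) 1) → (∀ a, g a ∈ Set.Icc (0:ℝ) 1) →
      TendstoUniformly k g Filter.atTop →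
      TendstoUniformly (fun n z => τ l ((k n) <$> z)) (fun z => τ l (g <$> z)) Filter.atTop)
    (S : Set (X → ℝ))
    (hS_mem : ∀ k ∈ S, ∀ a, k a ∈ Set.Icc (0:ℝ) 1)
    (hS_one : (fun _ => (1:ℝ)) ∈ S)
    (hS_min : ∀ f ∈ S, ∀ g ∈ S, (fun a => min (f a) (g a)) ∈ S)
    (hS_neg : ∀ f ∈ S, (fun a => 1 - f a) ∈ S)
    (hS_trunc : ∀ f ∈ S, ∀ q : ℚ, (q:ℝ) ∈ Set.Icc (0:ℝ) 1 →
      (fun a => max (f a - (q:ℝ)) 0) ∈ S)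
    (dS : X → X → ℝ)
    (hdS : ∀ a b, dS a b = sSup {v : ℝ | ∃ k ∈ S, v = |k a - k b|})
    (htb : ∀ ε : ℝ, 0 < ε → ∃ F : Finset X, ∀ a : X, ∃ b ∈ F, dS a b < ε)
    (h : X → ℝ)
    (hh_mem : ∀ a, h a ∈ Set.Icc (0:ℝ) 1)
    (hh_nexp : ∀ a b, |h a - h b| ≤ dS a b)
    (l : Λ) (z w : B X) :
    |τ l (h <$> z) - τ l (h <$> w)| ≤
      sSup {v : ℝ | ∃ k ∈ S, ∃ l' : Λ, v = |τ l' (k <$> z) - τ l' (k <$> w)|} := by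
  classical
  -- boundedness of the dS defining sets
  have hbdd : ∀ a b : X, BddAbove {v : ℝ | ∃ k ∈ S, v = |k a - k b|} := by
    intro a b
    refine ⟨1, ?_⟩
    rintro v ⟨k, hk, rfl⟩
    have h1 := hS_mem k hk a
    have h2 := hS_mem k hk b
    rw [abs_sub_le_iff]
    constructor <;> linarith [h1.1, h1.2, h2.1, h2.2]
  -- every member of S is nonexpansive for dS
  have hLip : ∀ k ∈ S, ∀ a b : X, |k a - k b| ≤ dS a b := by
    intro k hk a b
    rw [hdS]
    exact le_csSup (hbdd a b) ⟨k, hk, rfl⟩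
  have hdS_symm : ∀ a b : X, dS a b = dS b a := by
    intro a b
    rw [hdS, hdS]
    congr 1
    ext v
    constructor <;> rintro ⟨k, hk, rfl⟩ <;> exact ⟨k, hk, abs_sub_comm _ _⟩
  -- two-point interpolation
  have key : ∀ ε : ℝ, 0 < ε → ∀ x y : X, ∃ g ∈ S, h x - ε ≤ g x ∧ g y ≤ h y + ε := by
    intro ε hε x y
    -- find k ∈ S with k x - k y ≥ h x - h y - ε/2
    have hk : ∃ k ∈ S, h x - h y - ε / 2 ≤ k x - k y := by
      by_cases hc : h x - h y ≤ ε / 2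
      · exact ⟨fun _ => 1, hS_one, by simp; linarith⟩
      · push_neg at hc
        have hle : h x - h y ≤ dS x y := le_trans (le_abs_self _) (hh_nexp x y)
        have hne : Set.Nonempty {v : ℝ | ∃ k ∈ S, v = |k x - k y|} :=
          ⟨0, fun _ => 1, hS_one, by simp⟩
        have hlt : h x - h y - ε / 2 < sSup {v : ℝ | ∃ k ∈ S, v = |k x - k y|} := by
          rw [hdS] at hle; linarith
        obtain ⟨v, ⟨k, hkS, rfl⟩, hv⟩ := exists_lt_of_lt_csSup hne hlt
        rcases le_or_gt (k y) (k x) with h1 | h1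
        · rw [abs_of_nonneg (by linarith)] at hv
          exact ⟨k, hkS, by linarith⟩
        · rw [abs_of_neg (by linarith)] at hv
          exact ⟨fun a => 1 - k a, hS_neg k hkS, by simp; linarith⟩
    obtain ⟨k, hkS, hkxy⟩ := hk
    have hky := hS_mem k hkS y
    have hkx := hS_mem k hkS x
    have hhx := hh_mem x
    have hhy := hh_mem y
    -- rational q with k y ≤ q ≤ k y + ε/2, q ∈ [0,1]
    obtain ⟨q₀, hq₀1, hq₀2⟩ := exists_rat_btwn (show k y < k y + ε / 2 by linarith)
    set q : ℚ := min q₀ 1 with hqdef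
    have hqR : ((q : ℚ) : ℝ) = min ((q₀ : ℚ) : ℝ) 1 := by
      simp only [hqdef, Rat.cast_min, Rat.cast_one]
    have hq_lb : k y ≤ (q : ℝ) := by rw [hqR]; exact le_min (le_of_lt hq₀1) hky.2
    have hq_ub : (q : ℝ) ≤ k y + ε / 2 := by
      rw [hqR]; exact le_trans (min_le_left _ _) (le_of_lt hq₀2)
    have hq01 : ((q : ℚ) : ℝ) ∈ Set.Icc (0:ℝ) 1 := by
      rw [hqR]
      constructor
      · exact le_min (by linarith [hky.1, hq₀1]) (by norm_num)
      · exact min_le_right _ _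
    -- rational r with h y ≤ r ≤ h y + ε/2, r ∈ [0,1]
    obtain ⟨r₀, hr₀1, hr₀2⟩ := exists_rat_btwn (show h y < h y + ε / 2 by linarith)
    set r : ℚ := min r₀ 1 with hrdef
    have hrR : ((r : ℚ) : ℝ) = min ((r₀ : ℚ) : ℝ) 1 := by
      simp only [hrdef, Rat.cast_min, Rat.cast_one]
    have hr_lb : h y ≤ (r : ℝ) := by rw [hrR]; exact le_min (le_of_lt hr₀1) hhy.2
    have hr_ub : (r : ℝ) ≤ h y + ε / 2 := by
      rw [hrR]; exact le_trans (min_le_left _ _) (le_of_lt hr₀2)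
    have hr01 : ((r : ℚ) : ℝ) ∈ Set.Icc (0:ℝ) 1 := by
      rw [hrR]
      constructor
      · exact le_min (by linarith [hhy.1, hr₀1]) (by norm_num)
      · exact min_le_right _ _
    have hr1 : (r : ℝ) ≤ 1 := hr01.2
    -- g₁ = k ⊖ q, g₂ = ¬((¬g₁) ⊖ r)
    have hg₁ : (fun a => max (k a - (q : ℝ)) 0) ∈ S := hS_trunc k hkS q hq01
    refine ⟨fun a => 1 - max (1 - max (k a - (q : ℝ)) 0 - (r : ℝ)) 0,
      hS_neg _ (hS_trunc _ (hS_neg _ hg₁) r hr01), ?_, ?_⟩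
    · -- lower bound at x
      show h x - ε ≤ 1 - max (1 - max (k x - (q : ℝ)) 0 - (r : ℝ)) 0
      have h1 : k x - (q : ℝ) ≤ max (k x - (q : ℝ)) 0 := le_max_left _ _
      have h2 : max (1 - max (k x - (q : ℝ)) 0 - (r : ℝ)) 0 ≤ 1 - h x + ε := by
        apply max_le
        · linarith [h1, hkxy, hq_ub, hr_lb]
        · linarith [hhx.2]
      linarith
    · -- upper bound at y
      show 1 - max (1 - max (k y - (q : ℝ)) 0 - (r : ℝ)) 0 ≤ h y + ε
      have h1 : max (k y - (q : ℝ)) 0 = 0 := max_eq_right (by linarith)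
      rw [h1]
      have h2 : max (1 - 0 - (r : ℝ)) 0 = 1 - 0 - (r : ℝ) := max_eq_left (by linarith)
      rw [h2]
      linarith
  -- one-sided finite interpolation
  have claimx : ∀ ε : ℝ, 0 < ε → ∀ x : X, ∀ F : Finset X,
      ∃ g ∈ S, h x - ε ≤ g x ∧ ∀ y ∈ F, g y ≤ h y + ε := by
    intro ε hε x F
    induction F using Finset.induction_on with
    | empty =>
      exact ⟨fun _ => 1, hS_one,
        by show h x - ε ≤ (1:ℝ); linarith [(hh_mem x).2], by simp⟩
    | @insert y₀ F' hy₀ ih =>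
      obtain ⟨g, hgS, hgx, hgF⟩ := ih
      obtain ⟨g', hg'S, hg'x, hg'y⟩ := key ε hε x y₀
      refine ⟨fun a => min (g a) (g' a), hS_min g hgS g' hg'S, le_min hgx hg'x, ?_⟩
      intro y hy
      rcases Finset.mem_insert.mp hy with rfl | hy
      · exact le_trans (min_le_right _ _) hg'y
      · exact le_trans (min_le_left _ _) (hgF y hy)
  -- two-sided finite interpolation
  have maxid : ∀ u v : ℝ, 1 - min (1 - u) (1 - v) = max u v := by
    intro u v
    rcases le_total u v with huv | huv
    · rw [min_eq_right (by linarith), max_eq_right huv]; ring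
    · rw [min_eq_left (by linarith), max_eq_left huv]; ring
  have claim2 : ∀ ε : ℝ, 0 < ε → ∀ F G : Finset X,
      ∃ g ∈ S, (∀ x ∈ G, h x - ε ≤ g x) ∧ ∀ y ∈ F, g y ≤ h y + ε := by
    intro ε hε F G
    induction G using Finset.induction_on with
    | empty =>
      refine ⟨_, hS_neg _ hS_one, by simp, ?_⟩
      intro y _
      show (1:ℝ) - 1 ≤ h y + ε
      linarith [(hh_mem y).1]
    | @insert x₀ G' hx₀ ih =>
      obtain ⟨g, hgS, hgG, hgF⟩ := ih
      obtain ⟨g', hg'S, hg'x, hg'F⟩ := claimx ε hε x₀ F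
      refine ⟨fun a => 1 - min (1 - g a) (1 - g' a),
        hS_neg _ (hS_min _ (hS_neg g hgS) _ (hS_neg g' hg'S)), ?_, ?_⟩
      · intro x hx
        show h x - ε ≤ 1 - min (1 - g x) (1 - g' x)
        rw [maxid]
        rcases Finset.mem_insert.mp hx with rfl | hx
        · exact le_trans hg'x (le_max_right _ _)
        · exact le_trans (hgG x hx) (le_max_left _ _)
      · intro y hy
        show 1 - min (1 - g y) (1 - g' y) ≤ h y + ε
        rw [maxid]
        exact max_le (hgF y hy) (hg'F y hy)
  -- uniform approximation of h by members of S
  have approx : ∀ ε : ℝ, 0 < ε → ∃ k ∈ S, ∀ a, |h a - k a| ≤ ε := by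
    intro ε hε
    obtain ⟨F, hF⟩ := htb (ε / 3) (by linarith)
    obtain ⟨g, hgS, hgG, hgF⟩ := claim2 (ε / 3) (by linarith) F F
    refine ⟨g, hgS, ?_⟩
    intro a
    obtain ⟨b, hbF, hdb⟩ := hF a
    have e1 : |h a - h b| ≤ dS a b := hh_nexp a b
    have e2 : |h b - g b| ≤ ε / 3 := by
      rw [abs_sub_le_iff]
      exact ⟨by linarith [hgG b hbF], by linarith [hgF b hbF]⟩
    have e3 : |g b - g a| ≤ dS b a := hLip g hgS b a
    have e4 : dS b a = dS a b := hdS_symm b a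
    calc |h a - g a| ≤ |h a - h b| + |h b - g a| := abs_sub_le _ _ _
      _ ≤ |h a - h b| + (|h b - g b| + |g b - g a|) := by
          linarith [abs_sub_le (h b) (g b) (g a)]
      _ ≤ ε := by rw [e4] at e3; linarith
  -- choose an approximating sequence
  have hksn : ∀ n : ℕ, ∃ k ∈ S, ∀ a, |h a - k a| ≤ 1 / (n + 1) := by
    intro n
    exact approx _ (by positivity)
  choose ks hksS hks using hksn
  have hunif : TendstoUniformly ks h Filter.atTop := by
    rw [Metric.tendstoUniformly_iff]
    intro ε hε
    obtain ⟨N, hN⟩ := exists_nat_gt (1 / ε)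
    filter_upwards [Filter.eventually_ge_atTop N] with n hn a
    have hNn : (N : ℝ) ≤ n := by exact_mod_cast hn
    have hlt : 1 / ((n : ℝ) + 1) < ε := by
      rw [div_lt_iff₀ (by positivity)]
      rw [div_lt_iff₀ hε] at hN
      nlinarith
    calc dist (h a) (ks n a) = |h a - ks n a| := Real.dist_eq _ _
      _ ≤ 1 / (n + 1) := hks n a
      _ < ε := hlt
  have htau := hτ_conv l ks h (fun n a => hS_mem _ (hksS n) a) hh_mem hunif
  have hz := htau.tendsto_at z
  have hw := htau.tendsto_at w
  have hlim : Filter.Tendsto (fun n => |τ l (ks n <$> z) - τ l (ks n <$> w)|)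
      Filter.atTop (nhds |τ l (h <$> z) - τ l (h <$> w)|) := (hz.sub hw).abs
  have hbddR : BddAbove {v : ℝ | ∃ k ∈ S, ∃ l' : Λ, v = |τ l' (k <$> z) - τ l' (k <$> w)|} := by
    refine ⟨1, ?_⟩
    rintro v ⟨k, hk, l', rfl⟩
    have h1 := hτ_mem l' (k <$> z)
    have h2 := hτ_mem l' (k <$> w)
    rw [abs_sub_le_iff]
    constructor <;> linarith [h1.1, h1.2, h2.1, h2.2]
  exact le_of_tendsto hlim (Filter.Eventually.of_forall fun n =>
    le_csSup hbddR ⟨ks n, hksS n, l, rfl⟩)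
end

section
/- Let B be a lawful functor on types, Λ a finite type, and for each λ ∈ Λ let τ_λ : B [0,1] → [0,1] preserve uniform convergence (whenever kₙ : X → [0,1] converges uniformly to l, τ_λ ∘ (B kₙ) converges uniformly to τ_λ ∘ (B l)). If (X,d) is a totally bounded 1-bounded pseudometric space, then the Kantorovich lifting (B X, d_B), where d_B(t₁,t₂) = sup over λ ∈ Λ and nonexpansive h : (X,d) → ([0,1],|·|) of |τ_λ((B h)(t₁)) − τ_λ((B h)(t₂))|, is also totally bounded. -/
open Set

lemma func_net (X : Type) (d : X → X → ℝ)
    (hd_refl : ∀ a, d a a = 0)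
    (hd_symm : ∀ a b, d a b = d b a)
    (hd_tri : ∀ a b c, d a c ≤ d a b + d b c)
    (htb : ∀ ε : ℝ, 0 < ε → ∃ F : Finset X, ∀ a : X, ∃ b ∈ F, d a b < ε) :
    ∀ δ : ℝ, 0 < δ →
      ∃ H : Finset (X → ℝ),
        (∀ g ∈ H, (∀ a, g a ∈ Set.Icc (0:ℝ) 1) ∧ ∀ a b, |g a - g b| ≤ d a b) ∧
        ∀ h : X → ℝ, (∀ a, h a ∈ Set.Icc (0:ℝ) 1) → (∀ a b, |h a - h b| ≤ d a b) →
          ∃ g ∈ H, ∀ a, |h a - g a| ≤ δ := by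
  classical
  have hd_nonneg : ∀ a b, 0 ≤ d a b := by
    intro a b
    have h1 := hd_tri a b a
    rw [hd_refl, hd_symm b a] at h1
    linarith
  intro δ hδ
  rcases isEmpty_or_nonempty X with hX | hX
  · refine ⟨{fun _ => 0}, ?_, ?_⟩
    · intro g _
      exact ⟨fun a => (IsEmpty.false a).elim, fun a => (IsEmpty.false a).elim⟩
    · intro h _ _
      exact ⟨fun _ => 0, Finset.mem_singleton_self _, fun a => (IsEmpty.false a).elim⟩
  · set δ' : ℝ := δ / 2 with hδ'def
    have hδ' : 0 < δ' := by positivity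
    obtain ⟨F, hF⟩ := htb δ' hδ'
    have hFne : F.Nonempty := by
      obtain ⟨b, hb, _⟩ := hF (Classical.arbitrary X)
      exact ⟨b, hb⟩
    have hFatt : F.attach.Nonempty := Finset.attach_nonempty_iff.mpr hFne
    set m : ℕ := ⌈1 / δ'⌉₊ with hm
    set gfun : ({x // x ∈ F} → Fin (m + 1)) → X → ℝ :=
      fun c x => min 1 (F.attach.inf' hFatt (fun b => (c b : ℕ) * δ' + d x b.1)) with hgfun
    have hg_props : ∀ c, (∀ a, gfun c a ∈ Set.Icc (0:ℝ) 1) ∧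
        ∀ a b, |gfun c a - gfun c b| ≤ d a b := by
      intro c
      constructor
      · intro a
        constructor
        · apply le_min zero_le_one
          apply Finset.le_inf' hFatt
          intro b _
          have := hd_nonneg a b.1
          positivity
        · exact min_le_left _ _
      · intro a b
        set u := F.attach.inf' hFatt (fun w => (c w : ℕ) * δ' + d a w.1) with hu
        set v := F.attach.inf' hFatt (fun w => (c w : ℕ) * δ' + d b w.1) with hv
        have key : ∀ x y : X,
            F.attach.inf' hFatt (fun w => (c w : ℕ) * δ' + d x w.1) ≤
            F.attach.inf' hFatt (fun w => (c w : ℕ) * δ' + d y w.1) + d x y := by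
          intro x y
          rw [← sub_le_iff_le_add]
          apply Finset.le_inf' hFatt
          intro w hw
          have h1 : F.attach.inf' hFatt (fun w => (c w : ℕ) * δ' + d x w.1) ≤
              (c w : ℕ) * δ' + d x w.1 := Finset.inf'_le _ hw
          have h2 : d x w.1 ≤ d x y + d y w.1 := hd_tri x y w.1
          linarith
        have h1 : u ≤ v + d a b := key a b
        have h2 : v ≤ u + d a b := by
          have := key b a; rw [hd_symm b a] at this; exact this
        have huv : |u - v| ≤ d a b := abs_sub_le_iff.mpr ⟨by linarith, by linarith⟩
        have habs : |gfun c a - gfun c b| ≤ |u - v| := by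
          have := abs_min_sub_min_le_max (1:ℝ) u 1 v
          simpa [hgfun, sub_self, abs_zero] using this
        linarith [abs_nonneg (u - v)]
    refine ⟨Finset.image gfun Finset.univ, ?_, ?_⟩
    · intro g hg
      obtain ⟨c, _, rfl⟩ := Finset.mem_image.mp hg
      exact hg_props c
    · intro h hh1 hh2
      have hcb : ∀ b : {x // x ∈ F}, ⌊h b.1 / δ'⌋₊ < m + 1 := by
        intro b
        have hb1 : h b.1 ≤ 1 := (hh1 b.1).2
        have hle : h b.1 / δ' ≤ 1 / δ' := by
          apply div_le_div_of_nonneg_right hb1 hδ'.le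
        have h2 : ⌊h b.1 / δ'⌋₊ ≤ ⌊1 / δ'⌋₊ := Nat.floor_le_floor hle
        have h3 : ⌊(1:ℝ) / δ'⌋₊ ≤ m := Nat.floor_le_ceil _
        omega
      set c : {x // x ∈ F} → Fin (m + 1) := fun b => ⟨⌊h b.1 / δ'⌋₊, hcb b⟩ with hc
      have hfloor_le : ∀ b : {x // x ∈ F}, ((c b : ℕ) : ℝ) * δ' ≤ h b.1 := by
        intro b
        have h0 : 0 ≤ h b.1 / δ' := div_nonneg (hh1 b.1).1 hδ'.le
        have := Nat.floor_le h0
        calc ((c b : ℕ) : ℝ) * δ' = (⌊h b.1 / δ'⌋₊ : ℝ) * δ' := rfl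
          _ ≤ (h b.1 / δ') * δ' := by nlinarith
          _ = h b.1 := by field_simp
      have hfloor_ge : ∀ b : {x // x ∈ F}, h b.1 ≤ ((c b : ℕ) : ℝ) * δ' + δ' := by
        intro b
        have := Nat.lt_floor_add_one (h b.1 / δ')
        have h2 : h b.1 / δ' * δ' < ((⌊h b.1 / δ'⌋₊ : ℝ) + 1) * δ' := by nlinarith
        have h3 : h b.1 / δ' * δ' = h b.1 := by field_simp
        have h4 : ((⌊h b.1 / δ'⌋₊ : ℝ) + 1) * δ' = ((c b : ℕ) : ℝ) * δ' + δ' := by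
          show ((⌊h b.1 / δ'⌋₊ : ℝ) + 1) * δ' = ((⌊h b.1 / δ'⌋₊ : ℕ) : ℝ) * δ' + δ'; ring
        linarith [h2, h3.symm.le, h4.le]
      refine ⟨gfun c, Finset.mem_image_of_mem _ (Finset.mem_univ c), ?_⟩
      intro a
      have hlow : h a - δ' ≤ gfun c a := by
        apply le_min
        · linarith [(hh1 a).2]
        · apply Finset.le_inf' hFatt
          intro w _
          have h1 : h a ≤ h w.1 + d a w.1 := by
            have := hh2 a w.1
            rw [abs_sub_le_iff] at this
            linarith [this.1]
          have h2 := hfloor_ge w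
          linarith
      have hup : gfun c a ≤ h a + 2 * δ' := by
        obtain ⟨b, hbF, hbd⟩ := hF a
        have hterm : gfun c a ≤ ((c ⟨b, hbF⟩ : ℕ) : ℝ) * δ' + d a b := by
          refine (min_le_right _ _).trans ?_
          exact Finset.inf'_le _ (Finset.mem_attach F ⟨b, hbF⟩)
        have h1 : ((c ⟨b, hbF⟩ : ℕ) : ℝ) * δ' ≤ h b := hfloor_le ⟨b, hbF⟩
        have h2 : h b ≤ h a + d a b := by
          have := hh2 a b
          rw [abs_sub_le_iff] at this
          linarith [this.2]
        linarith
      rw [abs_sub_le_iff]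
      constructor
      · have : δ' ≤ δ := by rw [hδ'def]; linarith
        linarith
      · have : 2 * δ' = δ := by rw [hδ'def]; ring
        linarith
open Set Filter

lemma key_uc (B : Type → Type) [Functor B] (X : Type) (T : B ℝ → ℝ)
    (hT_conv : ∀ (k : ℕ → X → ℝ) (g : X → ℝ),
      (∀ n a, k n a ∈ Set.Icc (0:ℝ) 1) → (∀ a, g a ∈ Set.Icc (0:ℝ) 1) →
      TendstoUniformly k g Filter.atTop →
      TendstoUniformly (fun n z => T ((k n) <$> z)) (fun z => T (g <$> z)) Filter.atTop)
    (d : X → X → ℝ)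
    (hd_refl : ∀ a, d a a = 0)
    (hd_symm : ∀ a b, d a b = d b a)
    (hd_tri : ∀ a b c, d a c ≤ d a b + d b c)
    (htb : ∀ ε : ℝ, 0 < ε → ∃ F : Finset X, ∀ a : X, ∃ b ∈ F, d a b < ε)
    (ε : ℝ) (hε : 0 < ε) :
    ∃ δ > 0, ∀ h g : X → ℝ,
      (∀ a, h a ∈ Set.Icc (0:ℝ) 1) → (∀ a b, |h a - h b| ≤ d a b) →
      (∀ a, g a ∈ Set.Icc (0:ℝ) 1) → (∀ a b, |g a - g b| ≤ d a b) →
      (∀ a, |h a - g a| ≤ δ) →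
      ∀ t : B X, |T (h <$> t) - T (g <$> t)| ≤ ε := by
  classical
  by_contra hcon
  push_neg at hcon
  have hstep : ∀ n : ℕ, ∃ h g : X → ℝ,
      (∀ a, h a ∈ Set.Icc (0:ℝ) 1) ∧ (∀ a b, |h a - h b| ≤ d a b) ∧
      (∀ a, g a ∈ Set.Icc (0:ℝ) 1) ∧ (∀ a b, |g a - g b| ≤ d a b) ∧
      (∀ a, |h a - g a| ≤ 1 / (n + 1)) ∧
      ∃ t : B X, ε < |T (h <$> t) - T (g <$> t)| := by
    intro n
    obtain ⟨h, g, h1, h2, h3, h4, h5, t, ht⟩ := hcon (1 / (n + 1)) (by positivity)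
    exact ⟨h, g, h1, h2, h3, h4, h5, t, ht⟩
  choose hs gs hs1 hs2 gs1 gs2 hclose ts hts using hstep
  letI : PseudoMetricSpace X :=
    { dist := d, dist_self := hd_refl, dist_comm := hd_symm, dist_triangle := hd_tri }
  have hdist : ∀ a b : X, dist a b = d a b := fun _ _ => rfl
  -- lift nonexpansive [0,1]-valued functions to bounded continuous functions
  have hlift : ∀ (f : X → ℝ), (∀ a, f a ∈ Set.Icc (0:ℝ) 1) → (∀ a b, |f a - f b| ≤ d a b) →
      ∃ F : BoundedContinuousFunction X ℝ, ⇑F = f := by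
    intro f hf1 hf2
    have hlip : LipschitzWith 1 f := by
      apply LipschitzWith.of_dist_le_mul
      intro a b
      simpa [Real.dist_eq, hdist] using hf2 a b
    exact ⟨BoundedContinuousFunction.mkOfBound ⟨f, hlip.continuous⟩ 1
      (fun a b => by
        rw [Real.dist_eq]
        have := hf1 a; have := hf1 b
        simp only [ContinuousMap.coe_mk]
        rw [abs_sub_le_iff]
        constructor <;> [linarith [(hf1 a).2, (hf1 b).1]; linarith [(hf1 b).2, (hf1 a).1]]), rfl⟩
  set K' : Set (BoundedContinuousFunction X ℝ) :=
    {f | (∀ a, f a ∈ Set.Icc (0:ℝ) 1) ∧ ∀ a b, |f a - f b| ≤ d a b} with hK'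
  have hK'tb : TotallyBounded K' := by
    rw [Metric.totallyBounded_iff]
    intro ε' hε'
    obtain ⟨H, hH1, hH2⟩ := func_net X d hd_refl hd_symm hd_tri htb (ε' / 2) (by positivity)
    refine ⟨(fun f : BoundedContinuousFunction X ℝ => ⇑f) ⁻¹' ↑H, ?_, ?_⟩
    · exact Set.Finite.preimage (Set.injOn_of_injective DFunLike.coe_injective)
        H.finite_toSet
    · intro f hf
      obtain ⟨g, hgH, hgclose⟩ := hH2 ⇑f hf.1 hf.2
      obtain ⟨G, hG⟩ := hlift g (hH1 g hgH).1 (hH1 g hgH).2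
      refine Set.mem_iUnion₂.mpr ⟨G, by simp [hG, hgH], ?_⟩
      rw [Metric.mem_ball]
      have : dist f G ≤ ε' / 2 := by
        rw [BoundedContinuousFunction.dist_le (by positivity)]
        intro x
        rw [Real.dist_eq, hG]
        exact hgclose x
      linarith
  have hcompact : IsCompact (closure K') :=
    TotallyBounded.isCompact_of_isClosed hK'tb.closure isClosed_closure
  choose Fh hFh using fun n => hlift (hs n) (hs1 n) (hs2 n)
  have hFhK : ∀ n, Fh n ∈ closure K' := by
    intro n
    apply subset_closure
    rw [hK']
    constructor
    · intro a; rw [hFh n]; exact hs1 n a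
    · intro a b; rw [hFh n]; exact hs2 n a b
  obtain ⟨w, hw_mem, φ, hφ, hconv⟩ := hcompact.isSeqCompact hFhK
  have hunif : TendstoUniformly (fun k => ⇑(Fh (φ k))) ⇑w atTop :=
    BoundedContinuousFunction.tendsto_iff_tendstoUniformly.mp hconv
  have hunif' : TendstoUniformly (fun k => hs (φ k)) ⇑w atTop := by
    convert hunif using 2
    exact (hFh _).symm
  have hw1 : ∀ a, w a ∈ Set.Icc (0:ℝ) 1 := by
    intro a
    apply isClosed_Icc.mem_of_tendsto (hunif'.tendsto_at a)
    exact Filter.Eventually.of_forall (fun k => hs1 (φ k) a)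
  -- gs ∘ φ also converges uniformly to w
  have hgunif : TendstoUniformly (fun k => gs (φ k)) ⇑w atTop := by
    rw [Metric.tendstoUniformly_iff]
    intro ε' hε'
    have e1 : ∀ᶠ k in atTop, ∀ x, dist (w x) (hs (φ k) x) < ε' / 2 :=
      Metric.tendstoUniformly_iff.mp hunif' (ε' / 2) (by positivity)
    have e2 : ∀ᶠ k in atTop, (1 : ℝ) / (φ k + 1) < ε' / 2 := by
      have hlarge : ∀ᶠ k : ℕ in atTop, (2 : ℝ) / ε' < k := by
        obtain ⟨N, hN⟩ := exists_nat_gt ((2:ℝ) / ε')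
        filter_upwards [Filter.eventually_ge_atTop N] with k hk
        calc (2:ℝ) / ε' < N := hN
          _ ≤ k := by exact_mod_cast hk
      filter_upwards [hlarge] with k hk
      have hφk : (k : ℝ) ≤ φ k := by exact_mod_cast hφ.le_apply
      have h0 : (0:ℝ) < φ k + 1 := by positivity
      rw [div_lt_iff₀ h0]
      have h2 : 2 / ε' * ε' = 2 := by field_simp
      calc (1:ℝ) = ε' / 2 * (2 / ε') := by field_simp
        _ < ε' / 2 * (φ k + 1) := by
            apply mul_lt_mul_of_pos_left _ (by positivity)
            linarith
    filter_upwards [e1, e2] with k hk1 hk2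
    intro x
    have h3 : dist (hs (φ k) x) (gs (φ k) x) ≤ 1 / (φ k + 1) := by
      rw [Real.dist_eq]; exact hclose (φ k) x
    calc dist (w x) (gs (φ k) x) ≤ dist (w x) (hs (φ k) x) + dist (hs (φ k) x) (gs (φ k) x) :=
          dist_triangle _ _ _
      _ < ε' / 2 + ε' / 2 := by have := hk1 x; linarith
      _ = ε' := by ring
  have TU1 := hT_conv (fun k => hs (φ k)) ⇑w (fun k => hs1 (φ k)) hw1 hunif'
  have TU2 := hT_conv (fun k => gs (φ k)) ⇑w (fun k => gs1 (φ k)) hw1 hgunif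
  have E1 := Metric.tendstoUniformly_iff.mp TU1 (ε / 2) (by positivity)
  have E2 := Metric.tendstoUniformly_iff.mp TU2 (ε / 2) (by positivity)
  obtain ⟨k, hk1, hk2⟩ := (E1.and E2).exists
  have hz1 := hk1 (ts (φ k))
  have hz2 := hk2 (ts (φ k))
  rw [Real.dist_eq] at hz1 hz2
  have := hts (φ k)
  have htri := abs_sub_le (T (hs (φ k) <$> ts (φ k))) (T (⇑w <$> ts (φ k)))
    (T (gs (φ k) <$> ts (φ k)))
  rw [abs_sub_comm (T (hs (φ k) <$> ts (φ k))) (T (⇑w <$> ts (φ k)))] at htri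
  linarith
/-- With finitely many modalities preserving uniform convergence,
the Kantorovich lifting of a totally bounded 1-bounded pseudometric is totally bounded. -/
theorem stmt3
    (B : Type → Type) [Functor B] [LawfulFunctor B]
    (X : Type) (Λ : Type) [Finite Λ] (τ : Λ → B ℝ → ℝ)
    (hτ_mem : ∀ l : Λ, ∀ t : B ℝ, τ l t ∈ Set.Icc (0:ℝ) 1)
    (hτ_conv : ∀ l : Λ, ∀ (k : ℕ → X → ℝ) (g : X → ℝ),
      (∀ n a, k n a ∈ Set.Icc (0:ℝ) 1) → (∀ a, g a ∈ Set.Icc (0:ℝ) 1) →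
      TendstoUniformly k g Filter.atTop →
      TendstoUniformly (fun n z => τ l ((k n) <$> z)) (fun z => τ l (g <$> z)) Filter.atTop)
    (d : X → X → ℝ)
    (hd_refl : ∀ a, d a a = 0)
    (hd_symm : ∀ a b, d a b = d b a)
    (hd_tri : ∀ a b c, d a c ≤ d a b + d b c)
    (hd_bdd : ∀ a b, d a b ≤ 1)
    (htb : ∀ ε : ℝ, 0 < ε → ∃ F : Finset X, ∀ a : X, ∃ b ∈ F, d a b < ε)
    (dB : B X → B X → ℝ)
    (hdB : ∀ t₁ t₂ : B X, dB t₁ t₂ = sSup {v : ℝ | ∃ l : Λ, ∃ h : X → ℝ,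
      (∀ a, h a ∈ Set.Icc (0:ℝ) 1) ∧ (∀ a b, |h a - h b| ≤ d a b) ∧
      v = |τ l (h <$> t₁) - τ l (h <$> t₂)|}) :
    ∀ ε : ℝ, 0 < ε → ∃ F : Finset (B X), ∀ t : B X, ∃ u ∈ F, dB t u < ε := by
  classical
  intro ε hε
  rcases isEmpty_or_nonempty Λ with hΛ | hΛ
  · -- no modalities: dB is sSup of the empty set, i.e. 0
    by_cases hBX : Nonempty (B X)
    · refine ⟨{Classical.arbitrary (B X)}, fun t => ⟨_, Finset.mem_singleton_self _, ?_⟩⟩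
      rw [hdB]
      have : {v : ℝ | ∃ l : Λ, ∃ h : X → ℝ,
          (∀ a, h a ∈ Set.Icc (0:ℝ) 1) ∧ (∀ a b, |h a - h b| ≤ d a b) ∧
          v = |τ l (h <$> t) - τ l (h <$> Classical.arbitrary (B X))|} = ∅ := by
        ext v
        simp only [Set.mem_setOf_eq, Set.mem_empty_iff_false, iff_false]
        rintro ⟨l, -⟩
        exact (IsEmpty.false l).elim
      rw [this, Real.sSup_empty]
      exact hε
    · exact ⟨∅, fun t => (hBX ⟨t⟩).elim⟩
  · cases nonempty_fintype Λ
    -- uniform continuity modulus for each modality, at precision ε/4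
    have hkey : ∀ l : Λ, ∃ δ > 0, ∀ h g : X → ℝ,
        (∀ a, h a ∈ Set.Icc (0:ℝ) 1) → (∀ a b, |h a - h b| ≤ d a b) →
        (∀ a, g a ∈ Set.Icc (0:ℝ) 1) → (∀ a b, |g a - g b| ≤ d a b) →
        (∀ a, |h a - g a| ≤ δ) →
        ∀ t : B X, |τ l (h <$> t) - τ l (g <$> t)| ≤ ε / 4 :=
      fun l => key_uc B X (τ l) (hτ_conv l) d hd_refl hd_symm hd_tri htb (ε / 4)
        (by positivity)
    choose δf hδf hδprop using hkey
    set δ : ℝ := Finset.univ.inf' Finset.univ_nonempty δf with hδdef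
    have hδpos : 0 < δ := by
      rw [hδdef, Finset.lt_inf'_iff]
      exact fun l _ => hδf l
    have hδle : ∀ l : Λ, δ ≤ δf l := fun l => Finset.inf'_le _ (Finset.mem_univ l)
    obtain ⟨H, hH1, hH2⟩ := func_net X d hd_refl hd_symm hd_tri htb δ hδpos
    -- finite-dimensional observation map
    set I := Λ × {g // g ∈ H} with hI
    set Φ : B X → I → ℝ := fun t i => τ i.1 ((i.2 : X → ℝ) <$> t) with hΦ
    have hΦmem : ∀ t i, Φ t i ∈ Set.Icc (0:ℝ) 1 := fun t i => hτ_mem i.1 _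
    have hStb : TotallyBounded (Φ '' Set.univ) := by
      refine TotallyBounded.subset ?_
        (isCompact_univ_pi fun _ : I => isCompact_Icc (a := (0:ℝ)) (b := 1)).totallyBounded
      rintro - ⟨t, -, rfl⟩
      exact fun i _ => hΦmem t i
    obtain ⟨N, hNsub, hNfin, hNcover⟩ := EMetric.totallyBounded_iff'.mp hStb
      (ENNReal.ofReal (ε / 4)) (by simp; positivity)
    have hch : ∀ y ∈ hNfin.toFinset, ∃ u : B X, Φ u = y := by
      intro y hy
      rw [Set.Finite.mem_toFinset] at hy
      obtain ⟨u, -, hu⟩ := hNsub hy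
      exact ⟨u, hu⟩
    refine ⟨hNfin.toFinset.attach.image (fun y => Classical.choose (hch y.1 y.2)),
      fun t => ?_⟩
    have htS : Φ t ∈ Φ '' Set.univ := ⟨t, Set.mem_univ t, rfl⟩
    obtain ⟨y, hyN, hyball⟩ := Set.mem_iUnion₂.mp (hNcover htS)
    set u : B X := Classical.choose (hch y (hNfin.mem_toFinset.mpr hyN)) with hu
    have hΦu : Φ u = y := Classical.choose_spec (hch y (hNfin.mem_toFinset.mpr hyN))
    refine ⟨u, Finset.mem_image.mpr ⟨⟨y, hNfin.mem_toFinset.mpr hyN⟩,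
      Finset.mem_attach _ _, rfl⟩, ?_⟩
    have hdistΦ : dist (Φ t) (Φ u) < ε / 4 := by
      rw [hΦu]
      rw [EMetric.mem_ball] at hyball
      exact (edist_lt_ofReal).mp hyball
    rw [hdB]
    have hbound : ∀ v ∈ {v : ℝ | ∃ l : Λ, ∃ h : X → ℝ,
        (∀ a, h a ∈ Set.Icc (0:ℝ) 1) ∧ (∀ a b, |h a - h b| ≤ d a b) ∧
        v = |τ l (h <$> t) - τ l (h <$> u)|}, v ≤ 3 * (ε / 4) := by
      rintro v ⟨l, h, hh1, hh2, rfl⟩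
      obtain ⟨g, hgH, hgclose⟩ := hH2 h hh1 hh2
      have hgprops := hH1 g hgH
      have hclose' : ∀ a, |h a - g a| ≤ δf l := fun a => (hgclose a).trans (hδle l)
      have e1 : |τ l (h <$> t) - τ l (g <$> t)| ≤ ε / 4 :=
        hδprop l h g hh1 hh2 hgprops.1 hgprops.2 hclose' t
      have e3 : |τ l (h <$> u) - τ l (g <$> u)| ≤ ε / 4 :=
        hδprop l h g hh1 hh2 hgprops.1 hgprops.2 hclose' u
      have e2 : |τ l (g <$> t) - τ l (g <$> u)| ≤ ε / 4 := by
        have hi : |Φ t (l, ⟨g, hgH⟩) - Φ u (l, ⟨g, hgH⟩)| ≤ dist (Φ t) (Φ u) := by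
          rw [← Real.dist_eq]
          exact dist_le_pi_dist (Φ t) (Φ u) (l, ⟨g, hgH⟩)
        have : Φ t (l, ⟨g, hgH⟩) = τ l (g <$> t) := rfl
        rw [this] at hi
        have h2 : Φ u (l, ⟨g, hgH⟩) = τ l (g <$> u) := rfl
        rw [h2] at hi
        linarith
      calc |τ l (h <$> t) - τ l (h <$> u)| ≤
            |τ l (h <$> t) - τ l (g <$> t)| + |τ l (g <$> t) - τ l (h <$> u)| :=
          abs_sub_le _ _ _
        _ ≤ |τ l (h <$> t) - τ l (g <$> t)| + (|τ l (g <$> t) - τ l (g <$> u)| +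
            |τ l (g <$> u) - τ l (h <$> u)|) := by
          linarith [abs_sub_le (τ l (g <$> t)) (τ l (g <$> u)) (τ l (h <$> u))]
        _ ≤ ε / 4 + (ε / 4 + ε / 4) := by
          rw [abs_sub_comm (τ l (g <$> u))]
          exact add_le_add e1 (add_le_add e2 e3)
        _ = 3 * (ε / 4) := by ring
    have := Real.sSup_le hbound (by positivity)
    linarith
end

section
/- Let X be a type, B a lawful functor on types, Λ a finite type, and for each λ ∈ Λ let τ_λ : B [0,1] → [0,1] preserve uniform convergence. Let x : X → B X be a coalgebra. Define the monotone map Φ on the complete lattice of 1-bounded pseudometrics on X (ordered by d ⊑ d' iff d(s,t) ≥ d'(s,t) for all s,t) by Φ(d)(s,t) = sup over λ ∈ Λ and nonexpansive h : (X,d) → ([0,1],|·|) of |τ_λ((B h)(x(s))) − τ_λ((B h)(x(t)))|, and let d_α be the ⊑-greatest fixed point of Φ. Assume that the chain d₀ = 0 (the constant-zero pseudometric), d_{i+1} = Φ(d_i) stabilizes after ω steps, i.e., the pointwise supremum d_ω(s,t) = sup_i d_i(s,t) is a fixed point of Φ. Let L be the smallest set of functions X → [0,1] containing the constant function 1 and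 closed under pointwise min, f ↦ 1−f, f ↦ max(f−q,0) for each q ∈ ℚ ∩ [0,1], and f ↦ τ_λ ∘ (B f) ∘ x for each λ ∈ Λ. Then for all s,t ∈ X, d_α(s,t) = sup_{φ∈L} |φ(s) − φ(t)|. -/
/-- Interpretations of the formulas of the König–Mika-Michalski quantitative modal
logic over a coalgebra `x : X → B X`: the smallest set of functions `X → [0,1] ⊆ ℝ`
containing the constant `1` and closed under pointwise `min`, negation `1 - f`,
truncated subtraction `max (f - q) 0` for rational `q ∈ [0,1]`, and the modalities
`f ↦ τ l ∘ B f ∘ x`. -/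
inductive KMMInterp (B : Type → Type) [Functor B] {X Λ : Type}
    (τ : Λ → B ℝ → ℝ) (x : X → B X) : (X → ℝ) → Prop
  | one : KMMInterp B τ x (fun _ => 1)
  | min : ∀ {f g : X → ℝ}, KMMInterp B τ x f → KMMInterp B τ x g →
      KMMInterp B τ x (fun s => min (f s) (g s))
  | neg : ∀ {f : X → ℝ}, KMMInterp B τ x f → KMMInterp B τ x (fun s => 1 - f s)
  | trunc : ∀ {f : X → ℝ} (q : ℚ), (q:ℝ) ∈ Set.Icc (0:ℝ) 1 → KMMInterp B τ x f →
      KMMInterp B τ x (fun s => max (f s - (q:ℝ)) 0)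
  | mod : ∀ {f : X → ℝ} (l : Λ), KMMInterp B τ x f →
      KMMInterp B τ x (fun s => τ l (f <$> x s))

open Filter Set


namespace KMMAux

lemma foldmax_nonneg (l : List ℝ) : 0 ≤ l.foldr max 0 := by
  induction l with
  | nil => simp
  | cons a t ih => exact le_trans ih (le_max_right a _)

lemma le_foldmax {l : List ℝ} {a : ℝ} (h : a ∈ l) : a ≤ l.foldr max 0 := by
  induction l with
  | nil => simp at h
  | cons b t ih =>
    rcases List.mem_cons.1 h with rfl | h
    · exact le_max_left _ _
    · exact (ih h).trans (le_max_right _ _)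

lemma foldmax_le {l : List ℝ} {b : ℝ} (hb : 0 ≤ b) (h : ∀ a ∈ l, a ≤ b) : l.foldr max 0 ≤ b := by
  induction l with
  | nil => simpa
  | cons a t ih => exact max_le (h a (by simp)) (ih fun a ha => h a (by simp [ha]))

lemma ratnear {a ε : ℝ} (ha : a ∈ Set.Icc (0:ℝ) 1) (hε : 0 < ε) :
    ∃ q : ℚ, (q:ℝ) ∈ Set.Icc (0:ℝ) 1 ∧ |(q:ℝ) - a| ≤ ε := by
  rcases le_or_gt a ε with h | h
  · refine ⟨0, by norm_num, ?_⟩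
    rw [Rat.cast_zero, zero_sub, abs_neg, abs_of_nonneg ha.1]
    exact h
  · obtain ⟨q, hq1, hq2⟩ := exists_rat_btwn (show a - ε < a by linarith)
    refine ⟨q, ⟨by linarith [ha.1], by linarith [ha.2]⟩, ?_⟩
    rw [abs_of_nonpos (by linarith)]
    linarith

lemma abs_sub_le_one_of_Icc {a b : ℝ} (ha : a ∈ Set.Icc (0:ℝ) 1) (hb : b ∈ Set.Icc (0:ℝ) 1) :
    |a - b| ≤ 1 := by
  rw [abs_le]; obtain ⟨h1, h2⟩ := ha; obtain ⟨h3, h4⟩ := hb; constructor <;> linarith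

section KMMLemmas

variable {B : Type → Type} [Functor B] {X Λ : Type} {τ : Λ → B ℝ → ℝ} {x : X → B X}

lemma kmm_congr {f g : X → ℝ} (h : KMMInterp B τ x f) (e : ∀ u, f u = g u) :
    KMMInterp B τ x g := by
  rwa [show g = f from funext fun u => (e u).symm]

lemma kmm_mem01 (hm : ∀ l t, τ l t ∈ Set.Icc (0:ℝ) 1) {f : X → ℝ} (h : KMMInterp B τ x f) :
    ∀ a, f a ∈ Set.Icc (0:ℝ) 1 := by
  induction h with
  | one => intro a; constructor <;> norm_num
  | min hf hg ihf ihg =>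
    intro a
    obtain ⟨h1, h2⟩ := ihf a; obtain ⟨h3, h4⟩ := ihg a
    exact ⟨le_min h1 h3, le_trans (min_le_left _ _) h2⟩
  | neg hf ih =>
    intro a; obtain ⟨h1, h2⟩ := ih a
    exact ⟨by dsimp only; linarith, by dsimp only; linarith⟩
  | trunc q hq hf ih =>
    intro a
    obtain ⟨h1, h2⟩ := ih a
    exact ⟨le_max_right _ _, max_le (by have := hq.1; linarith) (by norm_num)⟩
  | mod l hf ih => exact fun a => hm l _

lemma kmm_zero : KMMInterp B τ x (fun _ => (0:ℝ)) := by
  have := KMMInterp.trunc (B := B) (τ := τ) (x := x) (f := fun _ => (1:ℝ)) 1 (by norm_num)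
    KMMInterp.one
  exact kmm_congr this (fun u => by norm_num)

lemma kmm_const (q : ℚ) (hq : (q:ℝ) ∈ Set.Icc (0:ℝ) 1) :
    KMMInterp B τ x (fun _ => (q:ℝ)) := by
  have h1 : ((1 - q : ℚ):ℝ) ∈ Set.Icc (0:ℝ) 1 := by
    obtain ⟨a, b⟩ := hq; push_cast; constructor <;> linarith
  have := KMMInterp.trunc (B := B) (τ := τ) (x := x) (f := fun _ => (1:ℝ)) (1 - q) h1
    KMMInterp.one
  refine kmm_congr this (fun u => ?_)
  show ((1:ℝ) - ((1 - q : ℚ):ℝ)) ⊔ 0 = (q:ℝ)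
  push_cast
  rw [max_eq_left (by linarith [hq.1])]
  ring

lemma kmm_max {f g : X → ℝ} (hf : KMMInterp B τ x f) (hg : KMMInterp B τ x g) :
    KMMInterp B τ x (fun s => max (f s) (g s)) := by
  have := KMMInterp.neg (KMMInterp.min (KMMInterp.neg hf) (KMMInterp.neg hg))
  refine kmm_congr this (fun u => ?_)
  show 1 - (1 - f u) ⊓ (1 - g u) = f u ⊔ g u
  rcases le_total (f u) (g u) with h | h
  · rw [max_eq_right h, min_eq_right (by linarith)]; ring
  · rw [max_eq_left h, min_eq_left (by linarith)]; ring

lemma kmm_absdiff {f : X → ℝ} (hf : KMMInterp B τ x f) (r : ℚ) (hr : (r:ℝ) ∈ Set.Icc (0:ℝ) 1) :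
    KMMInterp B τ x (fun u => |f u - (r:ℝ)|) := by
  have hr' : ((1 - r : ℚ):ℝ) ∈ Set.Icc (0:ℝ) 1 := by
    obtain ⟨a, b⟩ := hr; push_cast; constructor <;> linarith
  have h1 := KMMInterp.trunc r hr hf
  have h2 := KMMInterp.trunc (1 - r) hr' (KMMInterp.neg hf)
  refine kmm_congr (kmm_max h1 h2) (fun u => ?_)
  show (f u - (r:ℝ)) ⊔ 0 ⊔ ((1 - f u - ((1 - r : ℚ):ℝ)) ⊔ 0) = |f u - (r:ℝ)|
  push_cast
  rcases le_total (f u) (r:ℝ) with h | h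
  · rw [abs_of_nonpos (by linarith)]
    rw [max_eq_right (show f u - (r:ℝ) ≤ 0 by linarith)]
    rw [max_eq_left (show (0:ℝ) ≤ 1 - f u - (1 - (r:ℝ)) by linarith)]
    rw [max_eq_right (show (0:ℝ) ≤ 1 - f u - (1 - (r:ℝ)) by linarith)]
    ring
  · rw [abs_of_nonneg (by linarith)]
    rw [max_eq_left (show (0:ℝ) ≤ f u - (r:ℝ) by linarith)]
    rw [max_eq_right (show 1 - f u - (1 - (r:ℝ)) ≤ 0 by linarith)]
    rw [max_eq_left (show (0:ℝ) ≤ f u - (r:ℝ) by linarith)]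

lemma kmm_foldmax {ι : Type*} (L : List ι) (F : ι → X → ℝ)
    (hF : ∀ i ∈ L, KMMInterp B τ x (F i)) :
    KMMInterp B τ x (fun u => (L.map fun i => F i u).foldr max 0) := by
  induction L with
  | nil => exact kmm_congr kmm_zero (fun u => by simp)
  | cons a t ih =>
    have := kmm_max (hF a (by simp)) (ih fun i hi => hF i (by simp [hi]))
    exact kmm_congr this (fun u => by simp)

end KMMLemmas

end KMMAux
namespace KMMAux

section PhiSet

variable {B : Type → Type} [Functor B] {X Λ : Type}

/-- The set of values whose supremum defines `Φ d s t`. -/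
def PhiSet (τ : Λ → B ℝ → ℝ) (x : X → B X) (d : X → X → ℝ) (s t : X) : Set ℝ :=
  {v : ℝ | ∃ l : Λ, ∃ h : X → ℝ,
      (∀ a, h a ∈ Set.Icc (0:ℝ) 1) ∧ (∀ a b, |h a - h b| ≤ d a b) ∧
      v = |τ l (h <$> x s) - τ l (h <$> x t)|}

variable {τ : Λ → B ℝ → ℝ} {x : X → B X} {d : X → X → ℝ} {s t u : X}

lemma phiSet_nonneg : ∀ v ∈ PhiSet τ x d s t, 0 ≤ v := by
  rintro v ⟨l, h, -, -, rfl⟩; exact abs_nonneg _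

lemma phiSet_le_one (hm : ∀ l t, τ l t ∈ Set.Icc (0:ℝ) 1) :
    ∀ v ∈ PhiSet τ x d s t, v ≤ 1 := by
  rintro v ⟨l, h, -, -, rfl⟩; exact abs_sub_le_one_of_Icc (hm _ _) (hm _ _)

lemma phiSet_bdd (hm : ∀ l t, τ l t ∈ Set.Icc (0:ℝ) 1) :
    BddAbove (PhiSet τ x d s t) :=
  ⟨1, fun v hv => phiSet_le_one hm v hv⟩

lemma sPhi_nonneg : 0 ≤ sSup (PhiSet τ x d s t) :=
  Real.sSup_nonneg phiSet_nonneg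

lemma sPhi_le_one (hm : ∀ l t, τ l t ∈ Set.Icc (0:ℝ) 1) :
    sSup (PhiSet τ x d s t) ≤ 1 :=
  Real.sSup_le (phiSet_le_one hm) zero_le_one

lemma sPhi_refl : sSup (PhiSet τ x d s s) = 0 := by
  refine le_antisymm (Real.sSup_le ?_ le_rfl) sPhi_nonneg
  rintro v ⟨l, h, -, -, rfl⟩; simp

lemma sPhi_symm : sSup (PhiSet τ x d s t) = sSup (PhiSet τ x d t s) := by
  congr 1
  ext v
  constructor <;> rintro ⟨l, h, h1, h2, rfl⟩ <;> exact ⟨l, h, h1, h2, abs_sub_comm _ _⟩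

lemma sPhi_tri (hm : ∀ l t, τ l t ∈ Set.Icc (0:ℝ) 1) :
    sSup (PhiSet τ x d s u) ≤ sSup (PhiSet τ x d s t) + sSup (PhiSet τ x d t u) := by
  refine Real.sSup_le ?_ (add_nonneg sPhi_nonneg sPhi_nonneg)
  rintro v ⟨l, h, h1, h2, rfl⟩
  have e1 : |τ l (h <$> x s) - τ l (h <$> x t)| ≤ sSup (PhiSet τ x d s t) :=
    le_csSup (phiSet_bdd hm) ⟨l, h, h1, h2, rfl⟩
  have e2 : |τ l (h <$> x t) - τ l (h <$> x u)| ≤ sSup (PhiSet τ x d t u) :=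
    le_csSup (phiSet_bdd hm) ⟨l, h, h1, h2, rfl⟩
  calc |τ l (h <$> x s) - τ l (h <$> x u)|
      ≤ |τ l (h <$> x s) - τ l (h <$> x t)| + |τ l (h <$> x t) - τ l (h <$> x u)| :=
        abs_sub_le _ _ _
    _ ≤ _ := add_le_add e1 e2

end PhiSet

/-- Finite-grid net: any family of `[0,1]`-valued functions over a finite index set
admits a finite set of representatives approximating every point of `S` in all
coordinates. -/
lemma cellnet {α ι : Type*} [Finite ι] (f : ι → α → ℝ) (S : Set α)
    (hb : ∀ a ∈ S, ∀ i, f i a ∈ Set.Icc (0:ℝ) 1) {ε : ℝ} (hε : 0 < ε) :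
    ∃ T : Set α, T ⊆ S ∧ T.Finite ∧ ∀ a ∈ S, ∃ b ∈ T, ∀ i, |f i a - f i b| ≤ ε := by
  classical
  set c : α → ι → ℤ := fun a i => ⌊f i a / ε⌋ with hc
  have hIfin : ((fun a => c a) '' S).Finite := by
    apply Set.Finite.subset
      (Set.Finite.pi (t := fun _ : ι => Set.Icc (0:ℤ) ⌈1/ε⌉) fun _ => Set.finite_Icc _ _)
    rintro σ ⟨a, ha, rfl⟩
    rw [Set.mem_pi]
    intro i _
    have hfa := hb a ha i
    constructor
    · exact Int.floor_nonneg.2 (div_nonneg hfa.1 hε.le)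
    · calc ⌊f i a / ε⌋ ≤ ⌊1 / ε⌋ := Int.floor_le_floor (by gcongr; exact hfa.2)
        _ ≤ ⌈1/ε⌉ := Int.floor_le_ceil _
  -- choose representatives of nonempty cells
  have hrep : ∀ σ ∈ (fun a => c a) '' S, ∃ a, a ∈ S ∧ c a = σ := fun σ h => h
  refine ⟨{b | ∃ σ, ∃ hσ : σ ∈ (fun a => c a) '' S, (hrep σ hσ).choose = b}, ?_, ?_, ?_⟩
  · rintro b ⟨σ, hσ, rfl⟩
    exact ((hrep σ hσ).choose_spec).1
  · exact Set.Finite.dependent_image hIfin (fun σ hσ => (hrep σ hσ).choose)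
  · intro a ha
    have hσ : c a ∈ (fun a => c a) '' S := ⟨a, ha, rfl⟩
    refine ⟨(hrep _ hσ).choose, ⟨c a, hσ, rfl⟩, ?_⟩
    set b := (hrep _ hσ).choose with hb
    obtain ⟨hbS, hcb⟩ := (hrep _ hσ).choose_spec
    intro i
    have hfloor : ⌊f i a / ε⌋ = ⌊f i b / ε⌋ := (congrFun hcb.symm i)
    have h1 := Int.floor_le (f i a / ε)
    have h2 := Int.lt_floor_add_one (f i a / ε)
    have h3 := Int.floor_le (f i b / ε)
    have h4 := Int.lt_floor_add_one (f i b / ε)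
    rw [← hfloor] at h3 h4
    have hdiv : |f i a / ε - f i b / ε| ≤ 1 := by
      rw [abs_le]; constructor <;> linarith
    have he : f i a - f i b = (f i a / ε - f i b / ε) * ε := by field_simp
    rw [show |f i a - f i b| = |f i a / ε - f i b / ε| * ε by
      rw [he, abs_mul, abs_of_pos hε]]
    calc |f i a / ε - f i b / ε| * ε ≤ 1 * ε := by
          exact mul_le_mul_of_nonneg_right hdiv hε.le
      _ = ε := one_mul _

end KMMAux
namespace KMMAux

section Topology

variable {B : Type → Type} [Functor B] {X Λ : Type} [TopologicalSpace X] [DiscreteTopology X]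
variable (τ : Λ → B ℝ → ℝ) (x : X → B X)

/-- Bundle a `[0,1]`-valued function on a discrete space as a bounded continuous function. -/
def bcf (h : X → ℝ) (hb : ∀ a, h a ∈ Set.Icc (0:ℝ) 1) : BoundedContinuousFunction X ℝ :=
  BoundedContinuousFunction.mkOfBound ⟨h, continuous_of_discreteTopology⟩ 1
    (fun a b => by
      rw [ContinuousMap.coe_mk, Real.dist_eq]
      exact abs_sub_le_one_of_Icc (hb a) (hb b))

@[simp] lemma bcf_coe (h : X → ℝ) (hb : ∀ a, h a ∈ Set.Icc (0:ℝ) 1) : ⇑(bcf h hb) = h := rfl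

/-- Nonexpansive `[0,1]`-valued functions w.r.t. a pseudometric `d`. -/
def NN (d : X → X → ℝ) : Set (BoundedContinuousFunction X ℝ) :=
  {g | (∀ a, g a ∈ Set.Icc (0:ℝ) 1) ∧ ∀ a b, |g a - g b| ≤ d a b}

def Psi (hm : ∀ l t, τ l t ∈ Set.Icc (0:ℝ) 1) (l : Λ) (g : BoundedContinuousFunction X ℝ) :
    BoundedContinuousFunction X ℝ :=
  bcf (fun u => τ l (⇑g <$> x u)) (fun u => hm l _)

@[simp] lemma Psi_coe (hm : ∀ l t, τ l t ∈ Set.Icc (0:ℝ) 1) (l : Λ)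
    (g : BoundedContinuousFunction X ℝ) (w : X) :
    (Psi τ x hm l g) w = τ l (⇑g <$> x w) := rfl

lemma net_NN (d : X → X → ℝ)
    (hTB : ∀ ε, 0 < ε → ∃ P : Set X, P.Finite ∧ ∀ u, ∃ p ∈ P, d u p ≤ ε)
    {δ : ℝ} (hδ : 0 < δ) :
    ∃ T : Set (BoundedContinuousFunction X ℝ), T ⊆ NN d ∧ T.Finite ∧
      ∀ g ∈ NN d, ∃ b ∈ T, dist g b < δ := by
  classical
  obtain ⟨P, hPfin, hPnet⟩ := hTB (δ/4) (by positivity)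
  haveI := hPfin.fintype
  obtain ⟨T, hTsub, hTfin, hTnet⟩ := cellnet (ι := ↥P)
    (fun p (g : BoundedContinuousFunction X ℝ) => g ↑p) (NN d)
    (fun g hg p => hg.1 _) (show 0 < δ/4 by positivity)
  refine ⟨T, hTsub, hTfin, fun g hg => ?_⟩
  obtain ⟨b, hbT, hball⟩ := hTnet g hg
  have hbN := hTsub hbT
  have key : ∀ u, dist (g u) (b u) ≤ 3*(δ/4) := by
    intro u
    obtain ⟨p, hp, hdp⟩ := hPnet u
    have e1 : |g u - g p| ≤ δ/4 := le_trans (hg.2 u p) hdp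
    have e2 : |b p - b u| ≤ δ/4 := by
      rw [abs_sub_comm]; exact le_trans (hbN.2 u p) hdp
    have e3 : |g p - b p| ≤ δ/4 := hball ⟨p, hp⟩
    rw [Real.dist_eq]
    calc |g u - b u| ≤ |g u - g p| + |g p - b u| := abs_sub_le _ _ _
      _ ≤ |g u - g p| + (|g p - b p| + |b p - b u|) := by
          have := abs_sub_le (g p) (b p) (b u); linarith
      _ ≤ 3*(δ/4) := by linarith
  refine ⟨b, hbT, ?_⟩
  have := (BoundedContinuousFunction.dist_le (by positivity : (0:ℝ) ≤ 3*(δ/4))).2 key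
  linarith

lemma tb_NN (d : X → X → ℝ)
    (hTB : ∀ ε, 0 < ε → ∃ P : Set X, P.Finite ∧ ∀ u, ∃ p ∈ P, d u p ≤ ε) :
    TotallyBounded (NN d) := by
  rw [Metric.totallyBounded_iff]
  intro ε hε
  obtain ⟨T, hTsub, hTfin, hTnet⟩ := net_NN d hTB hε
  refine ⟨T, hTfin, fun g hg => ?_⟩
  obtain ⟨b, hbT, hd⟩ := hTnet g hg
  exact Set.mem_biUnion hbT (Metric.mem_ball.2 hd)

lemma closed_NN (d : X → X → ℝ) : IsClosed (NN d) := by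
  have : NN d = (⋂ a, {g : BoundedContinuousFunction X ℝ | g a ∈ Set.Icc (0:ℝ) 1}) ∩
      ⋂ a, ⋂ b, {g : BoundedContinuousFunction X ℝ | |g a - g b| ≤ d a b} := by
    ext g
    constructor
    · rintro ⟨h1, h2⟩
      exact ⟨Set.mem_iInter.2 h1, Set.mem_iInter.2 fun a => Set.mem_iInter.2 fun b => h2 a b⟩
    · rintro ⟨h1, h2⟩
      exact ⟨fun a => Set.mem_iInter.1 h1 a,
        fun a b => Set.mem_iInter.1 (Set.mem_iInter.1 h2 a) b⟩
  rw [this]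
  refine IsClosed.inter (isClosed_iInter fun a => ?_)
    (isClosed_iInter fun a => isClosed_iInter fun b => ?_)
  · exact isClosed_Icc.preimage (continuous_eval_const a)
  · exact isClosed_Iic.preimage
      (((continuous_eval_const (F := BoundedContinuousFunction X ℝ) a).sub
        (continuous_eval_const (F := BoundedContinuousFunction X ℝ) b)).abs)

lemma psi_contOn (hm : ∀ l t, τ l t ∈ Set.Icc (0:ℝ) 1)
    (hc : ∀ l : Λ, ∀ (k : ℕ → X → ℝ) (g : X → ℝ),
      (∀ n a, k n a ∈ Set.Icc (0:ℝ) 1) → (∀ a, g a ∈ Set.Icc (0:ℝ) 1) →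
      TendstoUniformly k g Filter.atTop →
      TendstoUniformly (fun n z => τ l ((k n) <$> z)) (fun z => τ l (g <$> z)) Filter.atTop)
    (l : Λ) :
    ContinuousOn (Psi τ x hm l)
      {g : BoundedContinuousFunction X ℝ | ∀ a, g a ∈ Set.Icc (0:ℝ) 1} := by
  intro g hg
  show Filter.Tendsto (Psi τ x hm l) _ _
  rw [Filter.tendsto_iff_seq_tendsto]
  intro u hu
  rw [tendsto_nhdsWithin_iff] at hu
  obtain ⟨hu1, hu2⟩ := hu
  obtain ⟨N₀, hN₀⟩ := Filter.eventually_atTop.1 hu2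
  rw [← Filter.tendsto_add_atTop_iff_nat N₀]
  simp only [Function.comp]
  set k : ℕ → X → ℝ := fun n => ⇑(u (n + N₀)) with hk
  have hkm : ∀ n a, k n a ∈ Set.Icc (0:ℝ) 1 := fun n a => hN₀ (n + N₀) (Nat.le_add_left _ _) a
  have hTU : TendstoUniformly k (⇑g) Filter.atTop := by
    rw [Metric.tendstoUniformly_iff]
    intro η hη
    obtain ⟨N, hN⟩ := Metric.tendsto_atTop.1
      (hu1.comp (Filter.tendsto_add_atTop_nat N₀)) η hη
    refine Filter.eventually_atTop.2 ⟨N, fun n hn a => ?_⟩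
    calc dist (g a) (k n a) = dist (k n a) (g a) := dist_comm _ _
      _ ≤ dist (u (n+N₀)) g := BoundedContinuousFunction.dist_coe_le_dist a
      _ < η := hN n hn
  have hTU2 := hc l k (⇑g) hkm hg hTU
  rw [Metric.tendsto_atTop]
  intro η hη
  obtain ⟨N, hN⟩ := Filter.eventually_atTop.1 (Metric.tendstoUniformly_iff.1 hTU2 (η/2) (by positivity))
  refine ⟨N, fun n hn => ?_⟩
  have h5 : ∀ w, dist ((Psi τ x hm l (u (n+N₀))) w) ((Psi τ x hm l g) w) ≤ η/2 := by
    intro w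
    have := hN n hn (x w)
    rw [dist_comm]
    exact le_of_lt this
  have := (BoundedContinuousFunction.dist_le (by positivity : (0:ℝ) ≤ η/2)).2 h5
  linarith

lemma modulus [Finite Λ] (hm : ∀ l t, τ l t ∈ Set.Icc (0:ℝ) 1)
    (hc : ∀ l : Λ, ∀ (k : ℕ → X → ℝ) (g : X → ℝ),
      (∀ n a, k n a ∈ Set.Icc (0:ℝ) 1) → (∀ a, g a ∈ Set.Icc (0:ℝ) 1) →
      TendstoUniformly k g Filter.atTop →
      TendstoUniformly (fun n z => τ l ((k n) <$> z)) (fun z => τ l (g <$> z)) Filter.atTop)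
    (d : X → X → ℝ)
    (hTB : ∀ ε, 0 < ε → ∃ P : Set X, P.Finite ∧ ∀ u, ∃ p ∈ P, d u p ≤ ε)
    {ε : ℝ} (hε : 0 < ε) :
    ∃ δ, 0 < δ ∧ ∀ (l : Λ), ∀ g ∈ NN d, ∀ g' ∈ NN d, dist g g' < δ →
      ∀ w, |τ l (⇑g <$> x w) - τ l (⇑g' <$> x w)| ≤ ε := by
  have hcomp : IsCompact (NN (X := X) d) :=
    (tb_NN d hTB).isCompact_of_isClosed (closed_NN d)
  have hsub : NN d ⊆ {g : BoundedContinuousFunction X ℝ | ∀ a, g a ∈ Set.Icc (0:ℝ) 1} :=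
    fun g hg => hg.1
  have hδl : ∀ l : Λ, ∃ δ, 0 < δ ∧ ∀ g ∈ NN d, ∀ g' ∈ NN d, dist g g' < δ →
      ∀ w, |τ l (⇑g <$> x w) - τ l (⇑g' <$> x w)| ≤ ε := by
    intro l
    have huc := hcomp.uniformContinuousOn_of_continuous
      ((psi_contOn τ x hm hc l).mono hsub)
    obtain ⟨δ, hδ, hδ2⟩ := Metric.uniformContinuousOn_iff.1 huc ε hε
    refine ⟨δ, hδ, fun g hg g' hg' hdgg w => ?_⟩
    have h1 := hδ2 g hg g' hg' hdgg
    have h2 := BoundedContinuousFunction.dist_coe_le_dist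
      (f := Psi τ x hm l g) (g := Psi τ x hm l g') w
    rw [Real.dist_eq] at h2
    simp only [Psi_coe] at h2
    linarith
  choose δf hδf1 hδf2 using hδl
  rcases isEmpty_or_nonempty Λ with hΛ | hΛ
  · exact ⟨1, one_pos, fun l => (hΛ.false l).elim⟩
  · haveI := Fintype.ofFinite Λ
    refine ⟨Finset.univ.inf' Finset.univ_nonempty δf, ?_, ?_⟩
    · rw [Finset.lt_inf'_iff]
      exact fun l _ => hδf1 l
    · intro l g hg g' hg' hd
      exact hδf2 l g hg g' hg' (lt_of_lt_of_le hd (Finset.inf'_le _ (Finset.mem_univ l)))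

end Topology

end KMMAux
namespace KMMAux

lemma abs_approx2 {a b a' b' m e : ℝ} (h1 : |a - a'| ≤ e) (h2 : |b - b'| ≤ e)
    (h3 : |a' - b'| ≤ m) : |a - b| ≤ m + 2*e := by
  have u1 := abs_sub_le a a' b
  have u2 := abs_sub_le a' b' b
  rw [abs_sub_comm b' b] at u2
  linarith

/-- Total boundedness of a raw pseudometric. -/
def TBP {X : Type} (d : X → X → ℝ) : Prop :=
  ∀ ε, 0 < ε → ∃ P : Set X, P.Finite ∧ ∀ u, ∃ p ∈ P, d u p ≤ ε

/-- Every `[0,1]`-valued function nonexpansive w.r.t. `d` is uniformly approximable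
by interpretations of formulas. -/
def APX {B : Type → Type} [Functor B] {X Λ : Type} (τ : Λ → B ℝ → ℝ) (x : X → B X)
    (d : X → X → ℝ) : Prop :=
  ∀ ε, 0 < ε → ∀ h : X → ℝ, (∀ a, h a ∈ Set.Icc (0:ℝ) 1) → (∀ a b, |h a - h b| ≤ d a b) →
    ∃ φ, KMMInterp B τ x φ ∧ ∀ u, |φ u - h u| ≤ ε

section Steps

variable {B : Type → Type} [Functor B] {X Λ : Type} [TopologicalSpace X] [DiscreteTopology X]
variable (τ : Λ → B ℝ → ℝ) (x : X → B X)

lemma step_TBP [Finite Λ] (hm : ∀ l t, τ l t ∈ Set.Icc (0:ℝ) 1)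
    (hc : ∀ l : Λ, ∀ (k : ℕ → X → ℝ) (g : X → ℝ),
      (∀ n a, k n a ∈ Set.Icc (0:ℝ) 1) → (∀ a, g a ∈ Set.Icc (0:ℝ) 1) →
      TendstoUniformly k g Filter.atTop →
      TendstoUniformly (fun n z => τ l ((k n) <$> z)) (fun z => τ l (g <$> z)) Filter.atTop)
    (d : X → X → ℝ) (hTB : TBP d) :
    TBP (fun s t => sSup (PhiSet τ x d s t)) := by
  classical
  intro ε hε
  obtain ⟨δ, hδ, hmod⟩ := modulus τ x hm hc d hTB (show 0 < ε/3 by positivity)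
  obtain ⟨T, hTsub, hTfin, hTnet⟩ := net_NN d hTB hδ
  haveI := hTfin.fintype
  haveI := Fintype.ofFinite Λ
  obtain ⟨P, -, hPfin, hPnet⟩ := cellnet
    (fun (i : Λ × ↥T) (a : X) => τ i.1 (⇑(i.2 : BoundedContinuousFunction X ℝ) <$> x a))
    Set.univ (fun a _ i => hm _ _) (show 0 < ε/3 by positivity)
  refine ⟨P, hPfin, fun u => ?_⟩
  obtain ⟨p, hp, hcell⟩ := hPnet u (Set.mem_univ u)
  refine ⟨p, hp, Real.sSup_le ?_ hε.le⟩
  rintro v ⟨l, g0, hg01, hgne, rfl⟩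
  have hN : bcf g0 hg01 ∈ NN d := ⟨hg01, hgne⟩
  obtain ⟨b, hbT, hdb⟩ := hTnet _ hN
  have h1 := hmod l _ hN b (hTsub hbT) hdb
  have e1 := h1 u; have e2 := h1 p
  rw [bcf_coe] at e1 e2
  have h2 := hcell (l, ⟨b, hbT⟩)
  have := abs_approx2 e1 e2 h2
  linarith

lemma step_APX [Finite Λ] (hm : ∀ l t, τ l t ∈ Set.Icc (0:ℝ) 1)
    (hc : ∀ l : Λ, ∀ (k : ℕ → X → ℝ) (g : X → ℝ),
      (∀ n a, k n a ∈ Set.Icc (0:ℝ) 1) → (∀ a, g a ∈ Set.Icc (0:ℝ) 1) →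
      TendstoUniformly k g Filter.atTop →
      TendstoUniformly (fun n z => τ l ((k n) <$> z)) (fun z => τ l (g <$> z)) Filter.atTop)
    (d : X → X → ℝ) (hTB : TBP d) (hA : APX τ x d) :
    APX τ x (fun s t => sSup (PhiSet τ x d s t)) := by
  classical
  intro ε hε h h01 hne
  rcases isEmpty_or_nonempty X with hX | hX
  · exact ⟨_, KMMInterp.one, fun u => (hX.false u).elim⟩
  haveI := Fintype.ofFinite Λ
  set ε₀ := ε/8 with hε₀def
  have hε₀ : 0 < ε₀ := by positivity
  obtain ⟨δ, hδ, hmod⟩ := modulus τ x hm hc d hTB hε₀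
  obtain ⟨T, hTsub, hTfin, hTnet⟩ := net_NN d hTB hδ
  haveI := hTfin.fintype
  -- formulas approximating members of T under all modalities
  have hψex : ∀ g : ↥T, ∃ f : X → ℝ, KMMInterp B τ x f ∧
      ∀ (l : Λ) (w : X),
        |τ l (f <$> x w) - τ l (⇑(g : BoundedContinuousFunction X ℝ) <$> x w)| ≤ ε₀ := by
    rintro ⟨g, hgT⟩
    have hgN := hTsub hgT
    have hseq : ∀ n : ℕ, ∃ f : X → ℝ, KMMInterp B τ x f ∧ ∀ u, |f u - g u| ≤ 1/(n+1) :=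
      fun n => hA (1/(n+1)) (by positivity) (⇑g) hgN.1 hgN.2
    choose k hk1 hk2 using hseq
    have hTU : TendstoUniformly k (⇑g) Filter.atTop := by
      rw [Metric.tendstoUniformly_iff]
      intro η hη
      obtain ⟨N, hN⟩ := exists_nat_one_div_lt hη
      refine Filter.eventually_atTop.2 ⟨N, fun n hn a => ?_⟩
      have h1 : (1:ℝ)/(n+1) ≤ 1/(N+1) := by
        apply one_div_le_one_div_of_le (by positivity)
        exact_mod_cast by exact_mod_cast add_le_add_left (Nat.cast_le.2 hn) 1
      calc dist (g a) (k n a) = |k n a - g a| := by rw [dist_comm, Real.dist_eq]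
        _ ≤ 1/(n+1) := hk2 n a
        _ ≤ 1/(N+1) := h1
        _ < η := hN
    have hall : ∀ᶠ n in Filter.atTop, ∀ l : Λ, ∀ z,
        dist (τ l (⇑g <$> z)) (τ l (k n <$> z)) < ε₀ := by
      rw [Filter.eventually_all]
      intro l
      exact Metric.tendstoUniformly_iff.1
        (hc l k (⇑g) (fun n => kmm_mem01 hm (hk1 n)) hgN.1 hTU) ε₀ hε₀
    obtain ⟨n, hn⟩ := hall.exists
    refine ⟨k n, hk1 n, fun l w => ?_⟩
    have := hn l (x w)
    rw [Real.dist_eq] at this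
    rw [abs_sub_comm]
    exact this.le
  choose ψ hψ1 hψ2 using hψex
  -- the finite modal family
  set LI : List (Λ × ↥T) := (Finset.univ : Finset (Λ × ↥T)).toList with hLI
  set mf : Λ × ↥T → X → ℝ := fun i w => τ i.1 ((ψ i.2) <$> x w) with hmf
  have hmf01 : ∀ i w, mf i w ∈ Set.Icc (0:ℝ) 1 := fun i w => hm _ _
  have hmfk : ∀ i, KMMInterp B τ x (mf i) := fun i => KMMInterp.mod i.1 (hψ1 i.2)
  set DD : X → X → ℝ := fun s t => (LI.map (fun i => |mf i s - mf i t|)).foldr max 0 with hDD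
  have hDDnonneg : ∀ s t, 0 ≤ DD s t := fun s t => foldmax_nonneg _
  have hmemLI : ∀ i : Λ × ↥T, i ∈ LI := fun i => Finset.mem_toList.2 (Finset.mem_univ i)
  have hmfDD : ∀ i s t, |mf i s - mf i t| ≤ DD s t := fun i s t =>
    le_foldmax (List.mem_map.2 ⟨i, hmemLI i, rfl⟩)
  -- KC1 : the new distance is almost dominated by DD
  have KC1 : ∀ s t, sSup (PhiSet τ x d s t) ≤ DD s t + 4*ε₀ := by
    intro s t
    refine Real.sSup_le ?_ (by have := hDDnonneg s t; positivity)
    rintro v ⟨l, g0, hg01, hgne, rfl⟩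
    have hN : bcf g0 hg01 ∈ NN d := ⟨hg01, hgne⟩
    obtain ⟨b, hbT, hdb⟩ := hTnet _ hN
    have h1 := hmod l _ hN b (hTsub hbT) hdb
    have e1 := h1 s; have e2 := h1 t
    rw [bcf_coe] at e1 e2
    have f1 : |τ l (⇑b <$> x s) - mf (l, ⟨b, hbT⟩) s| ≤ ε₀ := by
      rw [abs_sub_comm]; exact hψ2 ⟨b, hbT⟩ l s
    have f2 : |τ l (⇑b <$> x t) - mf (l, ⟨b, hbT⟩) t| ≤ ε₀ := by
      rw [abs_sub_comm]; exact hψ2 ⟨b, hbT⟩ l t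
    have s1 : |τ l (g0 <$> x s) - mf (l, ⟨b, hbT⟩) s| ≤ 2*ε₀ := by
      have u := abs_sub_le (τ l (g0 <$> x s)) (τ l (⇑b <$> x s)) (mf (l, ⟨b, hbT⟩) s)
      linarith
    have s2 : |τ l (g0 <$> x t) - mf (l, ⟨b, hbT⟩) t| ≤ 2*ε₀ := by
      have u := abs_sub_le (τ l (g0 <$> x t)) (τ l (⇑b <$> x t)) (mf (l, ⟨b, hbT⟩) t)
      linarith
    have := abs_approx2 s1 s2 (hmfDD (l, ⟨b, hbT⟩) s t)
    linarith
  -- net of X for the finite family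
  obtain ⟨P, -, hPfin, hPnet⟩ := cellnet mf Set.univ (fun a _ i => hmf01 i a) hε₀
  -- rational constants
  choose qp hqp1 hqp2 using fun p : X => ratnear (h01 p) hε₀
  choose rp hrp1 hrp2 using fun (i : Λ × ↥T) (p : X) => ratnear (hmf01 i p) hε₀
  set Δ : X → X → ℝ := fun p w => (LI.map (fun i => |mf i w - (rp i p : ℝ)|)).foldr max 0 with hΔ
  have hΔk : ∀ p, KMMInterp B τ x (fun w => Δ p w) := fun p =>
    kmm_foldmax LI (fun i w => |mf i w - (rp i p : ℝ)|)
      (fun i _ => kmm_absdiff (hmfk i) _ (hrp1 i p))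
  have hΔle : ∀ p w, Δ p w ≤ DD w p + ε₀ := by
    intro p w
    refine foldmax_le (add_nonneg (hDDnonneg w p) hε₀.le) ?_
    intro a ha; obtain ⟨i, hi, rfl⟩ := List.mem_map.1 ha
    have u := abs_sub_le (mf i w) (mf i p) (rp i p : ℝ)
    have v : |mf i p - (rp i p:ℝ)| ≤ ε₀ := by rw [abs_sub_comm]; exact hrp2 i p
    have := hmfDD i w p
    linarith
  have hΔge : ∀ p w, DD w p ≤ Δ p w + ε₀ := by
    intro p w
    refine foldmax_le (add_nonneg (foldmax_nonneg _) hε₀.le) ?_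
    intro a ha; obtain ⟨i, hi, rfl⟩ := List.mem_map.1 ha
    have u := abs_sub_le (mf i w) (rp i p : ℝ) (mf i p)
    have mem : |mf i w - (rp i p:ℝ)| ≤ Δ p w := le_foldmax (List.mem_map.2 ⟨i, hi, rfl⟩)
    linarith [hrp2 i p]
  -- the approximating formula
  set inn : X → X → ℝ := fun p w => max ((qp p:ℝ) - Δ p w) 0 with hinn
  have hinnk : ∀ p, KMMInterp B τ x (inn p) := by
    intro p
    have h1q : ((1 - qp p : ℚ):ℝ) ∈ Set.Icc (0:ℝ) 1 := by
      obtain ⟨a, b⟩ := hqp1 p; push_cast; constructor <;> linarith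
    have := KMMInterp.trunc (1 - qp p) h1q (KMMInterp.neg (hΔk p))
    refine kmm_congr this (fun w => ?_)
    show ((1 - Δ p w) - ((1 - qp p : ℚ):ℝ)) ⊔ 0 = ((qp p:ℝ) - Δ p w) ⊔ 0
    push_cast
    congr 1
    ring
  set PL : List X := hPfin.toFinset.toList with hPL
  set φ : X → ℝ := fun w => (PL.map (fun p => inn p w)).foldr max 0 with hφd
  have hφk : KMMInterp B τ x φ := kmm_foldmax PL inn (fun p _ => hinnk p)
  refine ⟨φ, hφk, fun w => ?_⟩
  -- upper bound
  have hup : φ w ≤ h w + 6*ε₀ := by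
    refine foldmax_le (by have := (h01 w).1; linarith) ?_
    intro a ha; obtain ⟨p, hp, rfl⟩ := List.mem_map.1 ha
    refine max_le ?_ (by have := (h01 w).1; linarith)
    have b1 : (qp p:ℝ) ≤ h p + ε₀ := by
      have := hqp2 p; rw [abs_le] at this; linarith [this.2]
    have b2 := hΔge p w
    have b3 := KC1 w p
    have b4 : h p - h w ≤ sSup (PhiSet τ x d w p) := by
      calc h p - h w ≤ |h p - h w| := le_abs_self _
        _ ≤ _ := hne p w
        _ = _ := sPhi_symm
    linarith
  -- lower bound
  obtain ⟨p, hpP, hpcell⟩ := hPnet w (Set.mem_univ w)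
  have hDDwp : DD w p ≤ ε₀ := by
    refine foldmax_le hε₀.le ?_
    intro a ha; obtain ⟨i, hi, rfl⟩ := List.mem_map.1 ha
    exact hpcell i
  have hpPL : p ∈ PL := Finset.mem_toList.2 (hPfin.mem_toFinset.2 hpP)
  have hlow : h w - 8*ε₀ ≤ φ w := by
    have m1 : inn p w ≤ φ w := le_foldmax (List.mem_map.2 ⟨p, hpPL, rfl⟩)
    have m2 : (qp p:ℝ) - Δ p w ≤ inn p w := le_max_left _ _
    have b1 : h p - ε₀ ≤ (qp p:ℝ) := by
      have := hqp2 p; rw [abs_le] at this; linarith [this.1]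
    have b2 := hΔle p w
    have b3 := KC1 w p
    have b4 : h w - h p ≤ sSup (PhiSet τ x d w p) := by
      calc h w - h p ≤ |h w - h p| := le_abs_self _
        _ ≤ _ := hne w p
    linarith
  rw [abs_le]
  constructor
  · have e8 : 8*ε₀ = ε := by rw [hε₀def]; ring
    linarith
  · have e6 : 6*ε₀ ≤ ε := by rw [hε₀def]; linarith
    linarith

end Steps

end KMMAux

/-- Expressivity of the König–Mika-Michalski logic: the greatest fixed
point `dα` of the Kantorovich predicate transformer equals the logical distance. -/
theorem stmt4
    (B : Type → Type) [Functor B] [LawfulFunctor B]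
    (X : Type) (Λ : Type) [Finite Λ] (τ : Λ → B ℝ → ℝ)
    (hτ_mem : ∀ l : Λ, ∀ t : B ℝ, τ l t ∈ Set.Icc (0:ℝ) 1)
    (hτ_conv : ∀ l : Λ, ∀ (k : ℕ → X → ℝ) (g : X → ℝ),
      (∀ n a, k n a ∈ Set.Icc (0:ℝ) 1) → (∀ a, g a ∈ Set.Icc (0:ℝ) 1) →
      TendstoUniformly k g Filter.atTop →
      TendstoUniformly (fun n z => τ l ((k n) <$> z)) (fun z => τ l (g <$> z)) Filter.atTop)
    (x : X → B X)
    (Φ : (X → X → ℝ) → (X → X → ℝ))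
    (hΦ : ∀ (d : X → X → ℝ) (s t : X), Φ d s t = sSup {v : ℝ | ∃ l : Λ, ∃ h : X → ℝ,
      (∀ a, h a ∈ Set.Icc (0:ℝ) 1) ∧ (∀ a b, |h a - h b| ≤ d a b) ∧
      v = |τ l (h <$> x s) - τ l (h <$> x t)|})
    (dα : X → X → ℝ)
    (hdα_refl : ∀ s, dα s s = 0)
    (hdα_symm : ∀ s t, dα s t = dα t s)
    (hdα_tri : ∀ s t u, dα s u ≤ dα s t + dα t u)
    (hdα_bdd : ∀ s t, dα s t ≤ 1)
    (hdα_fix : Φ dα = dα)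
    (hdα_greatest : ∀ d' : X → X → ℝ,
      (∀ s, d' s s = 0) → (∀ s t, d' s t = d' t s) → (∀ s t u, d' s u ≤ d' s t + d' t u) →
      (∀ s t, d' s t ≤ 1) → Φ d' = d' → ∀ s t, dα s t ≤ d' s t)
    (dseq : ℕ → X → X → ℝ)
    (hd0 : dseq 0 = fun _ _ => 0)
    (hdsucc : ∀ i : ℕ, dseq (i+1) = Φ (dseq i))
    (dω : X → X → ℝ)
    (hdω : ∀ s t, dω s t = ⨆ i : ℕ, dseq i s t)
    (hstab : Φ dω = dω) :
    ∀ s t : X, dα s t = sSup {v : ℝ | ∃ φ : X → ℝ, KMMInterp B τ x φ ∧ v = |φ s - φ t|} := by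
  classical
  letI : TopologicalSpace X := ⊥
  haveI : DiscreteTopology X := ⟨rfl⟩
  have hΦ' : ∀ (d : X → X → ℝ) (s t : X), Φ d s t = sSup (KMMAux.PhiSet τ x d s t) := hΦ
  have hdα_nonneg : ∀ s t, 0 ≤ dα s t := by
    intro s t
    have h1 := hdα_tri s t s
    rw [hdα_refl s, hdα_symm t s] at h1
    linarith
  -- pseudometric properties of the chain
  have dseq_refl : ∀ i s, dseq i s s = 0 := by
    intro i
    induction i with
    | zero => intro s; rw [hd0]
    | succ n ih => intro s; rw [hdsucc, hΦ']; exact KMMAux.sPhi_refl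
  have dseq_symm : ∀ i s t, dseq i s t = dseq i t s := by
    intro i
    induction i with
    | zero => intro s t; rw [hd0]
    | succ n ih => intro s t; rw [hdsucc, hΦ', hΦ']; exact KMMAux.sPhi_symm
  have dseq_le_one : ∀ i s t, dseq i s t ≤ 1 := by
    intro i
    induction i with
    | zero => intro s t; rw [hd0]; exact zero_le_one
    | succ n ih => intro s t; rw [hdsucc, hΦ']; exact KMMAux.sPhi_le_one hτ_mem
  have dseq_tri : ∀ i s t u, dseq i s u ≤ dseq i s t + dseq i t u := by
    intro i
    induction i with
    | zero => intro s t u; rw [hd0]; norm_num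
    | succ n ih =>
      intro s t u
      rw [hdsucc, hΦ', hΦ', hΦ']
      exact KMMAux.sPhi_tri hτ_mem
  have hbdd : ∀ s t, BddAbove (Set.range fun i => dseq i s t) := by
    intro s t
    exact ⟨1, by rintro v ⟨i, rfl⟩; exact dseq_le_one i s t⟩
  -- dω is a 1-bounded pseudometric
  have dω_refl : ∀ s, dω s s = 0 := by
    intro s
    rw [hdω]
    simp only [dseq_refl]
    exact ciSup_const
  have dω_symm : ∀ s t, dω s t = dω t s := by
    intro s t
    rw [hdω, hdω]
    congr 1
    funext i
    exact dseq_symm i s t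
  have dω_bdd : ∀ s t, dω s t ≤ 1 := by
    intro s t
    rw [hdω]
    exact ciSup_le fun i => dseq_le_one i s t
  have dω_tri : ∀ s t u, dω s u ≤ dω s t + dω t u := by
    intro s t u
    rw [hdω s u]
    refine ciSup_le fun i => ?_
    have h1 := dseq_tri i s t u
    have h2 : dseq i s t ≤ dω s t := by rw [hdω]; exact le_ciSup (hbdd s t) i
    have h3 : dseq i t u ≤ dω t u := by rw [hdω]; exact le_ciSup (hbdd t u) i
    linarith
  have hαω : ∀ s t, dα s t ≤ dω s t :=
    hdα_greatest dω dω_refl dω_symm dω_tri dω_bdd hstab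
  -- total boundedness and approximability along the chain
  have main : ∀ i, KMMAux.TBP (dseq i) ∧ KMMAux.APX τ x (dseq i) := by
    intro i
    induction i with
    | zero =>
      constructor
      · intro ε hε
        rcases isEmpty_or_nonempty X with hX | hX
        · exact ⟨∅, Set.finite_empty, fun u => (hX.false u).elim⟩
        · obtain ⟨a⟩ := hX
          exact ⟨{a}, Set.finite_singleton a, fun u => ⟨a, rfl, by rw [hd0]; exact hε.le⟩⟩
      · intro ε hε h h01 hne
        rcases isEmpty_or_nonempty X with hX | hX
        · exact ⟨_, KMMInterp.one, fun u => (hX.false u).elim⟩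
        · obtain ⟨a⟩ := hX
          obtain ⟨q, hq1, hq2⟩ := KMMAux.ratnear (h01 a) hε
          refine ⟨_, KMMAux.kmm_const q hq1, fun u => ?_⟩
          have hua : h u = h a := by
            have h2 := hne u a
            rw [hd0] at h2
            have h3 : |h u - h a| = 0 := le_antisymm h2 (abs_nonneg _)
            have := abs_eq_zero.1 h3
            linarith [sub_eq_zero.1 this]
          rw [hua]
          exact hq2
    | succ n ih =>
      have e : dseq (n+1) = fun s t => sSup (KMMAux.PhiSet τ x (dseq n) s t) := by
        rw [hdsucc]; funext s t; exact hΦ' _ s t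
      rw [e]
      exact ⟨KMMAux.step_TBP τ x hτ_mem hτ_conv (dseq n) ih.1,
        KMMAux.step_APX τ x hτ_mem hτ_conv (dseq n) ih.1 ih.2⟩
  intro s t
  set SL : Set ℝ := {v : ℝ | ∃ φ : X → ℝ, KMMInterp B τ x φ ∧ v = |φ s - φ t|} with hSL
  have hSL_nonneg : ∀ v ∈ SL, 0 ≤ v := by rintro v ⟨φ, -, rfl⟩; exact abs_nonneg _
  have hSL_bdd : BddAbove SL := by
    refine ⟨1, ?_⟩
    rintro v ⟨φ, hφ, rfl⟩
    exact KMMAux.abs_sub_le_one_of_Icc (KMMAux.kmm_mem01 hτ_mem hφ s)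
      (KMMAux.kmm_mem01 hτ_mem hφ t)
  refine le_antisymm ?_ ?_
  · -- dα ≤ logical distance
    have hseq_le : ∀ i, dseq i s t ≤ sSup SL := by
      intro i
      cases i with
      | zero => rw [hd0]; exact Real.sSup_nonneg hSL_nonneg
      | succ n =>
        rw [hdsucc, hΦ']
        refine Real.sSup_le ?_ (Real.sSup_nonneg hSL_nonneg)
        rintro v ⟨l, g0, hg01, hgne, rfl⟩
        have hA := (main n).2
        have hseq : ∀ m : ℕ, ∃ f : X → ℝ, KMMInterp B τ x f ∧ ∀ u, |f u - g0 u| ≤ 1/(m+1) :=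
          fun m => hA (1/(m+1)) (by positivity) g0 hg01 hgne
        choose k hk1 hk2 using hseq
        have hTU : TendstoUniformly k g0 Filter.atTop := by
          rw [Metric.tendstoUniformly_iff]
          intro η hη
          obtain ⟨N, hN⟩ := exists_nat_one_div_lt hη
          refine Filter.eventually_atTop.2 ⟨N, fun m hm a => ?_⟩
          have h1 : (1:ℝ)/(m+1) ≤ 1/(N+1) := by
            apply one_div_le_one_div_of_le (by positivity)
            exact_mod_cast add_le_add_left (Nat.cast_le.2 hm) 1
          calc dist (g0 a) (k m a) = |k m a - g0 a| := by rw [dist_comm, Real.dist_eq]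
            _ ≤ 1/(m+1) := hk2 m a
            _ ≤ 1/(N+1) := h1
            _ < η := hN
        refine le_of_forall_pos_le_add fun η hη => ?_
        have hTU2 := hτ_conv l k g0 (fun m => KMMAux.kmm_mem01 hτ_mem (hk1 m)) hg01 hTU
        obtain ⟨m, hm2⟩ := (Metric.tendstoUniformly_iff.1 hTU2 (η/2) (by positivity)).exists
        have e1 : |τ l (g0 <$> x s) - τ l (k m <$> x s)| ≤ η/2 := by
          have := hm2 (x s); rw [Real.dist_eq] at this; exact this.le
        have e2 : |τ l (g0 <$> x t) - τ l (k m <$> x t)| ≤ η/2 := by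
          have := hm2 (x t); rw [Real.dist_eq] at this; exact this.le
        have mem : |τ l (k m <$> x s) - τ l (k m <$> x t)| ≤ sSup SL :=
          le_csSup hSL_bdd ⟨_, KMMInterp.mod l (hk1 m), rfl⟩
        have := KMMAux.abs_approx2 e1 e2 mem
        linarith
    calc dα s t ≤ dω s t := hαω s t
      _ ≤ sSup SL := by rw [hdω]; exact ciSup_le hseq_le
  · -- logical distance ≤ dα
    refine Real.sSup_le ?_ (hdα_nonneg s t)
    rintro v ⟨φ, hφ, rfl⟩
    have hkne : ∀ {f : X → ℝ}, KMMInterp B τ x f → ∀ a b, |f a - f b| ≤ dα a b := by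
      intro f hf
      induction hf with
      | one => intro a b; simpa using hdα_nonneg a b
      | min hf hg ihf ihg =>
        intro a b
        dsimp only
        exact le_trans (abs_min_sub_min_le_max _ _ _ _) (max_le (ihf a b) (ihg a b))
      | neg hf ih =>
        intro a b
        dsimp only
        rw [sub_sub_sub_cancel_left, hdα_symm a b]
        exact ih b a
      | trunc q hq hf ih =>
        intro a b
        dsimp only
        refine le_trans (abs_max_sub_max_le_abs _ _ _) ?_
        rw [sub_sub_sub_cancel_right]
        exact ih a b
      | mod l hf ih =>
        intro a b
        have hfix : dα a b = sSup (KMMAux.PhiSet τ x dα a b) := by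
          have h0 := hΦ' dα a b
          rw [hdα_fix] at h0
          exact h0
        rw [hfix]
        exact le_csSup (KMMAux.phiSet_bdd hτ_mem)
          ⟨l, _, KMMAux.kmm_mem01 hτ_mem hf, ih, rfl⟩
    exact hkne hφ s t
end

section
/- Let X be a measurable space, A a type, R an equivalence relation on X, and let (μ_a)_{a∈A} and (ν_a)_{a∈A} be two families of subprobability measures on X (finite measures with total mass at most 1). Then the following are equivalent: (1) for every a ∈ A, every measurable function k : X → Bool that is R-invariant (R x y implies k x = k y), and every rational r ∈ [0,1], one has μ_a(k⁻¹{true}) > r if and only if ν_a(k⁻¹{true}) > r; (2) for every a ∈ A and every measurable R-closed set S ⊆ X, μ_a(S) = ν_a(S). -/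
open MeasureTheory ENNReal

lemma ennreal_eq_of_rat_lt {p q : ℝ≥0∞} (hp : p ≤ 1) (hq : q ≤ 1)
    (h : ∀ r : ℚ, 0 ≤ r → r ≤ 1 → (ENNReal.ofReal (r:ℝ) < p ↔ ENNReal.ofReal (r:ℝ) < q)) :
    p = q := by
  by_contra hne
  rcases lt_or_gt_of_ne hne with hlt | hlt
  · obtain ⟨r, hr0, hpr, hrq⟩ := ENNReal.lt_iff_exists_rat_btwn.mp hlt
    have hr1 : r ≤ 1 := by
      have : ENNReal.ofReal (r:ℝ) < 1 := lt_of_lt_of_le hrq hq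
      have := ENNReal.ofReal_lt_one.mp this
      exact_mod_cast this.le
    exact absurd ((h r hr0 hr1).mpr hrq) (not_lt.mpr hpr.le)
  · obtain ⟨r, hr0, hqr, hrp⟩ := ENNReal.lt_iff_exists_rat_btwn.mp hlt
    have hr1 : r ≤ 1 := by
      have : ENNReal.ofReal (r:ℝ) < 1 := lt_of_lt_of_le hrp hp
      have := ENNReal.ofReal_lt_one.mp this
      exact_mod_cast this.le
    exact absurd ((h r hr0 hr1).mp hrp) (not_lt.mpr hqr.le)

/-- The codensity lifting via threshold modalities coincides with the
standard relation lifting used for probabilistic bisimulation. -/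
theorem stmt5 {X : Type*} [MeasurableSpace X] {A : Type*}
    (R : X → X → Prop) (hR : Equivalence R)
    (μ ν : A → Measure X)
    (hμ : ∀ a, μ a Set.univ ≤ 1) (hν : ∀ a, ν a Set.univ ≤ 1) :
    (∀ a : A, ∀ k : X → Bool, Measurable k → (∀ x y, R x y → k x = k y) →
      ∀ r : ℚ, 0 ≤ r → r ≤ 1 →
        (ENNReal.ofReal (r:ℝ) < μ a (k ⁻¹' {true}) ↔
         ENNReal.ofReal (r:ℝ) < ν a (k ⁻¹' {true})))
    ↔
    (∀ a : A, ∀ S : Set X, MeasurableSet S → (∀ x ∈ S, ∀ y, R x y → y ∈ S) →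
      μ a S = ν a S) := by
  constructor
  · intro h a S hS hclosed
    classical
    set k : X → Bool := fun x => decide (x ∈ S) with hk
    have hkm : Measurable k := by
      apply measurable_to_bool
      simp only [hk]
      have : (fun x => decide (x ∈ S)) ⁻¹' {true} = S := by
        ext x; simp
      rw [this]; exact hS
    have hinv : ∀ x y, R x y → k x = k y := by
      intro x y hxy
      simp only [hk, decide_eq_decide]
      exact ⟨fun hx => hclosed x hx y hxy, fun hy => hclosed y hy x (hR.symm hxy)⟩
    have hpre : k ⁻¹' {true} = S := by ext x; simp [hk]
    have hμS : μ a S ≤ 1 := le_trans (measure_mono (Set.subset_univ S)) (hμ a)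
    have hνS : ν a S ≤ 1 := le_trans (measure_mono (Set.subset_univ S)) (hν a)
    refine ennreal_eq_of_rat_lt hμS hνS ?_
    intro r hr0 hr1
    have := h a k hkm hinv r hr0 hr1
    rwa [hpre] at this
  · intro h a k hkm hinv r _ _
    have hS : MeasurableSet (k ⁻¹' {true}) := hkm (by simp)
    have hclosed : ∀ x ∈ k ⁻¹' {true}, ∀ y, R x y → y ∈ k ⁻¹' {true} := by
      intro x hx y hxy
      simp only [Set.mem_preimage, Set.mem_singleton_iff] at *
      rw [← hinv x y hxy]; exact hx
    rw [h a _ hS hclosed]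
end

section
/- Let X be a standard Borel space and let S be a countable set of measurable functions X → Bool that contains the constant function true and is closed under pointwise conjunction. Let h : X → Bool be a measurable function such that for all x,y ∈ X, if k(x) = k(y) for every k ∈ S, then h(x) = h(y). Then for any two finite measures μ and ν on X satisfying μ(k⁻¹{true}) = ν(k⁻¹{true}) for every k ∈ S, one has μ(h⁻¹{true}) = ν(h⁻¹{true}). -/
open MeasureTheory

/-- On a standard Borel space, a countable family of measurable boolean
tests containing `true` and closed under conjunction is an approximating family:
any measurable test invariant under the induced equivalence gives no information
about finite measures beyond the tests themselves. -/
theorem stmt6 {X : Type*} [MeasurableSpace X] [StandardBorelSpace X]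
    (S : Set (X → Bool)) (hS_count : S.Countable)
    (hS_meas : ∀ k ∈ S, Measurable k)
    (hS_true : (fun _ => true) ∈ S)
    (hS_and : ∀ k ∈ S, ∀ l ∈ S, (fun x => k x && l x) ∈ S)
    (h : X → Bool) (hh : Measurable h)
    (hinv : ∀ x y : X, (∀ k ∈ S, k x = k y) → h x = h y)
    (μ ν : Measure X) [IsFiniteMeasure μ] [IsFiniteMeasure ν]
    (heq : ∀ k ∈ S, μ (k ⁻¹' {true}) = ν (k ⁻¹' {true})) :
    μ (h ⁻¹' {true}) = ν (h ⁻¹' {true}) := by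
  obtain ⟨e, hSe⟩ := hS_count.exists_eq_range ⟨_, hS_true⟩
  have he : ∀ n, e n ∈ S := fun n => hSe ▸ Set.mem_range_self n
  set φ : X → (ℕ → Bool) := fun x n => e n x with hφdef
  have hφ : Measurable φ := measurable_pi_lambda _ fun n => hS_meas _ (he n)
  have hφeq : ∀ x y, φ x = φ y → h x = h y := by
    intro x y hxy
    apply hinv
    intro k hk
    rw [hSe] at hk
    obtain ⟨n, rfl⟩ := hk
    exact congrFun hxy n
  have hA : AnalyticSet (φ '' (h ⁻¹' {true})) :=
    (hh (measurableSet_singleton true)).analyticSet_image hφ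
  have hB : AnalyticSet (φ '' (h ⁻¹' {false})) :=
    (hh (measurableSet_singleton false)).analyticSet_image hφ
  have hdisj : Disjoint (φ '' (h ⁻¹' {true})) (φ '' (h ⁻¹' {false})) := by
    rw [Set.disjoint_left]
    rintro _ ⟨x, hx, rfl⟩ ⟨y, hy, hxy⟩
    have := hφeq y x hxy
    simp only [Set.mem_preimage, Set.mem_singleton_iff] at hx hy
    rw [hx, hy] at this
    exact Bool.false_ne_true this
  obtain ⟨u, hAu, hdu, hmu⟩ := hA.measurablySeparable hB hdisj
  have hcover : h ⁻¹' {true} = φ ⁻¹' u := by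
    ext x
    constructor
    · intro hx
      exact hAu ⟨x, hx, rfl⟩
    · intro hx
      simp only [Set.mem_preimage, Set.mem_singleton_iff]
      by_contra hx'
      have hxf : x ∈ h ⁻¹' {false} := by
        simp only [Set.mem_preimage, Set.mem_singleton_iff]
        cases hb : h x
        · rfl
        · exact absurd hb hx'
      exact Set.disjoint_left.1 hdu ⟨x, hxf, rfl⟩ hx
  set 𝒞 : Set (Set X) := (fun k : X → Bool => k ⁻¹' {true}) '' S with h𝒞
  have hpi : IsPiSystem 𝒞 := by
    rintro _ ⟨k, hk, rfl⟩ _ ⟨l, hl, rfl⟩ -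
    refine ⟨fun x => k x && l x, hS_and k hk l hl, ?_⟩
    ext x
    simp [Bool.and_eq_true]
  have hm₀le : MeasurableSpace.generateFrom 𝒞 ≤ ‹MeasurableSpace X› := by
    apply MeasurableSpace.generateFrom_le
    rintro _ ⟨k, hk, rfl⟩
    exact hS_meas k hk (measurableSet_singleton true)
  have hgen : ∀ n, MeasurableSet[MeasurableSpace.generateFrom 𝒞] ((e n) ⁻¹' {true}) :=
    fun n => MeasurableSpace.measurableSet_generateFrom (Set.mem_image_of_mem _ (he n))
  have hen : ∀ n, @Measurable X Bool (MeasurableSpace.generateFrom 𝒞) _ (e n) := by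
    intro n
    apply @measurable_to_countable' Bool X _ _ (MeasurableSpace.generateFrom 𝒞)
    intro b
    cases b
    · have hfe : (e n) ⁻¹' {false} = ((e n) ⁻¹' {true})ᶜ := by
        ext x
        simp only [Set.mem_preimage, Set.mem_singleton_iff, Set.mem_compl_iff]
        cases h : e n x <;> simp
      rw [hfe]
      exact (hgen n).compl
    · exact hgen n
  have hφm₀ : @Measurable X (ℕ → Bool) (MeasurableSpace.generateFrom 𝒞) _ φ :=
    @measurable_pi_lambda X ℕ (fun _ => Bool) (MeasurableSpace.generateFrom 𝒞) _ φ hen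
  have hum₀ : MeasurableSet[MeasurableSpace.generateFrom 𝒞] (φ ⁻¹' u) := hφm₀ hmu
  have huniv : μ Set.univ = ν Set.univ := by
    have htt : (fun _ : X => true) ⁻¹' ({true} : Set Bool) = Set.univ := by
      ext x; simp
    have := heq _ hS_true
    rwa [htt] at this
  have key : ∀ t, MeasurableSet[MeasurableSpace.generateFrom 𝒞] t → μ t = ν t := by
    refine MeasurableSpace.induction_on_inter (m := MeasurableSpace.generateFrom 𝒞)
      (C := fun t _ => μ t = ν t) (s := 𝒞) rfl hpi (by simp) ?_ ?_ ?_
    · rintro _ ⟨k, hk, rfl⟩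
      exact heq k hk
    · intro t htm ht
      have h1 : MeasurableSet t := hm₀le _ htm
      rw [measure_compl h1 (measure_ne_top μ t), measure_compl h1 (measure_ne_top ν t),
        huniv, ht]
    · intro f hd hm hC
      rw [measure_iUnion hd (fun i => hm₀le _ (hm i)),
        measure_iUnion hd (fun i => hm₀le _ (hm i))]
      exact tsum_congr hC
  rw [hcover]
  exact key _ hum₀
end

section
/- Let A be a countable type, X a standard Borel space, and x a labelled Markov process on X with labels A: for each a ∈ A and s ∈ X, x(s)(a) is a subprobability measure on X, and for each a the map s ↦ x(s)(a) is a measurable map into the space of measures. Define the monotone map Φ on the complete lattice of equivalence relations on X (ordered by inclusion) by: Φ(R) relates s and t iff for every a ∈ A and every measurable R-closed set S ⊆ X, x(s)(a)(S) = x(t)(a)(S). Probabilistic bisimilarity ∼ is the largest equivalence relation R with R ⊆ Φ(R). Let F be the smallest family of subsets of X that contains X itself, is closed under binary intersection, and contains {s ∈ X | x(s)(a)(S) > r} for every S ∈ F, a ∈ A, and rational r ∈ [0,1] (every member of F is measurable). Then for all s,t ∈ X: if s ∈ S ⟺ t ∈ S for every S ∈ F, then s ∼ t. -/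
open MeasureTheory

/-- Interpretations of the formulas of the probabilistic modal logic `PML∧` over a
labelled Markov process `x`: the smallest family of subsets of `X` containing `X`,
closed under binary intersection, and closed under the threshold modalities
`S ↦ {s | x s a S > r}` for labels `a` and rationals `r ∈ [0,1]`. -/
inductive PMLInterp {X : Type*} [MeasurableSpace X] {A : Type*}
    (x : X → A → Measure X) : Set X → Prop
  | univ : PMLInterp x Set.univ
  | inter : ∀ {S T : Set X}, PMLInterp x S → PMLInterp x T → PMLInterp x (S ∩ T)
  | modal : ∀ {S : Set X} (a : A) (r : ℚ), 0 ≤ r → r ≤ 1 → PMLInterp x S →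
      PMLInterp x {s : X | ENNReal.ofReal (r:ℝ) < x s a S}

/-- Formulas of `PML∧`. -/
inductive PMLF (A : Type*) : Type _ where
  | top : PMLF A
  | conj : PMLF A → PMLF A → PMLF A
  | modal : A → {q : ℚ // 0 ≤ q ∧ q ≤ 1} → PMLF A → PMLF A

namespace PMLF

variable {A : Type*}

/-- An encoding of formulas into `ℕ`, given encodings of the labels and rationals. -/
def enc (fA : A → ℕ) (fQ : {q : ℚ // 0 ≤ q ∧ q ≤ 1} → ℕ) : PMLF A → ℕ
  | .top => 0
  | .conj f g => 3 * Nat.pair (enc fA fQ f) (enc fA fQ g) + 1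
  | .modal a r f => 3 * Nat.pair (fA a) (Nat.pair (fQ r) (enc fA fQ f)) + 2

lemma enc_injective {fA : A → ℕ} {fQ : {q : ℚ // 0 ≤ q ∧ q ≤ 1} → ℕ}
    (hA : Function.Injective fA) (hQ : Function.Injective fQ) :
    Function.Injective (enc fA fQ) := by
  intro f
  induction f with
  | top =>
    intro g h; cases g with
    | top => rfl
    | conj g1 g2 => simp [enc] at h
    | modal a r g => simp [enc] at h
  | conj f1 f2 ih1 ih2 =>
    intro g h; cases g with
    | top => simp [enc] at h
    | conj g1 g2 =>
      simp only [enc] at h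
      have h' : Nat.pair (enc fA fQ f1) (enc fA fQ f2)
          = Nat.pair (enc fA fQ g1) (enc fA fQ g2) := by omega
      obtain ⟨h1, h2⟩ := Nat.pair_eq_pair.mp h'
      rw [ih1 h1, ih2 h2]
    | modal a r g => simp only [enc] at h; omega
  | modal a r f ih =>
    intro g h; cases g with
    | top => simp [enc] at h
    | conj g1 g2 => simp only [enc] at h; omega
    | modal b q g =>
      simp only [enc] at h
      have h' : Nat.pair (fA a) (Nat.pair (fQ r) (enc fA fQ f))
          = Nat.pair (fA b) (Nat.pair (fQ q) (enc fA fQ g)) := by omega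
      obtain ⟨ha, h''⟩ := Nat.pair_eq_pair.mp h'
      obtain ⟨hr, hf⟩ := Nat.pair_eq_pair.mp h''
      rw [hA ha, hQ hr, ih hf]

instance countable [Countable A] : Countable (PMLF A) := by
  obtain ⟨fA, hfA⟩ := exists_injective_nat A
  obtain ⟨fQ, hfQ⟩ := exists_injective_nat {q : ℚ // 0 ≤ q ∧ q ≤ 1}
  exact countable_iff_exists_injective _ |>.mpr ⟨_, enc_injective hfA hfQ⟩

/-- Interpretation of a formula as a subset of the state space. -/
def interp {X : Type*} [MeasurableSpace X] (x : X → A → Measure X) : PMLF A → Set X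
  | .top => Set.univ
  | .conj f g => interp x f ∩ interp x g
  | .modal a r f => {s : X | ENNReal.ofReal ((r : ℚ) : ℝ) < x s a (interp x f)}

lemma interp_mem {X : Type*} [MeasurableSpace X] (x : X → A → Measure X) :
    ∀ f : PMLF A, PMLInterp x (interp x f)
  | .top => PMLInterp.univ
  | .conj f g => PMLInterp.inter (interp_mem x f) (interp_mem x g)
  | .modal a r f => PMLInterp.modal a r.1 r.2.1 r.2.2 (interp_mem x f)

lemma pmlInterp_iff {X : Type*} [MeasurableSpace X] (x : X → A → Measure X) (S : Set X) :
    PMLInterp x S ↔ ∃ f : PMLF A, interp x f = S := by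
  constructor
  · intro h
    induction h with
    | univ => exact ⟨.top, rfl⟩
    | inter hS hT ihS ihT =>
      obtain ⟨f, rfl⟩ := ihS; obtain ⟨g, rfl⟩ := ihT
      exact ⟨.conj f g, rfl⟩
    | modal a r hr0 hr1 hS ih =>
      obtain ⟨f, rfl⟩ := ih
      exact ⟨.modal a ⟨r, hr0, hr1⟩ f, rfl⟩
  · rintro ⟨f, rfl⟩
    exact interp_mem x f

end PMLF

lemma pmlInterp_countable {X : Type*} [MeasurableSpace X] {A : Type*} [Countable A]
    (x : X → A → Measure X) : {S : Set X | PMLInterp x S}.Countable := by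
  have : {S : Set X | PMLInterp x S} = Set.range (PMLF.interp x) := by
    ext S; simp [PMLF.pmlInterp_iff, Set.mem_setOf_eq, Set.mem_range, eq_comm]
  rw [this]
  exact Set.countable_range _

lemma pmlInterp_measurable {X : Type*} [MeasurableSpace X] {A : Type*}
    {x : X → A → Measure X} (hmeas : ∀ a : A, Measurable (fun s => x s a))
    {S : Set X} (h : PMLInterp x S) : MeasurableSet S := by
  induction h with
  | univ => exact MeasurableSet.univ
  | inter _ _ ihS ihT => exact ihS.inter ihT
  | modal a r hr0 hr1 hS ih =>
    have hm : Measurable fun s => x s a _ := (Measure.measurable_coe ih).comp (hmeas a)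
    exact hm measurableSet_Ioi

/-- If two states are logically equivalent then the measures of any `PML∧`-definable set
agree (one-sided version leading to a contradiction). -/
lemma pml_measure_le {X : Type*} [MeasurableSpace X] {A : Type*}
    {x : X → A → Measure X} (hmass : ∀ s a, x s a Set.univ ≤ 1)
    {u v : X} (huv : ∀ S : Set X, PMLInterp x S → (u ∈ S ↔ v ∈ S))
    (a : A) {T : Set X} (hT : PMLInterp x T) : x u a T ≤ x v a T := by
  by_contra h
  push_neg at h
  obtain ⟨q, hq0, h1, h2⟩ := ENNReal.lt_iff_exists_rat_btwn.mp h
  have hof : (Real.toNNReal (q : ℝ) : ENNReal) = ENNReal.ofReal (q : ℝ) := rfl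
  rw [hof] at h1 h2
  have hle1 : x u a T ≤ 1 := le_trans (measure_mono (Set.subset_univ T)) (hmass u a)
  have hq1 : q ≤ 1 := by
    have : ENNReal.ofReal (q : ℝ) < 1 := lt_of_lt_of_le h2 hle1
    have := ENNReal.ofReal_lt_one.mp this
    exact_mod_cast this.le
  have hM : PMLInterp x {s : X | ENNReal.ofReal (q : ℝ) < x s a T} :=
    PMLInterp.modal a q hq0 hq1 hT
  have hu : u ∈ {s : X | ENNReal.ofReal (q : ℝ) < x s a T} := h2
  have hv : v ∈ {s : X | ENNReal.ofReal (q : ℝ) < x s a T} := (huv _ hM).mp hu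
  exact lt_asymm h1 hv

lemma pml_measure_agree {X : Type*} [MeasurableSpace X] {A : Type*}
    {x : X → A → Measure X} (hmass : ∀ s a, x s a Set.univ ≤ 1)
    (hmeas : ∀ a : A, Measurable (fun s => x s a))
    {u v : X} (huv : ∀ S : Set X, PMLInterp x S → (u ∈ S ↔ v ∈ S)) (a : A) :
    ∀ T : Set X, MeasurableSet[MeasurableSpace.generateFrom {T : Set X | PMLInterp x T}] T →
      x u a T = x v a T := by
  have huv' : ∀ S : Set X, PMLInterp x S → (v ∈ S ↔ u ∈ S) := fun S hS => (huv S hS).symm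
  have hle : MeasurableSpace.generateFrom {T : Set X | PMLInterp x T} ≤ ‹MeasurableSpace X› :=
    MeasurableSpace.generateFrom_le fun T hT => pmlInterp_measurable hmeas hT
  have hpi : IsPiSystem {T : Set X | PMLInterp x T} :=
    fun S1 hS1 S2 hS2 _ => hS1.inter hS2
  have hbasic : ∀ T ∈ {T : Set X | PMLInterp x T}, x u a T = x v a T := fun T hT =>
    le_antisymm (pml_measure_le hmass huv a hT) (pml_measure_le hmass huv' a hT)
  have huniv : x u a Set.univ = x v a Set.univ := hbasic _ PMLInterp.univ
  refine @MeasurableSpace.induction_on_inter X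
    (MeasurableSpace.generateFrom {T : Set X | PMLInterp x T}) (fun T _ => x u a T = x v a T)
    {T : Set X | PMLInterp x T}
    rfl hpi (by simp) hbasic ?_ ?_
  · intro T hTm hC
    have hT : MeasurableSet T := hle _ hTm
    have hu_ne : x u a T ≠ ⊤ :=
      ne_top_of_le_ne_top (by simp)
        (le_trans (measure_mono (Set.subset_univ T)) (hmass u a))
    have hv_ne : x v a T ≠ ⊤ :=
      ne_top_of_le_ne_top (by simp)
        (le_trans (measure_mono (Set.subset_univ T)) (hmass v a))
    rw [measure_compl hT hu_ne, measure_compl hT hv_ne, huniv, hC]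
  · intro f hdisj hfm hCf
    rw [measure_iUnion hdisj (fun i => hle _ (hfm i)),
      measure_iUnion hdisj (fun i => hle _ (hfm i))]
    exact tsum_congr hCf

/-- Expressivity of `PML∧` for labelled Markov processes on standard
Borel spaces with countably many labels: logically equivalent states are
probabilistically bisimilar. -/
theorem stmt7 {X : Type*} [MeasurableSpace X] [StandardBorelSpace X]
    {A : Type*} [Countable A]
    (x : X → A → Measure X)
    (hmass : ∀ s a, x s a Set.univ ≤ 1)
    (hmeas : ∀ a : A, Measurable (fun s => x s a))
    (bisim : X → X → Prop) (hbe : Equivalence bisim)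
    (hpost : ∀ s t, bisim s t → ∀ (a : A) (S : Set X), MeasurableSet S →
      (∀ u ∈ S, ∀ v, bisim u v → v ∈ S) → x s a S = x t a S)
    (hlargest : ∀ R : X → X → Prop, Equivalence R →
      (∀ s t, R s t → ∀ (a : A) (S : Set X), MeasurableSet S →
        (∀ u ∈ S, ∀ v, R u v → v ∈ S) → x s a S = x t a S) →
      ∀ s t, R s t → bisim s t)
    (s t : X)
    (hlog : ∀ S : Set X, PMLInterp x S → (s ∈ S ↔ t ∈ S)) :
    bisim s t := by
  classical
  set R : X → X → Prop := fun u v => ∀ S : Set X, PMLInterp x S → (u ∈ S ↔ v ∈ S) with hR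
  have hequiv : Equivalence R :=
    ⟨fun u S _ => Iff.rfl, fun h S hS => (h S hS).symm,
      fun h1 h2 S hS => (h1 S hS).trans (h2 S hS)⟩
  refine hlargest R hequiv ?_ s t hlog
  intro u v huv a S hS hcl
  -- enumerate the family of definable sets
  obtain ⟨e, he⟩ := (pmlInterp_countable x).exists_eq_range ⟨Set.univ, PMLInterp.univ⟩
  have heP : ∀ n, PMLInterp x (e n) := fun n => by
    have : e n ∈ {S : Set X | PMLInterp x S} := he ▸ Set.mem_range_self n
    exact this
  have hsurj : ∀ T : Set X, PMLInterp x T → ∃ n, e n = T := fun T hT => by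
    have : T ∈ Set.range e := he ▸ hT
    obtain ⟨n, hn⟩ := this
    exact ⟨n, hn⟩
  have hagree := pml_measure_agree hmass hmeas huv a
  have hle : MeasurableSpace.generateFrom {T : Set X | PMLInterp x T} ≤ ‹MeasurableSpace X› :=
    MeasurableSpace.generateFrom_le fun T hT => pmlInterp_measurable hmeas hT
  -- the coding map into ℕ → ℕ
  set qf : X → ℕ → ℕ := fun z n => (e n).indicator (fun _ => 1) z with hqf
  have hqm𝒢 : Measurable[MeasurableSpace.generateFrom {T : Set X | PMLInterp x T}] qf :=
    @measurable_pi_lambda X ℕ (fun _ => ℕ)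
      (MeasurableSpace.generateFrom {T : Set X | PMLInterp x T}) _ qf fun n =>
      @Measurable.indicator X ℕ (e n) (fun _ => 1)
        (MeasurableSpace.generateFrom {T : Set X | PMLInterp x T}) _ _
        (@measurable_const ℕ X _ (MeasurableSpace.generateFrom {T : Set X | PMLInterp x T}) 1)
        (MeasurableSpace.measurableSet_generateFrom (heP n))
  have hqm : Measurable qf :=
    measurable_pi_lambda _ fun n =>
      Measurable.indicator measurable_const (pmlInterp_measurable hmeas (heP n))
  have hkey : ∀ z w : X, qf z = qf w → R z w := by
    intro z w h T hT
    obtain ⟨n, rfl⟩ := hsurj T hT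
    have hn : (e n).indicator (fun _ => 1) z = (e n).indicator (fun _ => (1:ℕ)) w :=
      congrFun h n
    constructor
    · intro hz
      by_contra hw
      rw [Set.indicator_of_mem hz, Set.indicator_of_notMem hw] at hn
      exact one_ne_zero hn
    · intro hw
      by_contra hz
      rw [Set.indicator_of_notMem hz, Set.indicator_of_mem hw] at hn
      exact one_ne_zero hn.symm
  -- analytic separation (Blackwell's argument)
  have hA1 : AnalyticSet (qf '' S) := hS.analyticSet_image hqm
  have hA2 : AnalyticSet (qf '' Sᶜ) := hS.compl.analyticSet_image hqm
  have hdisj : Disjoint (qf '' S) (qf '' Sᶜ) := by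
    rw [Set.disjoint_left]
    rintro y ⟨z, hz, rfl⟩ ⟨w, hw, hzw⟩
    exact hw (hcl z hz w (hkey z w hzw.symm))
  obtain ⟨B, hSB, hBdisj, hBmeas⟩ := hA1.measurablySeparable hA2 hdisj
  have hSeq : S = qf ⁻¹' B := by
    apply Set.eq_of_subset_of_subset
    · intro z hz
      exact hSB ⟨z, hz, rfl⟩
    · intro z hz
      by_contra hzS
      exact Set.disjoint_left.mp hBdisj ⟨z, hzS, rfl⟩ hz
  rw [hSeq]
  exact hagree _ (hqm𝒢 hBmeas)
end

section
/- Let X be a type, B a lawful functor on types, Λ a type, and for each λ ∈ Λ let τ_λ : B ℝ → ℝ satisfy: (i) if k : X → ℝ is bounded then τ_λ ∘ (B k) : B X → ℝ is bounded; (ii) if a sequence kₙ : X → ℝ converges uniformly to h, then τ_λ ∘ (B kₙ) converges uniformly to τ_λ ∘ (B h). Let S be a set of bounded functions X → ℝ containing the constant function 1 and closed under pointwise min, f ↦ r + f, and f ↦ r·f for every r ∈ ℝ. Let 𝒰_S be the coarsest uniformity on X making every k ∈ S uniformly continuous into ℝ (with its standard metric uniformity). Then for every function h : X → ℝ that is uniformly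 continuous from (X, 𝒰_S) to ℝ, every λ ∈ Λ, and every ε > 0, there exists k ∈ S such that { (z,w) ∈ B X × B X : |τ_λ((B k)(z)) − τ_λ((B k)(w))| < ε/3 } ⊆ { (z,w) ∈ B X × B X : |τ_λ((B h)(z)) − τ_λ((B h)(w))| < ε }. -/
section aux
variable {X : Type} {S : Set (X → ℝ)}

lemma stmt8_const (hone : (fun _ => (1:ℝ)) ∈ S)
    (hmul : ∀ r : ℝ, ∀ f ∈ S, (fun a => r * f a) ∈ S) (c : ℝ) :
    (fun _ : X => c) ∈ S := by
  simpa using hmul c _ hone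

lemma stmt8_max (hmin : ∀ f ∈ S, ∀ g ∈ S, (fun a => min (f a) (g a)) ∈ S)
    (hmul : ∀ r : ℝ, ∀ f ∈ S, (fun a => r * f a) ∈ S)
    {f g : X → ℝ} (hf : f ∈ S) (hg : g ∈ S) :
    (fun a => max (f a) (g a)) ∈ S := by
  have h3 := hmin _ (hmul (-1) _ hf) _ (hmul (-1) _ hg)
  have h4 := hmul (-1) _ h3
  have : (fun a => (-1:ℝ) * min ((-1) * f a) ((-1) * g a)) = fun a => max (f a) (g a) := by
    funext a
    simp [neg_mul, one_mul, min_neg_neg]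
  rwa [this] at h4

lemma stmt8_inf' (hmin : ∀ f ∈ S, ∀ g ∈ S, (fun a => min (f a) (g a)) ∈ S)
    {ι : Type} {t : Finset ι} (ht : t.Nonempty) {G : ι → X → ℝ}
    (hG : ∀ i ∈ t, G i ∈ S) :
    (fun a => t.inf' ht (fun i => G i a)) ∈ S := by
  induction ht using Finset.Nonempty.cons_induction with
  | singleton a => simpa using hG a (by simp)
  | cons a s h hs ih =>
      have h1 : G a ∈ S := hG a (by simp)
      have h2 := ih (fun i hi => hG i (by simp [hi]))
      have := hmin _ h1 _ h2
      have e : (fun x => min (G a x) (s.inf' hs fun i => G i x))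
          = fun x => (Finset.cons a s h).inf' (by simp) fun i => G i x := by
        funext x; rw [Finset.inf'_cons]
      rwa [e] at this

lemma stmt8_sup' (hmin : ∀ f ∈ S, ∀ g ∈ S, (fun a => min (f a) (g a)) ∈ S)
    (hmul : ∀ r : ℝ, ∀ f ∈ S, (fun a => r * f a) ∈ S)
    {ι : Type} {t : Finset ι} (ht : t.Nonempty) {G : ι → X → ℝ}
    (hG : ∀ i ∈ t, G i ∈ S) :
    (fun a => t.sup' ht (fun i => G i a)) ∈ S := by
  induction ht using Finset.Nonempty.cons_induction with
  | singleton a => simpa using hG a (by simp)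
  | cons a s h hs ih =>
      have h1 : G a ∈ S := hG a (by simp)
      have h2 := ih (fun i hi => hG i (by simp [hi]))
      have := stmt8_max hmin hmul h1 h2
      have e : (fun x => max (G a x) (s.sup' hs fun i => G i x))
          = fun x => (Finset.cons a s h).sup' (by simp) fun i => G i x := by
        funext x; rw [Finset.sup'_cons]
      rwa [e] at this

lemma stmt8_common_bound (T : Finset (X → ℝ)) (hb : ∀ f ∈ T, ∃ C, ∀ a, |f a| ≤ C) :
    ∃ C, ∀ f ∈ T, ∀ a, |f a| ≤ C := by
  classical
  induction T using Finset.induction_on with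
  | empty => exact ⟨0, by simp⟩
    | @insert f T' hx ih =>
      obtain ⟨C1, hC1⟩ := hb f (by simp)
      obtain ⟨C2, hC2⟩ := ih (fun g hg => hb g (by simp [hg]))
      refine ⟨max C1 C2, fun g hg a => ?_⟩
      rcases Finset.mem_insert.mp hg with rfl | hg
      · exact (hC1 a).trans (le_max_left _ _)
      · exact (hC2 g hg a).trans (le_max_right _ _)
end aux


lemma stmt8_keyA {X : Type} {S : Set (X → ℝ)} {h : X → ℝ}
    (hh : @UniformContinuous X ℝ
      (⨅ k ∈ S, UniformSpace.comap k inferInstance) inferInstance h)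
    {δ : ℝ} (hδ : 0 < δ) :
    ∃ T : Finset (X → ℝ), ↑T ⊆ S ∧ ∃ η > 0,
      ∀ x y : X, (∀ f ∈ T, |f x - f y| < η) → |h x - h y| < δ := by
  classical
  have hU : {p : ℝ × ℝ | dist p.1 p.2 < δ} ∈ uniformity ℝ := Metric.dist_mem_uniformity hδ
  have hmem : (fun p : X × X => (h p.1, h p.2)) ⁻¹' {p : ℝ × ℝ | dist p.1 p.2 < δ}
      ∈ @uniformity X (⨅ k ∈ S, UniformSpace.comap k inferInstance) := hh hU
  have huni : @uniformity X (⨅ k ∈ S, UniformSpace.comap k inferInstance)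
      = ⨅ k : (X → ℝ), ⨅ _ : k ∈ S,
          Filter.comap (Prod.map k k) (uniformity ℝ) := by
    simp only [iInf_uniformity, uniformity_comap]
  rw [huni, Filter.mem_iInf] at hmem
  obtain ⟨I, hIfin, V, hV, hseq⟩ := hmem
  haveI : Fintype ↑I := hIfin.fintype
  have key : ∀ i : ↑I, ∃ e > 0, ∀ x y : X,
      ((i : X → ℝ) ∈ S → dist ((i : X → ℝ) x) ((i : X → ℝ) y) < e) → (x, y) ∈ V i := by
    intro i
    by_cases hi : (i : X → ℝ) ∈ S
    · have hVi := hV i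
      rw [iInf_pos hi, Filter.mem_comap] at hVi
      obtain ⟨t, ht, hsub⟩ := hVi
      obtain ⟨e, he, hte⟩ := Metric.mem_uniformity_dist.mp ht
      exact ⟨e, he, fun x y hd => hsub (hte (hd hi))⟩
    · have hVi := hV i
      rw [iInf_neg hi] at hVi
      have : V i = Set.univ := by simpa using hVi
      exact ⟨1, one_pos, fun x y _ => by simp [this]⟩
  choose e he hee using key
  by_cases hne : Nonempty ↑I
  · refine ⟨hIfin.toFinset.filter (· ∈ S), ?_, Finset.univ.inf' Finset.univ_nonempty e,
      ?_, ?_⟩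
    · intro f hf
      simp only [Finset.coe_filter, Set.mem_setOf_eq] at hf
      exact hf.2
    · simp only [gt_iff_lt, Finset.lt_inf'_iff]
      exact fun i _ => he i
    · intro x y hxy
      have hxys : (x, y) ∈ (fun p : X × X => (h p.1, h p.2)) ⁻¹'
          {p : ℝ × ℝ | dist p.1 p.2 < δ} := by
        rw [hseq]
        refine Set.mem_iInter.mpr fun i => ?_
        refine hee i x y fun hi => ?_
        have hfT : (i : X → ℝ) ∈ hIfin.toFinset.filter (· ∈ S) := by
          simp [Finset.mem_filter, Set.Finite.mem_toFinset, i.2, hi]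
        calc dist ((i : X → ℝ) x) ((i : X → ℝ) y)
            = |(i : X → ℝ) x - (i : X → ℝ) y| := Real.dist_eq _ _
          _ < Finset.univ.inf' Finset.univ_nonempty e := hxy _ hfT
          _ ≤ e i := Finset.inf'_le e (Finset.mem_univ i)
      simpa [Real.dist_eq] using hxys
  · refine ⟨∅, by simp, 1, one_pos, fun x y _ => ?_⟩
    have hxys : (x, y) ∈ (fun p : X × X => (h p.1, h p.2)) ⁻¹'
        {p : ℝ × ℝ | dist p.1 p.2 < δ} := by
      rw [hseq]
      exact Set.mem_iInter.mpr fun i => absurd ⟨i⟩ hne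
    simpa [Real.dist_eq] using hxys


lemma stmt8_net {X : Type} [Nonempty X] (T : Finset (X → ℝ)) {C : ℝ}
    (hC : ∀ f ∈ T, ∀ a, |f a| ≤ C) {ρ : ℝ} (hρ : 0 < ρ) :
    ∃ N : Finset X, N.Nonempty ∧ ∀ a : X, ∃ i ∈ N, ∀ f ∈ T, |f a - f i| < ρ := by
  classical
  let φ : X → ({f // f ∈ T} → ℝ) := fun x f => f.1 x
  have hA : Set.range φ ⊆ Metric.closedBall 0 (max C 0) := by
    rintro _ ⟨x, rfl⟩
    rw [Metric.mem_closedBall, dist_pi_le_iff (le_max_right C 0)]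
    intro f
    have hd0 : dist (φ x f) ((0 : {f // f ∈ T} → ℝ) f) = |f.1 x| := by
      show dist (f.1 x) (0 : ℝ) = _
      rw [Real.dist_eq, sub_zero]
    rw [hd0]
    exact (hC f.1 f.2 x).trans (le_max_left _ _)
  have htb : TotallyBounded (Set.range φ) :=
    (isCompact_closedBall (0 : {f // f ∈ T} → ℝ) (max C 0)).totallyBounded.subset hA
  obtain ⟨t, hts, htfin, hcov⟩ := totallyBounded_iff_subset.mp htb
    {p : ({f // f ∈ T} → ℝ) × ({f // f ∈ T} → ℝ) | dist p.1 p.2 < ρ}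
    (Metric.dist_mem_uniformity hρ)
  let g : ({f // f ∈ T} → ℝ) → X := fun y =>
    if hy : ∃ x, φ x = y then hy.choose else Classical.arbitrary X
  have hNfin : (g '' t).Finite := htfin.image g
  refine ⟨insert (Classical.arbitrary X) hNfin.toFinset,
    ⟨_, Finset.mem_insert_self _ _⟩, ?_⟩
  intro a
  obtain ⟨y, hy, hd⟩ := Set.mem_iUnion₂.mp (hcov ⟨a, rfl⟩)
  have hyA : ∃ x, φ x = y := hts hy
  refine ⟨g y, ?_, ?_⟩
  · exact Finset.mem_insert_of_mem (by rw [Set.Finite.mem_toFinset]; exact ⟨y, hy, rfl⟩)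
  · intro f hf
    have hφ : φ (g y) = y := by
      simp only [g, dif_pos hyA]
      exact hyA.choose_spec
    calc |f a - f (g y)| = dist (φ a ⟨f, hf⟩) (φ (g y) ⟨f, hf⟩) := by
          simp [φ, Real.dist_eq]
      _ ≤ dist (φ a) (φ (g y)) := dist_le_pi_dist _ _ _
      _ = dist (φ a) y := by rw [hφ]
      _ < ρ := hd

lemma stmt8_approx {X : Type} {S : Set (X → ℝ)}
    (hS_bdd : ∀ k ∈ S, ∃ C : ℝ, ∀ a, |k a| ≤ C)
    (hS_one : (fun _ => (1:ℝ)) ∈ S)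
    (hS_min : ∀ f ∈ S, ∀ g ∈ S, (fun a => min (f a) (g a)) ∈ S)
    (hS_add : ∀ r : ℝ, ∀ f ∈ S, (fun a => r + f a) ∈ S)
    (hS_mul : ∀ r : ℝ, ∀ f ∈ S, (fun a => r * f a) ∈ S)
    {h : X → ℝ}
    (hh : @UniformContinuous X ℝ
      (⨅ k ∈ S, UniformSpace.comap k inferInstance) inferInstance h)
    {δ : ℝ} (hδ : 0 < δ) :
    ∃ k ∈ S, ∀ a, |k a - h a| ≤ δ := by
  classical
  rcases isEmpty_or_nonempty X with hX | hX
  · exact ⟨_, hS_one, fun a => hX.elim a⟩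
  -- h is bounded
  obtain ⟨T₁, hT₁S, η₁, hη₁, himp₁⟩ := stmt8_keyA hh one_pos
  obtain ⟨C₁, hC₁⟩ := stmt8_common_bound T₁ (fun f hf => hS_bdd f (hT₁S hf))
  obtain ⟨N₁, hN₁ne, hN₁⟩ := stmt8_net T₁ hC₁ hη₁
  set H := N₁.sup' hN₁ne (fun i => |h i|) + 1 with hHdef
  have hHh : ∀ a, |h a| ≤ H := by
    intro a
    obtain ⟨i, hiN, hfi⟩ := hN₁ a
    have h1 : |h a - h i| < 1 := himp₁ a i hfi
    have h2 : |h i| ≤ N₁.sup' hN₁ne (fun i => |h i|) := Finset.le_sup' (fun i => |h i|) hiN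
    have h3 : |h a| - |h i| ≤ |h a - h i| := abs_sub_abs_le_abs_sub _ _
    have : |h a| ≤ |h i| + 1 := by linarith
    linarith
  have hH0 : 0 ≤ H := le_trans (abs_nonneg (h (Classical.arbitrary X))) (hHh _)
  -- modulus for δ/3
  have hδ3 : 0 < δ/3 := by positivity
  obtain ⟨T, hTS, η, hη, himp⟩ := stmt8_keyA hh hδ3
  set L := 2 * H / η with hLdef
  have hL0 : 0 ≤ L := by positivity
  set ρ := min η (δ/3 / (L+1)) with hρdef
  have hρ : 0 < ρ := lt_min hη (by positivity)
  have hρη : ρ ≤ η := min_le_left _ _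
  have hLρ : L * ρ ≤ δ/3 := by
    have h1 : L * ρ ≤ L * (δ/3/(L+1)) :=
      mul_le_mul_of_nonneg_left (min_le_right _ _) hL0
    have h2 : L * (δ/3/(L+1)) ≤ (L+1) * (δ/3/(L+1)) :=
      mul_le_mul_of_nonneg_right (by linarith) (by positivity)
    have h3 : (L+1) * (δ/3/(L+1)) = δ/3 := mul_div_cancel₀ _ (by positivity)
    linarith
  -- two-point approximants
  have two_pt : ∀ x y : X, ∃ g ∈ S, g x = h x ∧ |g y - h y| ≤ δ/3 ∧
      ∀ a b : X, (∀ f ∈ T, |f a - f b| < ρ) → |g a - g b| ≤ L * ρ := by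
    intro x y
    by_cases hxy : ∀ f ∈ T, |f x - f y| < η
    · refine ⟨(fun _ => h x), stmt8_const hS_one hS_mul _, rfl, ?_, ?_⟩
      · exact le_of_lt (himp x y hxy)
      · intro a b _
        simpa using mul_nonneg hL0 hρ.le
    · push_neg at hxy
      obtain ⟨f, hfT, hfη⟩ := hxy
      have hfS : f ∈ S := hTS hfT
      have hne0 : f y - f x ≠ 0 := by
        refine sub_ne_zero.mpr (fun e => ?_)
        rw [e, sub_self, abs_zero] at hfη
        linarith
      set r := (h y - h x) / (f y - f x) with hrdef
      refine ⟨(fun a => (h x - r * f x) + r * f a), hS_add _ _ (hS_mul r f hfS), by ring, ?_, ?_⟩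
      · have hmc : r * (f y - f x) = h y - h x := div_mul_cancel₀ _ hne0
        rw [mul_sub] at hmc
        have : (h x - r * f x) + r * f y - h y = 0 := by linarith
        simp [this, hδ3.le]
      · intro a b hab
        have he : ((h x - r * f x) + r * f a) - ((h x - r * f x) + r * f b)
            = r * (f a - f b) := by ring
        rw [he, abs_mul]
        have hnum : |h y - h x| ≤ 2 * H := by
          have := abs_sub (h y) (h x)
          have h1 := hHh y; have h2 := hHh x
          have h3 : |h y - h x| ≤ |h y| + |h x| := abs_sub _ _
          linarith
        have hden : η ≤ |f y - f x| := by rwa [abs_sub_comm] at hfη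
        have hr : |r| ≤ L := by
          rw [hrdef, abs_div, hLdef]
          exact div_le_div₀ (by positivity) hnum hη hden
        exact mul_le_mul hr (le_of_lt (hab f hfT)) (abs_nonneg _) hL0
  choose g hgS hgx hgy hgLip using two_pt
  -- net at scale ρ
  obtain ⟨C, hC⟩ := stmt8_common_bound T (fun f hf => hS_bdd f (hTS hf))
  obtain ⟨N, hNne, hN⟩ := stmt8_net T hC hρ
  refine ⟨(fun a => N.inf' hNne (fun i => N.sup' hNne (fun j => g i j a))), ?_, ?_⟩
  · exact stmt8_inf' hS_min hNne
      (fun i _ => stmt8_sup' hS_min hS_mul hNne (fun j _ => hgS i j))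
  · intro a
    obtain ⟨i0, hi0, hfa⟩ := hN a
    have hfa' : ∀ f ∈ T, |f a - f i0| < η := fun f hf => lt_of_lt_of_le (hfa f hf) hρη
    have hha : |h a - h i0| < δ/3 := himp a i0 hfa'
    have hhaA := abs_lt.mp hha
    have hub : N.inf' hNne (fun i => N.sup' hNne (fun j => g i j a)) ≤ h a + δ := by
      refine le_trans (Finset.inf'_le _ hi0) ?_
      rw [Finset.sup'_le_iff]
      intro j hj
      have h1 := abs_le.mp (hgLip i0 j a i0 hfa)
      have h2 : g i0 j i0 = h i0 := hgx i0 j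
      rw [h2] at h1
      linarith [hδ.le]
    have hlb : h a - δ ≤ N.inf' hNne (fun i => N.sup' hNne (fun j => g i j a)) := by
      rw [Finset.le_inf'_iff]
      intro i hi
      refine le_trans ?_ (Finset.le_sup' (fun j => g i j a) hi0)
      have h1 := abs_le.mp (hgLip i i0 a i0 hfa)
      have h2 := abs_le.mp (hgy i i0)
      linarith [hδ.le]
    rw [abs_le]
    constructor <;> linarith


/-- Approximating family in the uniform-space setting: any observation
uniformly continuous for the initial uniformity of a family `S` of bounded real-valued
functions (containing `1` and closed under `min`, `r + ·`, `r * ·`) is approximated,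
after applying a modality, by a single member of `S`. -/
theorem stmt8
    (B : Type → Type) [Functor B] [LawfulFunctor B]
    (X : Type) (Λ : Type) (τ : Λ → B ℝ → ℝ)
    (hτ_bdd : ∀ l : Λ, ∀ k : X → ℝ, (∃ C : ℝ, ∀ a, |k a| ≤ C) →
      ∃ C : ℝ, ∀ z : B X, |τ l (k <$> z)| ≤ C)
    (hτ_conv : ∀ l : Λ, ∀ (k : ℕ → X → ℝ) (g : X → ℝ),
      TendstoUniformly k g Filter.atTop →
      TendstoUniformly (fun n z => τ l ((k n) <$> z)) (fun z => τ l (g <$> z)) Filter.atTop)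
    (S : Set (X → ℝ))
    (hS_bdd : ∀ k ∈ S, ∃ C : ℝ, ∀ a, |k a| ≤ C)
    (hS_one : (fun _ => (1:ℝ)) ∈ S)
    (hS_min : ∀ f ∈ S, ∀ g ∈ S, (fun a => min (f a) (g a)) ∈ S)
    (hS_add : ∀ r : ℝ, ∀ f ∈ S, (fun a => r + f a) ∈ S)
    (hS_mul : ∀ r : ℝ, ∀ f ∈ S, (fun a => r * f a) ∈ S)
    (h : X → ℝ)
    (hh : @UniformContinuous X ℝ
      (⨅ k ∈ S, UniformSpace.comap k inferInstance) inferInstance h)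
    (l : Λ) (ε : ℝ) (hε : 0 < ε) :
    ∃ k ∈ S,
      {p : B X × B X | |τ l (k <$> p.1) - τ l (k <$> p.2)| < ε/3} ⊆
      {p : B X × B X | |τ l (h <$> p.1) - τ l (h <$> p.2)| < ε} := by
  classical
  have hseq : ∀ n : ℕ, ∃ k ∈ S, ∀ a, |k a - h a| ≤ 1/(n+1) :=
    fun n => stmt8_approx hS_bdd hS_one hS_min hS_add hS_mul hh (by positivity)
  choose k hkS hk using hseq
  have htu : TendstoUniformly k h Filter.atTop := by
    rw [Metric.tendstoUniformly_iff]
    intro e he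
    obtain ⟨n, hn⟩ := exists_nat_one_div_lt he
    refine Filter.eventually_atTop.mpr ⟨n, fun m hm x => ?_⟩
    have h1 : |k m x - h x| ≤ 1/(m+1) := hk m x
    have hc : ((n:ℝ)+1) ≤ ((m:ℝ)+1) := by exact_mod_cast Nat.succ_le_succ hm
    have h2 : (1:ℝ)/(m+1) ≤ 1/(n+1) := one_div_le_one_div_of_le (by positivity) hc
    rw [dist_comm, Real.dist_eq]
    linarith
  have hconv := hτ_conv l k h htu
  rw [Metric.tendstoUniformly_iff] at hconv
  obtain ⟨n, hn⟩ := Filter.eventually_atTop.mp (hconv (ε/3) (by positivity))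
  refine ⟨k n, hkS n, ?_⟩
  intro p hp
  have h1 := hn n le_rfl p.1
  have h2 := hn n le_rfl p.2
  rw [Real.dist_eq] at h1 h2
  simp only [Set.mem_setOf_eq] at hp ⊢
  have a1 := abs_lt.mp h1
  have a2 := abs_lt.mp h2
  have a3 := abs_lt.mp hp
  rw [abs_lt]
  constructor <;> linarith
end

section
/- Let X be a type, B a lawful functor on types, Λ a type, and for each λ ∈ Λ let τ_λ : B ℝ → ℝ satisfy: (i) if k : X → ℝ is bounded then τ_λ ∘ (B k) is bounded; (ii) if kₙ : X → ℝ converges uniformly to h then τ_λ ∘ (B kₙ) converges uniformly to τ_λ ∘ (B h). Let x : X → B X be a coalgebra. Order the uniform structures on X by 𝒰 ⊑ 𝒱 iff 𝒰 is finer than 𝒱 (every 𝒱-entourage is a 𝒰-entourage); this is a complete lattice. Define the monotone map Φ on this lattice by: Φ(𝒰) is the coarsest uniformity on X making every map τ_λ ∘ (B h) ∘ x : X → ℝ uniformly continuous, where λ ranges over Λ and h ranges over the functions X → ℝ uniformly continuous from (X,𝒰) to ℝ. The bisimulation uniformity of x is the ⊑-greatest fixed point of Φ. Let L be the smallest set of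 functions X → ℝ that contains the constant function 1 and is closed under pointwise min, f ↦ r + f, f ↦ r·f for every r ∈ ℝ, and f ↦ τ_λ ∘ (B f) ∘ x for every λ ∈ Λ. Then the bisimulation uniformity of x equals the coarsest uniformity on X making every φ ∈ L uniformly continuous into ℝ. -/
open Filter



lemma uc_of_tendstoUniformly {α : Type*} [UniformSpace α] {f : ℕ → α → ℝ} {g : α → ℝ}
    (hf : ∀ n, UniformContinuous (f n)) (hconv : TendstoUniformly f g atTop) :
    UniformContinuous g := by
  rw [UniformContinuous, Metric.uniformity_basis_dist.tendsto_right_iff]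
  intro ε hε
  obtain ⟨n, hn⟩ := (Metric.tendstoUniformly_iff.1 hconv (ε / 3) (by linarith)).exists
  have h2 : ∀ᶠ p in uniformity α, dist (f n p.1) (f n p.2) < ε / 3 :=
    Metric.uniformity_basis_dist.tendsto_right_iff.1 (hf n) (ε / 3) (by linarith)
  filter_upwards [h2] with p hp
  have h5 := hn p.1
  have h6 := hn p.2
  have h4 := dist_triangle4 (g p.1) (f n p.1) (f n p.2) (g p.2)
  rw [dist_comm (f n p.2) (g p.2)] at h4
  rw [dist_comm (g p.1) (f n p.1)] at h5
  rw [dist_comm (g p.1) (f n p.1)] at h4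
  linarith

lemma exists_modulus {X : Type} (P : (X → ℝ) → Prop) {h : X → ℝ}
    (huc : @UniformContinuous X ℝ (⨅ (φ : X → ℝ) (_ : P φ), UniformSpace.comap φ inferInstance)
      inferInstance h)
    {ε : ℝ} (hε : 0 < ε) :
    ∃ (ι : Type) (_ : Fintype ι) (φs : ι → X → ℝ) (δ : ℝ), 0 < δ ∧ (∀ i, P (φs i)) ∧
      ∀ s t : X, (∀ i, |φs i s - φs i t| < δ) → |h s - h t| < ε := by
  rw [show (⨅ (φ : X → ℝ) (_ : P φ), UniformSpace.comap φ inferInstance)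
      = ⨅ (q : Subtype P), UniformSpace.comap q.1 inferInstance from iInf_subtype'] at huc
  have hS : (fun p : X × X => (h p.1, h p.2)) ⁻¹' {p : ℝ × ℝ | dist p.1 p.2 < ε}
      ∈ @uniformity X (⨅ (q : Subtype P), UniformSpace.comap q.1 inferInstance) :=
    huc (Metric.dist_mem_uniformity hε)
  rw [iInf_uniformity] at hS
  simp only [uniformity_comap] at hS
  rw [Filter.mem_iInf] at hS
  obtain ⟨I, hIfin, V, hV, hS_eq⟩ := hS
  haveI : Fintype ↑I := hIfin.fintype
  choose W hWmem hWsub using fun i : ↑I => Filter.mem_comap.1 (hV i)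
  have hWall : (⋂ i, W i) ∈ uniformity ℝ := (Filter.iInter_mem).2 hWmem
  obtain ⟨δ, hδ, hδW⟩ := Metric.mem_uniformity_dist.1 hWall
  refine ⟨↑I, inferInstance, fun i => (i : Subtype P).1, δ, hδ, fun i => (i : Subtype P).2,
    fun s t hst => ?_⟩
  have hmem : (s, t) ∈ ⋂ i, V i := by
    refine Set.mem_iInter.2 fun i => hWsub i ?_
    have : dist ((i : Subtype P).1 s) ((i : Subtype P).1 t) < δ := by
      rw [Real.dist_eq]; exact hst i
    exact Set.mem_iInter.1 (hδW this) i
  rw [← hS_eq] at hmem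
  simpa [Real.dist_eq] using hmem



lemma cell_bounds {a w : ℝ} (hw : 0 < w) {k : ℤ} (hk : ⌊a / w⌋ = k) :
    (k : ℝ) * w ≤ a ∧ a < k * w + w := by
  have h1 := Int.floor_le (a / w)
  have h2 := Int.lt_floor_add_one (a / w)
  rw [hk] at h1 h2
  have h3 := (le_div_iff₀ hw).1 h1
  have h4 := (div_lt_iff₀ hw).1 h2
  constructor
  · linarith
  · nlinarith

lemma abs_lt_of_floor_div_eq {a b w : ℝ} (hw : 0 < w) (h : ⌊a / w⌋ = ⌊b / w⌋) :
    |a - b| < w := by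
  obtain ⟨h1, h2⟩ := cell_bounds hw (rfl : ⌊a / w⌋ = ⌊a / w⌋)
  obtain ⟨h3, h4⟩ := cell_bounds hw h.symm
  rw [abs_lt]
  constructor <;> linarith

lemma grid_finite {X ι : Type} [Fintype ι] (φs : ι → X → ℝ) (C : ι → ℝ)
    (hC : ∀ i s, |φs i s| ≤ C i) (w : ℝ) (hw : 0 < w) :
    (Set.range fun s i => (⌊φs i s / w⌋ : ℤ)).Finite := by
  apply Set.Finite.subset (Set.Finite.pi (t := fun i => Set.Icc ⌊(-(C i)) / w⌋ ⌊C i / w⌋)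
    (fun i => Set.finite_Icc _ _))
  rintro v ⟨s, rfl⟩
  refine Set.mem_univ_pi.2 fun i => ?_
  obtain ⟨ha, hb⟩ := abs_le.1 (hC i s)
  constructor
  · exact Int.floor_le_floor (by gcongr)
  · exact Int.floor_le_floor (by gcongr)

lemma bdd_of_uc {X : Type} (P : (X → ℝ) → Prop)
    (hPbdd : ∀ φ, P φ → ∃ C : ℝ, ∀ s, |φ s| ≤ C) {h : X → ℝ}
    (huc : @UniformContinuous X ℝ (⨅ (φ : X → ℝ) (_ : P φ), UniformSpace.comap φ inferInstance)
      inferInstance h) :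
    ∃ C : ℝ, ∀ s, |h s| ≤ C := by
  classical
  obtain ⟨ι, _inst, φs, δ, hδ, hP, hmod⟩ := exists_modulus P huc one_pos
  choose C hC using fun i => hPbdd _ (hP i)
  set g : X → ι → ℤ := fun s i => ⌊φs i s / δ⌋ with hg
  have hfin : (Set.range g).Finite := grid_finite φs C hC δ hδ
  by_cases hX : Nonempty X
  · set rep : (ι → ℤ) → X := fun v =>
      if hv : v ∈ Set.range g then (Set.mem_range.mp hv).choose else Classical.choice hX with hrepdef
    have hrep : ∀ v ∈ Set.range g, g (rep v) = v := by
      intro v hv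
      simp only [hrepdef, dif_pos hv]
      exact (Set.mem_range.mp hv).choose_spec
    have hFne : hfin.toFinset.Nonempty :=
      ⟨g (Classical.choice hX), hfin.mem_toFinset.2 (Set.mem_range_self _)⟩
    refine ⟨hfin.toFinset.sup' hFne (fun v => |h (rep v)|) + 1, fun s => ?_⟩
    have hv : g s ∈ Set.range g := Set.mem_range_self s
    have hclose : |h s - h (rep (g s))| < 1 := by
      refine hmod s (rep (g s)) fun i => ?_
      have : g (rep (g s)) i = g s i := congrFun (hrep _ hv) i
      exact abs_lt_of_floor_div_eq hδ this.symm
    have hsup : |h (rep (g s))| ≤ hfin.toFinset.sup' hFne (fun v => |h (rep v)|) :=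
      Finset.le_sup' (fun v => |h (rep v)|) (hfin.mem_toFinset.2 hv)
    have htri := abs_add_le (h s - h (rep (g s))) (h (rep (g s)))
    simp only [sub_add_cancel] at htri
    linarith
  · exact ⟨0, fun s => (hX ⟨s⟩).elim⟩


inductive BUInterp (B : Type → Type) [Functor B] {X Λ : Type}
    (τ : Λ → B ℝ → ℝ) (x : X → B X) : (X → ℝ) → Prop
  | one : BUInterp B τ x (fun _ => 1)
  | min : ∀ {f g : X → ℝ}, BUInterp B τ x f → BUInterp B τ x g →
      BUInterp B τ x (fun s => min (f s) (g s))
  | add : ∀ (r : ℝ) {f : X → ℝ}, BUInterp B τ x f → BUInterp B τ x (fun s => r + f s)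
  | mul : ∀ (r : ℝ) {f : X → ℝ}, BUInterp B τ x f → BUInterp B τ x (fun s => r * f s)
  | mod : ∀ (l : Λ) {f : X → ℝ}, BUInterp B τ x f →
      BUInterp B τ x (fun s => τ l (f <$> x s))

namespace BU

variable {B : Type → Type} [Functor B] {X Λ : Type} {τ : Λ → B ℝ → ℝ} {x : X → B X}

lemma const (r : ℝ) : BUInterp B τ x (fun _ => r) := by
  simpa using BUInterp.mul r (BUInterp.one (B := B) (τ := τ) (x := x))

lemma affine (a b : ℝ) {f : X → ℝ} (hf : BUInterp B τ x f) :
    BUInterp B τ x (fun s => a + b * f s) :=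
  BUInterp.add a (BUInterp.mul b hf)

lemma max' {f g : X → ℝ} (hf : BUInterp B τ x f) (hg : BUInterp B τ x g) :
    BUInterp B τ x (fun s => max (f s) (g s)) := by
  have h := BUInterp.mul (-1) (BUInterp.min (BUInterp.mul (-1) hf) (BUInterp.mul (-1) hg))
  convert h using 1
  funext s
  rcases le_total (f s) (g s) with h' | h' <;>
    simp [max_eq_left, max_eq_right, min_eq_left, min_eq_right, h'] <;> linarith

/-- pointwise max of a list of functions, with a base function -/
def lmax : List (X → ℝ) → (X → ℝ) → X → ℝ
  | [], b => b
  | f :: l, b => fun s => max (f s) (lmax l b s)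

lemma le_lmax_base (l : List (X → ℝ)) (b : X → ℝ) (s : X) : b s ≤ lmax l b s := by
  induction l with
  | nil => exact le_refl _
  | cons f l ih => exact le_trans ih (le_max_right _ _)

lemma le_lmax_mem {l : List (X → ℝ)} {f : X → ℝ} (hf : f ∈ l) (b : X → ℝ) (s : X) :
    f s ≤ lmax l b s := by
  induction l with
  | nil => simp at hf
  | cons g l ih =>
    rcases List.mem_cons.1 hf with h | h
    · subst h; exact le_max_left _ _
    · exact le_trans (ih h) (le_max_right _ _)

lemma lmax_le {l : List (X → ℝ)} {b : X → ℝ} {s : X} {c : ℝ}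
    (hl : ∀ f ∈ l, f s ≤ c) (hb : b s ≤ c) : lmax l b s ≤ c := by
  induction l with
  | nil => exact hb
  | cons f l ih =>
    exact max_le (hl f (List.mem_cons_self)) (ih fun g hg => hl g (List.mem_cons_of_mem _ hg))

lemma lmax_interp {l : List (X → ℝ)} {b : X → ℝ}
    (hl : ∀ f ∈ l, BUInterp B τ x f) (hb : BUInterp B τ x b) :
    BUInterp B τ x (lmax l b) := by
  induction l with
  | nil => exact hb
  | cons f l ih =>
    exact max' (hl f (List.mem_cons_self)) (ih fun g hg => hl g (List.mem_cons_of_mem _ hg))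

lemma bounded (hτ_bdd : ∀ l : Λ, ∀ k : X → ℝ, (∃ C : ℝ, ∀ a, |k a| ≤ C) →
      ∃ C : ℝ, ∀ z : B X, |τ l (k <$> z)| ≤ C)
    {f : X → ℝ} (hf : BUInterp B τ x f) : ∃ C : ℝ, ∀ s, |f s| ≤ C := by
  induction hf with
  | one => exact ⟨1, fun s => by norm_num⟩
  | min hf hg ihf ihg =>
    obtain ⟨Cf, hCf⟩ := ihf; obtain ⟨Cg, hCg⟩ := ihg
    refine ⟨max Cf Cg, fun s => ?_⟩
    obtain ⟨h1, h2⟩ := abs_le.1 (hCf s)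
    obtain ⟨h3, h4⟩ := abs_le.1 (hCg s)
    have hm1 := le_max_left Cf Cg
    have hm2 := le_max_right Cf Cg
    rw [abs_le]
    exact ⟨le_min (by linarith) (by linarith),
      le_trans (min_le_left _ _) (by linarith)⟩
  | add r hf ihf =>
    obtain ⟨Cf, hCf⟩ := ihf
    exact ⟨|r| + Cf, fun s => (abs_add_le _ _).trans (by have := hCf s; linarith)⟩
  | mul r hf ihf =>
    obtain ⟨Cf, hCf⟩ := ihf
    refine ⟨|r| * Cf, fun s => ?_⟩
    rw [abs_mul]
    exact mul_le_mul_of_nonneg_left (hCf s) (abs_nonneg r)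
  | mod l hf ihf =>
    obtain ⟨C, hC⟩ := hτ_bdd l _ ihf
    exact ⟨C, fun s => hC (x s)⟩

lemma approx (hτ_bdd : ∀ l : Λ, ∀ k : X → ℝ, (∃ C : ℝ, ∀ a, |k a| ≤ C) →
      ∃ C : ℝ, ∀ z : B X, |τ l (k <$> z)| ≤ C)
    {h : X → ℝ}
    (huc : @UniformContinuous X ℝ
      (⨅ (φ : X → ℝ) (_ : BUInterp B τ x φ), UniformSpace.comap φ inferInstance)
      inferInstance h)
    {ε : ℝ} (hε : 0 < ε) :
    ∃ φ, BUInterp B τ x φ ∧ ∀ s, |φ s - h s| ≤ ε := by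
  classical
  by_cases hX : Nonempty X
  case neg => exact ⟨fun _ => 1, BUInterp.one, fun s => (hX ⟨s⟩).elim⟩
  -- bound on h
  obtain ⟨C, hC⟩ := bdd_of_uc (BUInterp B τ x) (fun φ hφ => bounded hτ_bdd hφ) huc
  have hC0 : 0 ≤ C := le_trans (abs_nonneg _) (hC (Classical.choice hX))
  -- modulus of uniform continuity
  obtain ⟨ι, _inst, φs, δ, hδ, hP, hmod⟩ := exists_modulus (BUInterp B τ x) huc hε
  set w : ℝ := δ / 3 with hwdef
  have hw : 0 < w := by positivity
  choose Cφ hCφ using fun i => bounded hτ_bdd (hP i)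
  set g : X → ι → ℤ := fun s i => ⌊φs i s / w⌋ with hgdef
  have hfin : (Set.range g).Finite := grid_finite φs Cφ hCφ w hw
  set rep : (ι → ℤ) → X := fun v =>
    if hv : v ∈ Set.range g then (Set.mem_range.mp hv).choose else Classical.choice hX
    with hrepdef
  have hrep : ∀ v ∈ Set.range g, g (rep v) = v := by
    intro v hv
    simp only [hrepdef, dif_pos hv]
    exact (Set.mem_range.mp hv).choose_spec
  set K : ℝ := (2 * C + 1) / w with hKdef
  have hK : 0 < K := by positivity
  have hKw : K * w = 2 * C + 1 := div_mul_cancel₀ _ hw.ne'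
  -- the building blocks
  set e : (ι → ℤ) → ι → X → ℝ := fun v i s =>
    max ((v i : ℝ) * w + (-1) * φs i s) (-((v i : ℝ) * w + w) + 1 * φs i s) with hedef
  set d : (ι → ℤ) → X → ℝ := fun v =>
    lmax ((Finset.univ : Finset ι).toList.map (e v)) (fun _ => 0) with hddef
  set χ : (ι → ℤ) → X → ℝ := fun v s => h (rep v) + (-K) * d v s with hχdef
  set φ : X → ℝ := lmax (hfin.toFinset.toList.map χ) (fun _ => -C) with hφdef
  -- memberships
  have hPe : ∀ v i, BUInterp B τ x (e v i) := fun v i =>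
    max' (affine _ _ (hP i)) (affine _ _ (hP i))
  have hPd : ∀ v, BUInterp B τ x (d v) := by
    intro v
    refine lmax_interp ?_ (const 0)
    intro f hf
    obtain ⟨i, _, rfl⟩ := List.mem_map.1 hf
    exact hPe v i
  have hPχ : ∀ v, BUInterp B τ x (χ v) := fun v => affine _ _ (hPd v)
  have hPφ : BUInterp B τ x φ := by
    refine lmax_interp ?_ (const (-C))
    intro f hf
    obtain ⟨v, _, rfl⟩ := List.mem_map.1 hf
    exact hPχ v
  -- basic facts about d
  have hd0 : ∀ v s, 0 ≤ d v s := by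
    intro v s
    simp only [hddef]
    exact le_lmax_base _ (fun _ => 0) s
  have hdge : ∀ v i s, e v i s ≤ d v s := by
    intro v i s
    simp only [hddef]
    exact le_lmax_mem (List.mem_map.2 ⟨i, Finset.mem_toList.2 (Finset.mem_univ i), rfl⟩) _ s
  have hdle : ∀ v s c, 0 ≤ c → (∀ i, e v i s ≤ c) → d v s ≤ c := by
    intro v s c hc he
    simp only [hddef]
    refine lmax_le (b := fun _ => 0) ?_ hc
    intro f hf
    obtain ⟨i, _, rfl⟩ := List.mem_map.1 hf
    exact he i
  -- cell bounds for representatives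
  have hrepcell : ∀ v ∈ Set.range g, ∀ i,
      (v i : ℝ) * w ≤ φs i (rep v) ∧ φs i (rep v) < (v i : ℝ) * w + w := by
    intro v hv i
    have : ⌊φs i (rep v) / w⌋ = v i := congrFun (hrep v hv) i
    exact cell_bounds hw this
  have hδw : δ = 3 * w := by rw [hwdef]; ring
  refine ⟨φ, hPφ, fun s => ?_⟩
  rw [abs_le]
  have hv : g s ∈ Set.range g := Set.mem_range_self s
  have hhs := abs_le.1 (hC s)
  constructor
  · -- lower bound : -ε ≤ φ s - h s
    have hdz : d (g s) s = 0 := by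
      refine le_antisymm (hdle _ _ 0 le_rfl fun i => ?_) (hd0 _ _)
      obtain ⟨h1, h2⟩ := cell_bounds hw (rfl : ⌊φs i s / w⌋ = g s i)
      simp only [hedef]
      apply max_le <;> linarith
    have hclose : |h s - h (rep (g s))| < ε := by
      refine hmod s (rep (g s)) fun i => ?_
      obtain ⟨h1, h2⟩ := cell_bounds hw (rfl : ⌊φs i s / w⌋ = g s i)
      obtain ⟨h3, h4⟩ := hrepcell _ hv i
      rw [abs_lt]
      constructor <;> linarith
    have hmem : χ (g s) ∈ hfin.toFinset.toList.map χ :=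
      List.mem_map.2 ⟨g s, Finset.mem_toList.2 (hfin.mem_toFinset.2 hv), rfl⟩
    have hge : χ (g s) s ≤ φ s := by
      simp only [hφdef]
      exact le_lmax_mem hmem _ s
    have hχval : χ (g s) s = h (rep (g s)) := by
      simp only [hχdef, hdz]; ring
    rw [hχval] at hge
    have := (abs_lt.1 hclose).2
    linarith
  · -- upper bound : φ s - h s ≤ ε
    have hφle : φ s ≤ h s + ε := by
      simp only [hφdef]
      refine lmax_le ?_ (by linarith)
      intro f hf
      obtain ⟨v, hvF, rfl⟩ := List.mem_map.1 hf
      have hvr : v ∈ Set.range g := hfin.mem_toFinset.1 (Finset.mem_toList.1 hvF)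
      have hrepC := abs_le.1 (hC (rep v))
      rcases le_total (d v s) w with hd | hd
      · have hsame : ∀ i, |φs i s - φs i (rep v)| < δ := by
          intro i
          have e1 : (v i : ℝ) * w + (-1) * φs i s ≤ w := by
            refine le_trans (le_trans ?_ (hdge v i s)) hd
            simp only [hedef]
            exact le_max_left _ _
          have e2 : -((v i : ℝ) * w + w) + 1 * φs i s ≤ w := by
            refine le_trans (le_trans ?_ (hdge v i s)) hd
            simp only [hedef]
            exact le_max_right _ _
          obtain ⟨h3, h4⟩ := hrepcell _ hvr i
          rw [abs_lt]
          constructor <;> linarith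
        have hcl := (abs_lt.1 (hmod s (rep v) hsame)).1
        have hKd : 0 ≤ K * d v s := mul_nonneg hK.le (hd0 v s)
        show h (rep v) + -K * d v s ≤ h s + ε
        nlinarith
      · have hKd : K * w ≤ K * d v s := mul_le_mul_of_nonneg_left hd hK.le
        show h (rep v) + -K * d v s ≤ h s + ε
        nlinarith
    linarith

lemma uc_interp {φ : X → ℝ} (hφ : BUInterp B τ x φ) :
    @UniformContinuous X ℝ
      (⨅ (ψ : X → ℝ) (_ : BUInterp B τ x ψ), UniformSpace.comap ψ inferInstance)
      inferInstance φ :=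
  uniformContinuous_iff.2 (le_trans (iInf_le _ φ) (iInf_le _ hφ))

lemma uc_mod (hτ_bdd : ∀ l : Λ, ∀ k : X → ℝ, (∃ C : ℝ, ∀ a, |k a| ≤ C) →
      ∃ C : ℝ, ∀ z : B X, |τ l (k <$> z)| ≤ C)
    (hτ_conv : ∀ l : Λ, ∀ (k : ℕ → X → ℝ) (g : X → ℝ),
      TendstoUniformly k g Filter.atTop →
      TendstoUniformly (fun n z => τ l ((k n) <$> z)) (fun z => τ l (g <$> z)) Filter.atTop)
    (l : Λ) {h : X → ℝ}
    (huc : @UniformContinuous X ℝ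
      (⨅ (ψ : X → ℝ) (_ : BUInterp B τ x ψ), UniformSpace.comap ψ inferInstance)
      inferInstance h) :
    @UniformContinuous X ℝ
      (⨅ (ψ : X → ℝ) (_ : BUInterp B τ x ψ), UniformSpace.comap ψ inferInstance)
      inferInstance (fun s => τ l (h <$> x s)) := by
  have hseq : ∀ n : ℕ, ∃ φ, BUInterp B τ x φ ∧ ∀ s, |φ s - h s| ≤ 1 / (n + 1) :=
    fun n => approx hτ_bdd huc (by positivity)
  choose φn hφn hcl using hseq
  have hTU : TendstoUniformly φn h atTop := by
    rw [Metric.tendstoUniformly_iff]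
    intro ε hε
    obtain ⟨N, hN⟩ := exists_nat_one_div_lt hε
    filter_upwards [eventually_ge_atTop N] with n hn s
    have hc1 : ((N : ℝ) + 1) ≤ (n : ℝ) + 1 := by
      have : (N : ℝ) ≤ n := by exact_mod_cast hn
      linarith
    have h1 : (1 : ℝ) / (n + 1) ≤ 1 / (N + 1) :=
      one_div_le_one_div_of_le (by positivity) hc1
    have h2 := hcl n s
    rw [dist_comm, Real.dist_eq]
    calc |φn n s - h s| ≤ 1 / (n + 1) := h2
      _ ≤ 1 / (N + 1) := h1
      _ < ε := hN
  have hTU2 := (hτ_conv l φn h hTU).comp x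
  have hucn : ∀ n, @UniformContinuous X ℝ
      (⨅ (ψ : X → ℝ) (_ : BUInterp B τ x ψ), UniformSpace.comap ψ inferInstance)
      inferInstance (fun s => τ l (φn n <$> x s)) :=
    fun n => uc_interp (BUInterp.mod l (hφn n))
  exact @uc_of_tendstoUniformly X
    (⨅ (ψ : X → ℝ) (_ : BUInterp B τ x ψ), UniformSpace.comap ψ inferInstance)
    _ _ hucn hTU2

lemma uc_min {α : Type*} [UniformSpace α] {f g : α → ℝ}
    (hf : UniformContinuous f) (hg : UniformContinuous g) :
    UniformContinuous fun s => min (f s) (g s) := by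
  have h1 : UniformContinuous fun s => f s - g s := hf.sub hg
  have h2 : UniformContinuous fun s => |f s - g s| := Real.uniformContinuous_abs.comp h1
  have h3 : UniformContinuous fun s => f s + g s := hf.add hg
  have h4 : UniformContinuous fun s => f s + g s - |f s - g s| := h3.sub h2
  have h5 : UniformContinuous fun s => (2⁻¹ : ℝ) * (f s + g s - |f s - g s|) :=
    Real.uniformContinuous_const_mul.comp h4
  convert h5 using 1
  funext s
  rcases le_total (f s) (g s) with h | h
  · rw [min_eq_left h, abs_of_nonpos (by linarith)]; ring
  · rw [min_eq_right h, abs_of_nonneg (by linarith)]; ring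

lemma uc_closure (v : UniformSpace X)
    (hmod : ∀ (l : Λ) (f : X → ℝ), BUInterp B τ x f →
      @UniformContinuous X ℝ v inferInstance f →
      @UniformContinuous X ℝ v inferInstance (fun s => τ l (f <$> x s))) :
    ∀ φ : X → ℝ, BUInterp B τ x φ → @UniformContinuous X ℝ v inferInstance φ := by
  intro φ hφ
  induction hφ with
  | one => exact uniformContinuous_const
  | min hf hg ihf ihg => exact uc_min ihf ihg
  | add r hf ihf => exact uniformContinuous_const.add ihf
  | mul r hf ihf => exact Real.uniformContinuous_const_mul.comp ihf
  | mod l hf ihf => exact hmod l _ hf ihf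

end BU

/-- Expressivity for the bisimulation uniformity: the greatest fixed
point of the codensity predicate transformer on uniformities equals the coarsest
uniformity making every interpreted formula uniformly continuous. -/
theorem stmt9
    (B : Type → Type) [Functor B] [LawfulFunctor B]
    (X : Type) (Λ : Type) (τ : Λ → B ℝ → ℝ)
    (hτ_bdd : ∀ l : Λ, ∀ k : X → ℝ, (∃ C : ℝ, ∀ a, |k a| ≤ C) →
      ∃ C : ℝ, ∀ z : B X, |τ l (k <$> z)| ≤ C)
    (hτ_conv : ∀ l : Λ, ∀ (k : ℕ → X → ℝ) (g : X → ℝ),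
      TendstoUniformly k g Filter.atTop →
      TendstoUniformly (fun n z => τ l ((k n) <$> z)) (fun z => τ l (g <$> z)) Filter.atTop)
    (x : X → B X)
    (Φ : UniformSpace X → UniformSpace X)
    (hΦ : ∀ u : UniformSpace X, Φ u =
      ⨅ (l : Λ) (h : X → ℝ) (_ : @UniformContinuous X ℝ u inferInstance h),
        UniformSpace.comap (fun s => τ l (h <$> x s)) inferInstance)
    (ub : UniformSpace X)
    (hfix : Φ ub = ub)
    (hgreatest : ∀ v : UniformSpace X, Φ v = v → v ≤ ub) :
    ub = ⨅ (φ : X → ℝ) (_ : BUInterp B τ x φ), UniformSpace.comap φ inferInstance := by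
  set u : UniformSpace X :=
    ⨅ (φ : X → ℝ) (_ : BUInterp B τ x φ), UniformSpace.comap φ inferInstance with hu
  -- u is a post-fixed point: u ≤ Φ u
  have h2 : u ≤ Φ u := by
    rw [hΦ u]
    refine le_iInf fun l => le_iInf fun h => le_iInf fun huc => ?_
    exact uniformContinuous_iff.1 (BU.uc_mod hτ_bdd hτ_conv l huc)
  -- u is a pre-fixed point: Φ u ≤ u
  have h1 : Φ u ≤ u := by
    have claim : ∀ φ : X → ℝ, BUInterp B τ x φ →
        @UniformContinuous X ℝ (Φ u) inferInstance φ := by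
      refine BU.uc_closure (Φ u) ?_
      intro l f hf _
      have hfu : @UniformContinuous X ℝ u inferInstance f := BU.uc_interp hf
      rw [uniformContinuous_iff, hΦ u]
      exact le_trans (iInf_le _ l) (le_trans (iInf_le _ f) (iInf_le _ hfu))
    exact le_iInf fun φ => le_iInf fun hφ => uniformContinuous_iff.1 (claim φ hφ)
  have hufix : Φ u = u := le_antisymm h1 h2
  -- every interpretation is uniformly continuous w.r.t. ub
  have hub : ∀ φ : X → ℝ, BUInterp B τ x φ →
      @UniformContinuous X ℝ ub inferInstance φ := by
    refine BU.uc_closure ub ?_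
    intro l f hf ihf
    rw [uniformContinuous_iff]
    calc ub = Φ ub := hfix.symm
      _ ≤ _ := by
        rw [hΦ ub]
        exact le_trans (iInf_le _ l) (le_trans (iInf_le _ f) (iInf_le _ ihf))
  exact le_antisymm (le_iInf fun φ => le_iInf fun hφ => uniformContinuous_iff.1 (hub φ hφ))
    (hgreatest u hufix)
end

section
/- Let Σ be a type equipped with an arity function rank : Σ → ℕ, and let S : Type → Type be the associated signature endofunctor, S(X) = Σ_{σ∈Σ} X^{rank(σ)}; let Alg(S) denote the category of S-algebras on types. Let C be a category with small products and equalizers, let Ω be an object of C, and for each σ ∈ Σ let f_σ : Ω^{rank(σ)} ⟶ Ω be a morphism (where Ω^n is the n-fold power). Define the functor P : C ⥤ Alg(S)ᵒᵖ by: P(X) is the set Hom_C(X,Ω) with S-algebra structure sending σ(g₁,…,g_{rank(σ)}) to f_σ ∘ ⟨g₁,…,g_{rank(σ)}⟩, and P(h) is precomposition with h. Then P has a right adjoint. -/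
open CategoryTheory CategoryTheory.Limits

universe v u

/-- The signature endofunctor on types associated to a ranked alphabet:
`S(X) = Σ_{σ} X^{rank σ}`. -/
def sigFunctor (Sg : Type v) (rank : Sg → ℕ) : Type v ⥤ Type v where
  obj X := Σ σ : Sg, Fin (rank σ) → X
  map f := TypeCat.ofHom (fun p => ⟨p.1, f ∘ p.2⟩)
  map_id X := rfl
  map_comp f g := rfl

/-- The `sigFunctor`-algebra `P(X)`: the hom-set `X ⟶ Ω` equipped with the operations
induced by the Σ-algebra structure `(f σ : Ω^{rank σ} ⟶ Ω)` on `Ω`. -/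
noncomputable def PAlg {C : Type u} [Category.{v} C] [HasProducts.{v} C]
    (Sg : Type v) (rank : Sg → ℕ) (Ω : C)
    (f : ∀ σ : Sg, (∏ᶜ fun _ : Fin (rank σ) => Ω) ⟶ Ω) (X : C) :
    Endofunctor.Algebra (sigFunctor Sg rank) where
  a := X ⟶ Ω
  str := TypeCat.ofHom (fun p => Pi.lift (fun i => p.2 i) ≫ f p.1)

/-- The functor `P : C ⥤ Alg(S)ᵒᵖ`: on objects it is `PAlg`, on morphisms it is
precomposition. -/
noncomputable def Pfunctor {C : Type u} [Category.{v} C] [HasProducts.{v} C]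
    (Sg : Type v) (rank : Sg → ℕ) (Ω : C)
    (f : ∀ σ : Sg, (∏ᶜ fun _ : Fin (rank σ) => Ω) ⟶ Ω) :
    C ⥤ (Endofunctor.Algebra (sigFunctor Sg rank))ᵒᵖ where
  obj X := Opposite.op (PAlg Sg rank Ω f X)
  map {X Y} h := Quiver.Hom.op
    { f := TypeCat.ofHom (fun k => h ≫ k)
      h := by
        refine ConcreteCategory.hom_ext _ _ (fun p => ?_)
        show Pi.lift (fun i => h ≫ p.2 i) ≫ f p.1 = h ≫ (Pi.lift (fun i => p.2 i) ≫ f p.1)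
        rw [← Category.assoc]
        congr 1
        apply Pi.hom_ext
        intro i
        simp
        rfl }
  map_id X := by
    apply Quiver.Hom.unop_inj
    ext k
    exact Category.id_comp k
  map_comp {X Y Z} g h := by
    apply Quiver.Hom.unop_inj
    ext k
    exact Category.assoc g h k

section Aux

variable {C : Type u} [Category.{v} C] [HasProducts.{v} C] [HasEqualizers C]
    (Sg : Type v) (rank : Sg → ℕ) (Ω : C)
    (f : ∀ σ : Sg, (∏ᶜ fun _ : Fin (rank σ) => Ω) ⟶ Ω)

variable (A : Endofunctor.Algebra (sigFunctor Sg rank))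

/-- First canonical map `∏_{A} Ω ⟶ ∏_{S(A)} Ω`, induced by the operations on Ω. -/
noncomputable def umap : (∏ᶜ fun _ : A.a => Ω) ⟶ (∏ᶜ fun _ : (sigFunctor Sg rank).obj A.a => Ω) :=
  Pi.lift (fun (p : Σ σ : Sg, Fin (rank σ) → A.a) => Pi.lift (fun i => Pi.π (fun _ : A.a => Ω) (p.2 i)) ≫ f p.1)

/-- Second canonical map, induced by the algebra structure of `A`. -/
noncomputable def vmap : (∏ᶜ fun _ : A.a => Ω) ⟶ (∏ᶜ fun _ : (sigFunctor Sg rank).obj A.a => Ω) :=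
  Pi.lift (fun p => Pi.π (fun _ : A.a => Ω) (A.str p))

/-- Object part of the right adjoint. -/
noncomputable def Qobj : C := equalizer (umap Sg rank Ω f A) (vmap Sg rank Ω A)

noncomputable def homEquiv (X : C) :
    ((Pfunctor Sg rank Ω f).obj X ⟶ Opposite.op A) ≃ (X ⟶ Qobj Sg rank Ω f A) where
  toFun φ := equalizer.lift (Pi.lift (fun a => φ.unop.f a)) (by
    apply Pi.hom_ext
    rintro ⟨σ, x⟩
    have hk := ConcreteCategory.congr_hom φ.unop.h ⟨σ, x⟩
    refine (Category.assoc _ _ _).trans (Eq.trans ?_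
      ((hk.trans (Pi.lift_π (fun a => (φ.unop.f a : X ⟶ Ω)) (A.str ⟨σ, x⟩)).symm).trans
        ((congrArg (Pi.lift (fun a => (φ.unop.f a : X ⟶ Ω)) ≫ ·)
          (Pi.lift_π (fun q : (sigFunctor Sg rank).obj A.a => Pi.π (fun _ : A.a => Ω) (A.str q))
            ⟨σ, x⟩)).symm.trans (Category.assoc _ _ _).symm)))
    refine (congrArg (Pi.lift (fun a => (φ.unop.f a : X ⟶ Ω)) ≫ ·) (Pi.lift_π _ _)).trans ?_
    show Pi.lift (fun a => (φ.unop.f a : X ⟶ Ω)) ≫ (Pi.lift (fun i => Pi.π (fun _ : A.a => Ω) (x i)) ≫ f σ)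
      = Pi.lift (fun i => (φ.unop.f (x i) : X ⟶ Ω)) ≫ f σ
    rw [← Category.assoc]
    congr 1
    apply Pi.hom_ext
    intro i
    simp
    rfl)
  invFun m := Quiver.Hom.op
    { f := TypeCat.ofHom fun a => m ≫ equalizer.ι _ _ ≫ Pi.π (fun _ : A.a => Ω) a
      h := by
        refine ConcreteCategory.hom_ext _ _ (fun (p : Σ σ : Sg, Fin (rank σ) → A.a) => ?_)
        show Pi.lift (fun i => m ≫ equalizer.ι _ _ ≫ Pi.π (fun _ : A.a => Ω) (p.2 i)) ≫ f p.1
          = m ≫ equalizer.ι (umap Sg rank Ω f A) (vmap Sg rank Ω A) ≫ Pi.π (fun _ : A.a => Ω) (A.str p)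
        have hc := equalizer.condition (umap Sg rank Ω f A) (vmap Sg rank Ω A)
        have hp : equalizer.ι (umap Sg rank Ω f A) (vmap Sg rank Ω A) ≫
            (Pi.lift (fun i => Pi.π (fun _ : A.a => Ω) (p.2 i)) ≫ f p.1)
            = equalizer.ι (umap Sg rank Ω f A) (vmap Sg rank Ω A) ≫ Pi.π (fun _ : A.a => Ω) (A.str p) := by
          have h' := congrArg (· ≫ Pi.π (fun _ : (sigFunctor Sg rank).obj A.a => Ω) p) hc
          simp only [Category.assoc] at h'
          erw [Pi.lift_π, Pi.lift_π] at h'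
          exact h'
        have hlift : Pi.lift (fun i => m ≫ equalizer.ι _ _ ≫ Pi.π (fun _ : A.a => Ω) (p.2 i))
            = (m ≫ equalizer.ι _ _) ≫ Pi.lift (fun i => Pi.π (fun _ : A.a => Ω) (p.2 i)) := by
          apply Pi.hom_ext; intro i; simp
          exact (Category.assoc _ _ _).symm
        rw [hlift]
        exact (Category.assoc (m ≫ equalizer.ι _ _) _ _).trans
          ((Category.assoc m (equalizer.ι _ _) _).trans (congrArg (m ≫ ·) hp)) }
  left_inv φ := by
    apply Quiver.Hom.unop_inj
    ext a
    exact (equalizer.lift_ι_assoc _ _ _).trans (Pi.lift_π _ _)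
  right_inv m := by
    apply equalizer.hom_ext
    apply Pi.hom_ext
    intro a
    exact (Category.assoc _ _ _).trans ((equalizer.lift_ι_assoc _ _ _).trans
      ((Pi.lift_π _ _).trans (Category.assoc _ _ _).symm))

end Aux

/-- the functor `P : C ⥤ Alg(S)ᵒᵖ` induced by a Σ-algebra `(Ω, f)` in a
category `C` with small products and equalizers has a right adjoint. -/
theorem stmt10 {C : Type u} [Category.{v} C] [HasProducts.{v} C] [HasEqualizers C]
    (Sg : Type v) (rank : Sg → ℕ) (Ω : C)
    (f : ∀ σ : Sg, (∏ᶜ fun _ : Fin (rank σ) => Ω) ⟶ Ω) :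
    (Pfunctor Sg rank Ω f).IsLeftAdjoint := by
  have adj := Adjunction.adjunctionOfEquivRight
    (F := Pfunctor Sg rank Ω f)
    (G_obj := fun A => Qobj Sg rank Ω f A.unop)
    (e := fun X A => homEquiv Sg rank Ω f A.unop X)
    (he := by
      intro X' X A h g
      apply equalizer.hom_ext
      apply Pi.hom_ext
      intro a
      refine ((Category.assoc _ _ _).trans ((equalizer.lift_ι_assoc _ _ _).trans
        (Pi.lift_π _ _))).trans ?_
      exact ((Category.assoc _ _ _).trans ((Category.assoc _ _ _).trans
        (congrArg (h ≫ ·) ((equalizer.lift_ι_assoc _ _ _).trans (Pi.lift_π _ _))))).symm)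
  exact ⟨_, ⟨adj⟩⟩
end

section
/- Let d be the discrete metric on ℕ → Bool (d(x,y) = 0 if x = y and 1 otherwise), and let F be the set of all nonexpansive maps from (ℕ → Bool, d) to ([0,1],|·|) — equivalently, all functions ℕ → Bool → [0,1] since d is discrete. Let G ⊆ F be the set of those g ∈ F depending only on finitely many coordinates: there exists n ∈ ℕ such that for all x,y, if x(i) = y(i) for all i < n then g(x) = g(y). Then G is not dense in F in the topology of uniform convergence: there exists h ∈ F such that for every g ∈ G, sup_x |h(x) − g(x)| ≥ 1/2. -/
/-- The set `G` of `[0,1]`-valued maps on `(ℕ → Bool, discrete metric)`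
depending on finitely many coordinates is not uniformly dense in the set `F` of all
nonexpansive `[0,1]`-valued maps: some `h ∈ F` has uniform distance at least `1/2`
from every `g ∈ G`. -/
theorem stmt13
    (d : (ℕ → Bool) → (ℕ → Bool) → ℝ)
    (hd : ∀ x y : ℕ → Bool, (x = y → d x y = 0) ∧ (x ≠ y → d x y = 1)) :
    ∃ h : (ℕ → Bool) → ℝ,
      (∀ x, h x ∈ Set.Icc (0:ℝ) 1) ∧ (∀ x y, |h x - h y| ≤ d x y) ∧
      ∀ g : (ℕ → Bool) → ℝ,
        (∀ x, g x ∈ Set.Icc (0:ℝ) 1) → (∀ x y, |g x - g y| ≤ d x y) →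
        (∃ n : ℕ, ∀ x y : ℕ → Bool, (∀ i < n, x i = y i) → g x = g y) →
        1/2 ≤ sSup {v : ℝ | ∃ x : ℕ → Bool, v = |h x - g x|} := by
  classical
  refine ⟨fun x => if (∀ i, x i = false) then 1 else 0, ?_, ?_, ?_⟩
  · intro x
    by_cases hx : ∀ i, x i = false <;> simp [hx]
  · intro x y
    by_cases hxy : x = y
    · simp [hxy, (hd y y).1 rfl]
    · rw [(hd x y).2 hxy]
      by_cases hx : ∀ i, x i = false <;> by_cases hy : ∀ i, y i = false <;>
        simp [hx, hy] <;> norm_num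
  · intro g hg01 _ ⟨n, hn⟩
    set h : (ℕ → Bool) → ℝ := fun x => if (∀ i, x i = false) then 1 else 0 with hh
    set x : ℕ → Bool := fun _ => false with hxdef
    set y : ℕ → Bool := fun i => if i = n then true else false with hydef
    have hgxy : g x = g y := hn x y (by
      intro i hi
      simp [hxdef, hydef, Nat.ne_of_lt hi])
    have hhx : h x = 1 := by simp [hh, hxdef]
    have hhy : h y = 0 := by
      have : ¬ ∀ i, y i = false := by
        intro hall
        have := hall n
        simp [hydef] at this
      simp [hh, this]
    have hbdd : BddAbove {v : ℝ | ∃ x : ℕ → Bool, v = |h x - g x|} := by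
      refine ⟨2, ?_⟩
      rintro v ⟨z, rfl⟩
      have h1 := (abs_sub_abs_le_abs_sub (h z) (g z)).trans (le_refl _)
      have hz01 : h z ∈ Set.Icc (0:ℝ) 1 := by
        by_cases hz : ∀ i, z i = false <;> simp [hh, hz]
      have := abs_sub_le (h z) 0 (g z)
      calc |h z - g z| ≤ |h z - 0| + |0 - g z| := this
        _ ≤ 1 + 1 := by
            gcongr
            · rw [sub_zero, abs_le]
              exact ⟨by linarith [hz01.1], hz01.2⟩
            · rw [zero_sub, abs_neg, abs_le]
              exact ⟨by linarith [(hg01 z).1], (hg01 z).2⟩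
        _ = 2 := by norm_num
    have key : (1:ℝ)/2 ≤ |h x - g x| ∨ (1:ℝ)/2 ≤ |h y - g y| := by
      by_contra hcon
      push_neg at hcon
      have h1 : |h x - h y| ≤ |h x - g x| + |g y - h y| := by
        rw [hgxy]
        exact abs_sub_le _ _ _
      rw [hhx, hhy, sub_zero, abs_one] at h1
      rw [abs_sub_comm (g y)] at h1
      rw [hhx, hhy] at hcon
      linarith [hcon.1, hcon.2]
    rcases key with hk | hk
    · exact hk.trans (le_csSup hbdd ⟨x, rfl⟩)
    · exact hk.trans (le_csSup hbdd ⟨y, rfl⟩)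
end
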